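/- arXiv:1904.12836 — 8 statements merged into one kernel-verified Lean document; each statement's English description precedes it below -/
import Mathlib

section
/- Let 𝔛 = (X_N, ι^N_{N+1}) and 𝔜 = (Y_N, τ^N_{N+1}) be inductive spectra of graded Fréchet spaces which are equivalent, i.e. there exist increasing sequences (M_N) and (K_N) of natural numbers with N ≤ M_N ≤ K_N ≤ M_{N+1}, and continuous linear maps T_N : X_{M_N} → Y_{K_N} and S_N : Y_{K_N} → X_{M_{N+1}} such that S_N ∘ T_N = ι^{M_N}_{M_{N+1}} and T_{N+1} ∘ S_N = τ^{K_N}_{K_{N+1}} for all N ∈ ℕ. Then 𝔛 satisfies the interpolation estimate for small theta if and only if 𝔜 does. -/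
open Real Set

noncomputable section

/-- An inductive spectrum of graded Fréchet spaces: each `X N` carries an
increasing sequence of seminorms `p N n`, and `ι N M` (for `N ≤ M`) are the
linking linear maps, which form a transitive system and are continuous. -/
structure IsIndSpectrum {X : ℕ → Type*} [∀ N, AddCommGroup (X N)] [∀ N, Module ℂ (X N)]
    (p : ∀ N : ℕ, ℕ → Seminorm ℂ (X N)) (ι : ∀ N M : ℕ, X N →ₗ[ℂ] X M) : Prop where
  seminorm_mono : ∀ N : ℕ, Monotone (p N)
  map_id : ∀ N : ℕ, ι N N = LinearMap.id
  map_comp : ∀ {N M K : ℕ}, N ≤ M → M ≤ K → (ι M K).comp (ι N M) = ι N K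
  map_cont : ∀ N m : ℕ, ∃ n : ℕ, ∃ C : ℝ, 0 < C ∧
    ∀ x : X N, p (N + 1) m (ι N (N + 1) x) ≤ C * p N n x

/-- The interpolation estimate for small theta for an inductive spectrum of
graded Fréchet spaces:
`∀N ∃M ≥ N ∀K ≥ M ∃n ∀m ≥ n ∃θ₀ ∈ (0,1) ∀θ ∈ (0,θ₀) ∃k ≥ m ∃C > 0 ∀x ∈ X_N :`
`‖ι^N_M(x)‖_{M,m} ≤ C ‖x‖_{N,n}^θ ‖ι^N_K(x)‖_{K,k}^{1−θ}`. -/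
def SmallThetaIE {X : ℕ → Type*} [∀ N, AddCommGroup (X N)] [∀ N, Module ℂ (X N)]
    (p : ∀ N : ℕ, ℕ → Seminorm ℂ (X N)) (ι : ∀ N M : ℕ, X N →ₗ[ℂ] X M) : Prop :=
  ∀ N : ℕ, ∃ M : ℕ, N ≤ M ∧ ∀ K : ℕ, M ≤ K → ∃ n : ℕ, ∀ m : ℕ, n ≤ m →
    ∃ θ₀ : ℝ, 0 < θ₀ ∧ θ₀ < 1 ∧ ∀ θ : ℝ, 0 < θ → θ < θ₀ →
      ∃ k : ℕ, m ≤ k ∧ ∃ C : ℝ, 0 < C ∧ ∀ x : X N,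
        p M m (ι N M x) ≤ C * (p N n x) ^ θ * (p K k (ι N K x)) ^ (1 - θ)

/-- Multi-step continuity of the linking maps of an inductive spectrum. -/
lemma IsIndSpectrum.cont {X : ℕ → Type*} [∀ N, AddCommGroup (X N)] [∀ N, Module ℂ (X N)]
    {p : ∀ N : ℕ, ℕ → Seminorm ℂ (X N)} {ι : ∀ N M : ℕ, X N →ₗ[ℂ] X M}
    (hX : IsIndSpectrum p ι) :
    ∀ N M : ℕ, N ≤ M → ∀ m : ℕ, ∃ n : ℕ, ∃ C : ℝ, 0 < C ∧
      ∀ x : X N, p M m (ι N M x) ≤ C * p N n x := by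
  intro N M hNM
  induction M, hNM using Nat.le_induction with
  | base =>
    intro m
    exact ⟨m, 1, one_pos, fun x => by rw [hX.map_id]; simp⟩
  | succ M hNM ih =>
    intro m
    obtain ⟨n1, C1, hC1, h1⟩ := hX.map_cont M m
    obtain ⟨n, C, hC, h⟩ := ih n1
    refine ⟨n, C1 * C, by positivity, fun x => ?_⟩
    have hx : ι N (M + 1) x = ι M (M + 1) (ι N M x) := by
      rw [← hX.map_comp hNM (Nat.le_succ M)]; rfl
    rw [hx]
    calc p (M + 1) m (ι M (M + 1) (ι N M x)) ≤ C1 * p M n1 (ι N M x) := h1 _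
      _ ≤ C1 * (C * p N n x) := mul_le_mul_of_nonneg_left (h x) hC1.le
      _ = C1 * C * p N n x := by ring

section Direction

variable {X Y : ℕ → Type*} [∀ N, AddCommGroup (X N)] [∀ N, Module ℂ (X N)]
    [∀ N, AddCommGroup (Y N)] [∀ N, Module ℂ (Y N)]
    (p : ∀ N : ℕ, ℕ → Seminorm ℂ (X N)) (ι : ∀ N M : ℕ, X N →ₗ[ℂ] X M)
    (q : ∀ N : ℕ, ℕ → Seminorm ℂ (Y N)) (τ : ∀ N M : ℕ, Y N →ₗ[ℂ] Y M)

/-- Telescoping identity `T_L ∘ ι ∘ S_N = τ^{K_N}_{K_L}` for `N + 1 ≤ L`. -/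
lemma telescope_T (hX : IsIndSpectrum p ι) (hY : IsIndSpectrum q τ)
    (M K : ℕ → ℕ)
    (hMK : ∀ N : ℕ, N ≤ M N ∧ M N ≤ K N ∧ K N ≤ M (N + 1))
    (T : ∀ N : ℕ, X (M N) →ₗ[ℂ] Y (K N)) (S : ∀ N : ℕ, Y (K N) →ₗ[ℂ] X (M (N + 1)))
    (hST : ∀ N : ℕ, (S N).comp (T N) = ι (M N) (M (N + 1)))
    (hTS : ∀ N : ℕ, (T (N + 1)).comp (S N) = τ (K N) (K (N + 1))) :
    ∀ N L : ℕ, N + 1 ≤ L →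
      (T L).comp ((ι (M (N + 1)) (M L)).comp (S N)) = τ (K N) (K L) := by
  have hMmono : Monotone M := monotone_nat_of_le_succ fun a => (hMK a).2.1.trans (hMK a).2.2
  have hKmono : Monotone K := monotone_nat_of_le_succ fun a => (hMK a).2.2.trans (hMK (a + 1)).2.1
  intro N L hNL
  induction L, hNL using Nat.le_induction with
  | base =>
    rw [hX.map_id, LinearMap.id_comp, hTS]
  | succ L hNL ih =>
    have h1 : ι (M (N + 1)) (M (L + 1)) =
        (ι (M L) (M (L + 1))).comp (ι (M (N + 1)) (M L)) :=
      (hX.map_comp (hMmono hNL) (hMmono (Nat.le_succ L))).symm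
    have h2 : (τ (K L) (K (L + 1))).comp (τ (K N) (K L)) = τ (K N) (K (L + 1)) :=
      hY.map_comp (hKmono (le_trans (Nat.le_succ N) hNL)) (hKmono (Nat.le_succ L))
    calc (T (L + 1)).comp ((ι (M (N + 1)) (M (L + 1))).comp (S N))
        = (T (L + 1)).comp (((S L).comp (T L)).comp ((ι (M (N + 1)) (M L)).comp (S N))) := by
          rw [h1, hST, LinearMap.comp_assoc]
      _ = ((T (L + 1)).comp (S L)).comp ((T L).comp ((ι (M (N + 1)) (M L)).comp (S N))) := by
          rw [LinearMap.comp_assoc, LinearMap.comp_assoc]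
      _ = (τ (K L) (K (L + 1))).comp (τ (K N) (K L)) := by rw [hTS, ih]
      _ = τ (K N) (K (L + 1)) := h2

/-- Telescoping identity `ι ∘ S_N = S_R ∘ τ^{K_N}_{K_R}` for `N ≤ R`. -/
lemma telescope_S (hX : IsIndSpectrum p ι) (hY : IsIndSpectrum q τ)
    (M K : ℕ → ℕ)
    (hMK : ∀ N : ℕ, N ≤ M N ∧ M N ≤ K N ∧ K N ≤ M (N + 1))
    (T : ∀ N : ℕ, X (M N) →ₗ[ℂ] Y (K N)) (S : ∀ N : ℕ, Y (K N) →ₗ[ℂ] X (M (N + 1)))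
    (hST : ∀ N : ℕ, (S N).comp (T N) = ι (M N) (M (N + 1)))
    (hTS : ∀ N : ℕ, (T (N + 1)).comp (S N) = τ (K N) (K (N + 1))) :
    ∀ N R : ℕ, N ≤ R →
      (ι (M (N + 1)) (M (R + 1))).comp (S N) = (S R).comp (τ (K N) (K R)) := by
  have hMmono : Monotone M := monotone_nat_of_le_succ fun a => (hMK a).2.1.trans (hMK a).2.2
  have hKmono : Monotone K := monotone_nat_of_le_succ fun a => (hMK a).2.2.trans (hMK (a + 1)).2.1
  intro N R hNR
  induction R, hNR using Nat.le_induction with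
  | base =>
    rw [hX.map_id, hY.map_id, LinearMap.id_comp, LinearMap.comp_id]
  | succ R hNR ih =>
    have h1 : ι (M (N + 1)) (M (R + 1 + 1)) =
        (ι (M (R + 1)) (M (R + 1 + 1))).comp (ι (M (N + 1)) (M (R + 1))) :=
      (hX.map_comp (hMmono (Nat.succ_le_succ hNR)) (hMmono (Nat.le_succ (R + 1)))).symm
    calc (ι (M (N + 1)) (M (R + 1 + 1))).comp (S N)
        = ((S (R + 1)).comp (T (R + 1))).comp ((ι (M (N + 1)) (M (R + 1))).comp (S N)) := by
          rw [h1, hST, LinearMap.comp_assoc]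
      _ = (S (R + 1)).comp (((T (R + 1)).comp (S R)).comp (τ (K N) (K R))) := by
          rw [ih, LinearMap.comp_assoc, LinearMap.comp_assoc]
      _ = (S (R + 1)).comp (τ (K N) (K (R + 1))) := by
          rw [hTS, hY.map_comp (hKmono hNR) (hKmono (Nat.le_succ R))]

set_option maxHeartbeats 1600000 in
/-- The main one-directional lemma: if the `X`-spectrum satisfies the small-theta
interpolation estimate, so does the equivalent `Y`-spectrum. -/
lemma direction (hX : IsIndSpectrum p ι) (hY : IsIndSpectrum q τ)
    (M K : ℕ → ℕ)
    (hMK : ∀ N : ℕ, N ≤ M N ∧ M N ≤ K N ∧ K N ≤ M (N + 1))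
    (T : ∀ N : ℕ, X (M N) →ₗ[ℂ] Y (K N)) (S : ∀ N : ℕ, Y (K N) →ₗ[ℂ] X (M (N + 1)))
    (hT : ∀ N m : ℕ, ∃ n : ℕ, ∃ C : ℝ, 0 < C ∧
      ∀ x : X (M N), q (K N) m (T N x) ≤ C * p (M N) n x)
    (hS : ∀ N m : ℕ, ∃ n : ℕ, ∃ C : ℝ, 0 < C ∧
      ∀ y : Y (K N), p (M (N + 1)) m (S N y) ≤ C * q (K N) n y)
    (hST : ∀ N : ℕ, (S N).comp (T N) = ι (M N) (M (N + 1)))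
    (hTS : ∀ N : ℕ, (T (N + 1)).comp (S N) = τ (K N) (K (N + 1)))
    (hInt : SmallThetaIE p ι) : SmallThetaIE q τ := by
  have hMmono : Monotone M := monotone_nat_of_le_succ fun a => (hMK a).2.1.trans (hMK a).2.2
  have hKmono : Monotone K := monotone_nat_of_le_succ fun a => (hMK a).2.2.trans (hMK (a + 1)).2.1
  have hNM : ∀ a, a ≤ M a := fun a => (hMK a).1
  have hNK : ∀ a, a ≤ K a := fun a => (hMK a).1.trans (hMK a).2.1
  intro N
  obtain ⟨Mt, hMt, PX⟩ := hInt (M (N + 1))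
  set L : ℕ := max (N + 1) Mt with hLdef
  have hN1L : N + 1 ≤ L := le_max_left _ _
  have hMtL : Mt ≤ L := le_max_right _ _
  refine ⟨K L, le_trans (le_trans (Nat.le_succ N) hN1L) (hNK L), ?_⟩
  intro K' hK'
  set R : ℕ := max L K' with hRdef
  have hLR : L ≤ R := le_max_left _ _
  have hK'R : K' ≤ K R := le_trans (le_max_right L K') (hNK R)
  have hKX : Mt ≤ M (R + 1) :=
    le_trans hMtL (le_trans hLR (le_trans (hNM R) (hMmono (Nat.le_succ R))))
  obtain ⟨nX, PX2⟩ := PX (M (R + 1)) hKX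
  obtain ⟨nS, CS, hCS, hSb⟩ := hS N nX
  obtain ⟨n1, C1, hC1, h1b⟩ := hY.cont N (K N) (hNK N) nS
  refine ⟨n1, ?_⟩
  intro m hm
  obtain ⟨nT, CT, hCT, hTb⟩ := hT L m
  obtain ⟨nι, Cι, hCι, hιb⟩ := hX.cont Mt (M L) (le_trans hMtL (hNM L)) nT
  obtain ⟨θ₀, hθ₀, hθ₀1, Pθ⟩ := PX2 (max nX nι) (le_max_left _ _)
  refine ⟨θ₀, hθ₀, hθ₀1, ?_⟩
  intro θ hθ hθθ₀
  have hθ1 : θ < 1 := hθθ₀.trans hθ₀1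
  have h1θ : (0:ℝ) ≤ 1 - θ := by linarith
  obtain ⟨k', hk', CX, hCX, hXb⟩ := Pθ θ hθ hθθ₀
  obtain ⟨kS, CS2, hCS2, hS2b⟩ := hS R k'
  obtain ⟨k2, C2, hC2, h2b⟩ := hY.cont K' (K R) hK'R kS
  refine ⟨max m k2, le_max_left _ _,
    CT * Cι * CX * (CS * C1) ^ θ * (CS2 * C2) ^ (1 - θ), by positivity, ?_⟩
  intro y
  set x : X (M (N + 1)) := S N (τ N (K N) y) with hxdef
  -- Step A : τ^N_{K L} y = T L (ι x)
  have stepA : τ N (K L) y = T L (ι (M (N + 1)) (M L) x) := by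
    have h := telescope_T p ι q τ hX hY M K hMK T S hST hTS N L hN1L
    have h' := LinearMap.congr_fun h (τ N (K N) y)
    simp only [LinearMap.comp_apply] at h'
    rw [← hxdef] at h'
    have hcmp := LinearMap.congr_fun (hY.map_comp (hNK N) (hKmono (le_trans (Nat.le_succ N) hN1L))) y
    simp only [LinearMap.comp_apply] at hcmp
    rw [← hcmp]
    exact h'.symm
  -- Step B : ι^{M(N+1)}_{M(R+1)} x = S R (τ^N_{K R} y)
  have stepB : ι (M (N + 1)) (M (R + 1)) x = S R (τ N (K R) y) := by
    have h := telescope_S p ι q τ hX hY M K hMK T S hST hTS N R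
      (le_trans (Nat.le_succ N) (le_trans hN1L hLR))
    have h' := LinearMap.congr_fun h (τ N (K N) y)
    simp only [LinearMap.comp_apply] at h'
    rw [← hxdef] at h'
    rw [h']
    have := LinearMap.congr_fun (hY.map_comp (hNK N)
      (hKmono (le_trans (le_trans (Nat.le_succ N) hN1L) hLR))) y
    simp only [LinearMap.comp_apply] at this
    rw [this]
  -- factor x through level Mt
  have hfac : ι (M (N + 1)) (M L) x = ι Mt (M L) (ι (M (N + 1)) Mt x) := by
    have h := LinearMap.congr_fun (hX.map_comp hMt (le_trans hMtL (hNM L))) x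
    simp only [LinearMap.comp_apply] at h
    exact h.symm
  -- the two factor bounds
  set a : ℝ := q N n1 y with hadef
  set b : ℝ := q K' (max m k2) (τ N K' y) with hbdef
  have ha0 : 0 ≤ a := apply_nonneg _ _
  have hb0 : 0 ≤ b := apply_nonneg _ _
  have hfa : p (M (N + 1)) nX x ≤ CS * C1 * a := by
    calc p (M (N + 1)) nX x ≤ CS * q (K N) nS (τ N (K N) y) := hSb _
      _ ≤ CS * (C1 * a) := mul_le_mul_of_nonneg_left (h1b y) hCS.le
      _ = CS * C1 * a := by ring
  have hfb : p (M (R + 1)) k' (ι (M (N + 1)) (M (R + 1)) x) ≤ CS2 * C2 * b := by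
    have hsplit : τ N (K R) y = τ K' (K R) (τ N K' y) := by
      have := LinearMap.congr_fun (hY.map_comp
        (le_trans (le_trans (Nat.le_succ N) hN1L) (le_trans (hNK L) hK')) hK'R) y
      simp only [LinearMap.comp_apply] at this
      exact this.symm
    calc p (M (R + 1)) k' (ι (M (N + 1)) (M (R + 1)) x)
        = p (M (R + 1)) k' (S R (τ N (K R) y)) := by rw [stepB]
      _ ≤ CS2 * q (K R) kS (τ N (K R) y) := hS2b _
      _ = CS2 * q (K R) kS (τ K' (K R) (τ N K' y)) := by rw [hsplit]
      _ ≤ CS2 * (C2 * q K' k2 (τ N K' y)) :=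
          mul_le_mul_of_nonneg_left (h2b (τ N K' y)) hCS2.le
      _ ≤ CS2 * (C2 * b) := by
          have hmono : q K' k2 (τ N K' y) ≤ b :=
            hY.seminorm_mono K' (le_max_right m k2) (τ N K' y)
          exact mul_le_mul_of_nonneg_left (mul_le_mul_of_nonneg_left hmono hC2.le) hCS2.le
      _ = CS2 * C2 * b := by ring
  -- main chain
  have hmain : q (K L) m (τ N (K L) y) ≤
      CT * Cι * CX * (p (M (N + 1)) nX x) ^ θ *
        (p (M (R + 1)) k' (ι (M (N + 1)) (M (R + 1)) x)) ^ (1 - θ) := by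
    calc q (K L) m (τ N (K L) y)
        = q (K L) m (T L (ι (M (N + 1)) (M L) x)) := by rw [stepA]
      _ ≤ CT * p (M L) nT (ι (M (N + 1)) (M L) x) := hTb _
      _ = CT * p (M L) nT (ι Mt (M L) (ι (M (N + 1)) Mt x)) := by rw [hfac]
      _ ≤ CT * (Cι * p Mt nι (ι (M (N + 1)) Mt x)) :=
          mul_le_mul_of_nonneg_left (hιb (ι (M (N + 1)) Mt x)) hCT.le
      _ ≤ CT * (Cι * p Mt (max nX nι) (ι (M (N + 1)) Mt x)) :=
          mul_le_mul_of_nonneg_left (mul_le_mul_of_nonneg_left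
            (hX.seminorm_mono Mt (le_max_right nX nι) (ι (M (N + 1)) Mt x)) hCι.le) hCT.le
      _ ≤ CT * (Cι * (CX * (p (M (N + 1)) nX x) ^ θ *
            (p (M (R + 1)) k' (ι (M (N + 1)) (M (R + 1)) x)) ^ (1 - θ))) :=
          mul_le_mul_of_nonneg_left (mul_le_mul_of_nonneg_left (hXb x) hCι.le) hCT.le
      _ = CT * Cι * CX * (p (M (N + 1)) nX x) ^ θ *
            (p (M (R + 1)) k' (ι (M (N + 1)) (M (R + 1)) x)) ^ (1 - θ) := by ring
  calc q (K L) m (τ N (K L) y)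
      ≤ CT * Cι * CX * (p (M (N + 1)) nX x) ^ θ *
          (p (M (R + 1)) k' (ι (M (N + 1)) (M (R + 1)) x)) ^ (1 - θ) := hmain
    _ ≤ CT * Cι * CX * (CS * C1 * a) ^ θ * (CS2 * C2 * b) ^ (1 - θ) := by
        gcongr
    _ = CT * Cι * CX * (CS * C1) ^ θ * (CS2 * C2) ^ (1 - θ) * a ^ θ * b ^ (1 - θ) := by
        rw [Real.mul_rpow (by positivity) ha0, Real.mul_rpow (by positivity) hb0]
        ring

end Direction

/-- Equivalent inductive spectra of graded Fréchet spaces satisfy the interpolation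
estimate for small theta simultaneously. -/
theorem stmt1 {X Y : ℕ → Type*} [∀ N, AddCommGroup (X N)] [∀ N, Module ℂ (X N)]
    [∀ N, AddCommGroup (Y N)] [∀ N, Module ℂ (Y N)]
    (p : ∀ N : ℕ, ℕ → Seminorm ℂ (X N)) (ι : ∀ N M : ℕ, X N →ₗ[ℂ] X M)
    (q : ∀ N : ℕ, ℕ → Seminorm ℂ (Y N)) (τ : ∀ N M : ℕ, Y N →ₗ[ℂ] Y M)
    (hX : IsIndSpectrum p ι) (hY : IsIndSpectrum q τ)
    -- the equivalence of the two spectra: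
    (M K : ℕ → ℕ)
    (hMK : ∀ N : ℕ, N ≤ M N ∧ M N ≤ K N ∧ K N ≤ M (N + 1))
    (T : ∀ N : ℕ, X (M N) →ₗ[ℂ] Y (K N)) (S : ∀ N : ℕ, Y (K N) →ₗ[ℂ] X (M (N + 1)))
    (hT : ∀ N m : ℕ, ∃ n : ℕ, ∃ C : ℝ, 0 < C ∧
      ∀ x : X (M N), q (K N) m (T N x) ≤ C * p (M N) n x)
    (hS : ∀ N m : ℕ, ∃ n : ℕ, ∃ C : ℝ, 0 < C ∧
      ∀ y : Y (K N), p (M (N + 1)) m (S N y) ≤ C * q (K N) n y)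
    (hST : ∀ N : ℕ, (S N).comp (T N) = ι (M N) (M (N + 1)))
    (hTS : ∀ N : ℕ, (T (N + 1)).comp (S N) = τ (K N) (K (N + 1))) :
    SmallThetaIE p ι ↔ SmallThetaIE q τ := by
  constructor
  · exact direction p ι q τ hX hY M K hMK T S hT hS hST hTS
  · -- swap the roles, shifting the index
    exact direction q τ p ι hY hX K (fun N => M (N + 1))
      (fun N => ⟨(hMK N).1.trans (hMK N).2.1, (hMK N).2.2, (hMK (N + 1)).2.1⟩)
      S (fun N => T (N + 1)) hS (fun N m => hT (N + 1) m) hTS (fun N => hST (N + 1))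

end
end

section
/- Let 𝔛 = (X_N, ι^N_{N+1}) and 𝔜 = (Y_N, τ^N_{N+1}) be inductive spectra of graded Fréchet spaces, with seminorms (‖·‖^X_{N,n})_n on X_N and (‖·‖^Y_{N,n})_n on Y_N. Suppose that for each N there is a linear map T_N : X_N → Y_N with T_{N+1} ∘ ι^N_{N+1} = τ^N_{N+1} ∘ T_N which is a topological embedding, i.e. for every m there are n and C > 0 with ‖T_N(x)‖^Y_{N,m} ≤ C‖x‖^X_{N,n} for all x ∈ X_N, and for every n there are m and C′ > 0 with ‖x‖^X_{N,n} ≤ C′‖T_N(x)‖^Y_{N,m} for all x ∈ X_N. If 𝔜 satisfies the interpolation estimate for small theta, then so does 𝔛. -/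
open Real Set

noncomputable section

/-- If a spectrum `𝔛` embeds (compatibly, via topological embeddings) into a
spectrum `𝔜` satisfying the interpolation estimate for small theta, then `𝔛`
satisfies it as well. -/
theorem stmt2 {X Y : ℕ → Type*} [∀ N, AddCommGroup (X N)] [∀ N, Module ℂ (X N)]
    [∀ N, AddCommGroup (Y N)] [∀ N, Module ℂ (Y N)]
    (p : ∀ N : ℕ, ℕ → Seminorm ℂ (X N)) (ι : ∀ N M : ℕ, X N →ₗ[ℂ] X M)
    (q : ∀ N : ℕ, ℕ → Seminorm ℂ (Y N)) (τ : ∀ N M : ℕ, Y N →ₗ[ℂ] Y M)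
    (hX : IsIndSpectrum p ι) (hY : IsIndSpectrum q τ)
    (T : ∀ N : ℕ, X N →ₗ[ℂ] Y N)
    (hcomm : ∀ N : ℕ, (T (N + 1)).comp (ι N (N + 1)) = (τ N (N + 1)).comp (T N))
    -- each `T N` is a topological embedding:
    (hTcont : ∀ N m : ℕ, ∃ n : ℕ, ∃ C : ℝ, 0 < C ∧
      ∀ x : X N, q N m (T N x) ≤ C * p N n x)
    (hTemb : ∀ N n : ℕ, ∃ m : ℕ, ∃ C' : ℝ, 0 < C' ∧
      ∀ x : X N, p N n x ≤ C' * q N m (T N x))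
    (hYie : SmallThetaIE q τ) :
    SmallThetaIE p ι := by
  -- commutation for arbitrary N ≤ M
  have hTcomm : ∀ N M : ℕ, N ≤ M → ∀ x : X N, T M (ι N M x) = τ N M (T N x) := by
    intro N M hNM
    induction hNM with
    | refl => intro x; simp [hX.map_id, hY.map_id]
    | @step m h ih =>
      intro x
      have h1 : ι N (m + 1) x = ι m (m + 1) (ι N m x) := by
        rw [← hX.map_comp h (Nat.le_succ m)]; rfl
      have h2 : τ N (m + 1) (T N x) = τ m (m + 1) (τ N m (T N x)) := by
        rw [← hY.map_comp h (Nat.le_succ m)]; rfl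
      rw [h1, h2, ← ih x]
      exact LinearMap.congr_fun (hcomm m) (ι N m x)
  intro N
  obtain ⟨M, hNM, hM⟩ := hYie N
  refine ⟨M, hNM, fun K hMK => ?_⟩
  obtain ⟨nY, hnY⟩ := hM K hMK
  obtain ⟨n, A, hA, hAin⟩ := hTcont N nY
  refine ⟨n, fun m hm => ?_⟩
  obtain ⟨m', B, hB, hBin⟩ := hTemb M m
  obtain ⟨θ₀, hθ₀0, hθ₀1, hθ⟩ := hnY (max m' nY) (le_max_right _ _)
  refine ⟨θ₀, hθ₀0, hθ₀1, fun θ hθ0 hθ1 => ?_⟩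
  obtain ⟨kY, hkY, C, hC, hCin⟩ := hθ θ hθ0 hθ1
  obtain ⟨k'', D, hD, hDin⟩ := hTcont K kY
  refine ⟨max k'' m, le_max_right _ _, B * C * A ^ θ * D ^ (1 - θ), by positivity, fun x => ?_⟩
  have hθn : 0 ≤ θ := hθ0.le
  have h1θ : (0 : ℝ) ≤ 1 - θ := by linarith
  have e1 : τ N K (T N x) = T K (ι N K x) := (hTcomm N K (hNM.trans hMK) x).symm
  have s1 : (q N nY (T N x)) ^ θ ≤ A ^ θ * (p N n x) ^ θ := by
    rw [← Real.mul_rpow hA.le (apply_nonneg _ _)]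
    exact Real.rpow_le_rpow (apply_nonneg _ _) (hAin x) hθn
  have s2 : (q K kY (τ N K (T N x))) ^ (1 - θ) ≤
      D ^ (1 - θ) * (p K (max k'' m) (ι N K x)) ^ (1 - θ) := by
    rw [e1, ← Real.mul_rpow hD.le (apply_nonneg _ _)]
    refine Real.rpow_le_rpow (apply_nonneg _ _) ((hDin _).trans ?_) h1θ
    gcongr
    exact hX.seminorm_mono K (le_max_left _ _) _
  calc p M m (ι N M x) ≤ B * q M m' (T M (ι N M x)) := hBin _
    _ ≤ B * q M (max m' nY) (T M (ι N M x)) := by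
        gcongr
        exact hY.seminorm_mono M (le_max_left _ _) _
    _ = B * q M (max m' nY) (τ N M (T N x)) := by rw [hTcomm N M hNM x]
    _ ≤ B * (C * (q N nY (T N x)) ^ θ * (q K kY (τ N K (T N x))) ^ (1 - θ)) := by
        gcongr
        exact hCin (T N x)
    _ ≤ B * (C * (A ^ θ * (p N n x) ^ θ) * (D ^ (1 - θ) *
          (p K (max k'' m) (ι N K x)) ^ (1 - θ))) := by
        gcongr
    _ = B * C * A ^ θ * D ^ (1 - θ) * (p N n x) ^ θ *
          (p K (max k'' m) (ι N K x)) ^ (1 - θ) := by ring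

end
end

section
/- Let 𝔛 = (X_N, ι^N_{N+1}), 𝔜 = (Y_N, τ^N_{N+1}) and ℨ = (Z_N, μ^N_{N+1}) be inductive spectra of graded Fréchet spaces. Suppose that for each N there are continuous linear maps T_N : X_N → Y_N and S_N : X_N → Z_N with T_{N+1} ∘ ι^N_{N+1} = τ^N_{N+1} ∘ T_N and S_{N+1} ∘ ι^N_{N+1} = μ^N_{N+1} ∘ S_N, such that the map x ↦ (T_N(x), S_N(x)) is a topological embedding of X_N into Y_N × Z_N, i.e. additionally for every n there are m and C > 0 with ‖x‖^X_{N,n} ≤ C·max(‖T_N(x)‖^Y_{N,m}, ‖S_N(x)‖^Z_{N,m}) for all x ∈ X_N. If both 𝔜 and ℨ satisfy the interpolation estimate for small theta, then so does 𝔛. -/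
open Real Set

noncomputable section

/-- Composite linking maps are continuous. -/
lemma spec_comp_cont {X : ℕ → Type*} [∀ N, AddCommGroup (X N)] [∀ N, Module ℂ (X N)]
    {p : ∀ N : ℕ, ℕ → Seminorm ℂ (X N)} {ι : ∀ N M : ℕ, X N →ₗ[ℂ] X M}
    (h : IsIndSpectrum p ι) {N M : ℕ} (hNM : N ≤ M) (m : ℕ) :
    ∃ n : ℕ, ∃ C : ℝ, 0 < C ∧ ∀ x : X N, p M m (ι N M x) ≤ C * p N n x := by
  induction M, hNM using Nat.le_induction generalizing m with
  | base =>
    refine ⟨m, 1, one_pos, fun x => ?_⟩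
    rw [h.map_id]
    simp
  | succ M hNM ih =>
    obtain ⟨n1, C1, hC1, h1⟩ := h.map_cont M m
    obtain ⟨n, C, hC, h2⟩ := ih n1
    refine ⟨n, C1 * C, by positivity, fun x => ?_⟩
    have hx : ι N (M + 1) x = ι M (M + 1) (ι N M x) := by
      rw [← h.map_comp hNM (Nat.le_succ M)]; rfl
    rw [hx, mul_assoc]
    exact (h1 _).trans (mul_le_mul_of_nonneg_left (h2 x) hC1.le)

/-- Compatibility with the linking maps propagates to composite linking maps. -/
lemma spec_comm {X Y : ℕ → Type*} [∀ N, AddCommGroup (X N)] [∀ N, Module ℂ (X N)]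
    [∀ N, AddCommGroup (Y N)] [∀ N, Module ℂ (Y N)]
    {p : ∀ N : ℕ, ℕ → Seminorm ℂ (X N)} {ι : ∀ N M : ℕ, X N →ₗ[ℂ] X M}
    {q : ∀ N : ℕ, ℕ → Seminorm ℂ (Y N)} {τ : ∀ N M : ℕ, Y N →ₗ[ℂ] Y M}
    (hX : IsIndSpectrum p ι) (hY : IsIndSpectrum q τ)
    (T : ∀ N : ℕ, X N →ₗ[ℂ] Y N)
    (hT : ∀ N : ℕ, (T (N + 1)).comp (ι N (N + 1)) = (τ N (N + 1)).comp (T N))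
    {N M : ℕ} (hNM : N ≤ M) : (T M).comp (ι N M) = (τ N M).comp (T N) := by
  induction M, hNM using Nat.le_induction with
  | base => rw [hX.map_id, hY.map_id]; rfl
  | succ M hNM ih =>
    rw [← hX.map_comp hNM (Nat.le_succ M), ← LinearMap.comp_assoc, hT M,
      LinearMap.comp_assoc, ih, ← LinearMap.comp_assoc, hY.map_comp hNM (Nat.le_succ M)]

/-- Chaining an interpolation estimate with continuity estimates for both factors. -/
lemma chain_est {θ : ℝ} (hθ0 : 0 < θ) (hθ1 : θ < 1) {a b c b' c' Cb Cc D : ℝ}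
    (ha : a ≤ D * b ^ θ * c ^ (1 - θ)) (hb : b ≤ Cb * b') (hc : c ≤ Cc * c')
    (hb0 : 0 ≤ b) (hc0 : 0 ≤ c) (hb'0 : 0 ≤ b') (hc'0 : 0 ≤ c')
    (hCb : 0 < Cb) (hCc : 0 < Cc) (hD : 0 ≤ D) :
    a ≤ D * Cb ^ θ * Cc ^ (1 - θ) * (b' ^ θ * c' ^ (1 - θ)) := by
  have h1 : b ^ θ ≤ Cb ^ θ * b' ^ θ := by
    rw [← Real.mul_rpow hCb.le hb'0]
    exact Real.rpow_le_rpow hb0 hb hθ0.le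
  have h2 : c ^ (1 - θ) ≤ Cc ^ (1 - θ) * c' ^ (1 - θ) := by
    rw [← Real.mul_rpow hCc.le hc'0]
    exact Real.rpow_le_rpow hc0 hc (by linarith)
  calc a ≤ D * b ^ θ * c ^ (1 - θ) := ha
    _ ≤ D * (Cb ^ θ * b' ^ θ) * (Cc ^ (1 - θ) * c' ^ (1 - θ)) := by
        apply mul_le_mul (mul_le_mul_of_nonneg_left h1 hD) h2
          (Real.rpow_nonneg hc0 _)
        positivity
    _ = D * Cb ^ θ * Cc ^ (1 - θ) * (b' ^ θ * c' ^ (1 - θ)) := by ring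

/-- If a spectrum `𝔛` embeds compatibly into the product of two spectra `𝔜`, `ℨ`
both satisfying the interpolation estimate for small theta, then so does `𝔛`. -/
theorem stmt4 {X Y Z : ℕ → Type*} [∀ N, AddCommGroup (X N)] [∀ N, Module ℂ (X N)]
    [∀ N, AddCommGroup (Y N)] [∀ N, Module ℂ (Y N)]
    [∀ N, AddCommGroup (Z N)] [∀ N, Module ℂ (Z N)]
    (p : ∀ N : ℕ, ℕ → Seminorm ℂ (X N)) (ι : ∀ N M : ℕ, X N →ₗ[ℂ] X M)
    (q : ∀ N : ℕ, ℕ → Seminorm ℂ (Y N)) (τ : ∀ N M : ℕ, Y N →ₗ[ℂ] Y M)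
    (r : ∀ N : ℕ, ℕ → Seminorm ℂ (Z N)) (μ : ∀ N M : ℕ, Z N →ₗ[ℂ] Z M)
    (hX : IsIndSpectrum p ι) (hY : IsIndSpectrum q τ) (hZ : IsIndSpectrum r μ)
    (T : ∀ N : ℕ, X N →ₗ[ℂ] Y N) (S : ∀ N : ℕ, X N →ₗ[ℂ] Z N)
    (hTcomm : ∀ N : ℕ, (T (N + 1)).comp (ι N (N + 1)) = (τ N (N + 1)).comp (T N))
    (hScomm : ∀ N : ℕ, (S (N + 1)).comp (ι N (N + 1)) = (μ N (N + 1)).comp (S N))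
    -- `T N` and `S N` are continuous:
    (hTcont : ∀ N m : ℕ, ∃ n : ℕ, ∃ C : ℝ, 0 < C ∧
      ∀ x : X N, q N m (T N x) ≤ C * p N n x)
    (hScont : ∀ N m : ℕ, ∃ n : ℕ, ∃ C : ℝ, 0 < C ∧
      ∀ x : X N, r N m (S N x) ≤ C * p N n x)
    -- `x ↦ (T N x, S N x)` is a topological embedding of `X N` into `Y N × Z N`:
    (hemb : ∀ N n : ℕ, ∃ m : ℕ, ∃ C : ℝ, 0 < C ∧
      ∀ x : X N, p N n x ≤ C * max (q N m (T N x)) (r N m (S N x)))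
    (hYie : SmallThetaIE q τ) (hZie : SmallThetaIE r μ) :
    SmallThetaIE p ι := by
  intro N
  obtain ⟨MY, hMY, hY1⟩ := hYie N
  obtain ⟨MZ, hMZ, hZ1⟩ := hZie N
  refine ⟨max MY MZ, le_trans hMY (le_max_left _ _), fun K hK => ?_⟩
  have hNM : N ≤ max MY MZ := le_trans hMY (le_max_left _ _)
  have hNK : N ≤ K := le_trans hNM hK
  obtain ⟨nY, hYK⟩ := hY1 K (le_trans (le_max_left _ _) hK)
  obtain ⟨nZ, hZK⟩ := hZ1 K (le_trans (le_max_right _ _) hK)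
  obtain ⟨nT, CT, hCT, hT0⟩ := hTcont N nY
  obtain ⟨nS, CS, hCS, hS0⟩ := hScont N nZ
  refine ⟨max nT nS, fun m hm => ?_⟩
  obtain ⟨m1, C1, hC1, hembM⟩ := hemb (max MY MZ) m
  obtain ⟨m2, C2, hC2, hτc⟩ := spec_comp_cont hY (le_max_left MY MZ) m1
  obtain ⟨m3, C3, hC3, hμc⟩ := spec_comp_cont hZ (le_max_right MY MZ) m1
  obtain ⟨θY, hθY0, hθY1, hYest⟩ := hYK (max m2 nY) (le_max_right _ _)
  obtain ⟨θZ, hθZ0, hθZ1, hZest⟩ := hZK (max m3 nZ) (le_max_right _ _)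
  refine ⟨min θY θZ, lt_min hθY0 hθZ0, lt_of_le_of_lt (min_le_left _ _) hθY1,
    fun θ hθ0 hθ1 => ?_⟩
  have hθ1' : θ < 1 := lt_trans (lt_of_lt_of_le hθ1 (min_le_left _ _)) hθY1
  obtain ⟨kY, hkY, CY, hCY, hYfin⟩ := hYest θ hθ0 (lt_of_lt_of_le hθ1 (min_le_left _ _))
  obtain ⟨kZ, hkZ, CZ, hCZ, hZfin⟩ := hZest θ hθ0 (lt_of_lt_of_le hθ1 (min_le_right _ _))
  obtain ⟨kT, CT', hCT', hTK⟩ := hTcont K kY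
  obtain ⟨kS, CS', hCS', hSK⟩ := hScont K kZ
  have hDA : (0:ℝ) < C2 * CY * CT ^ θ * CT' ^ (1 - θ) := by positivity
  have hDB : (0:ℝ) < C3 * CZ * CS ^ θ * CS' ^ (1 - θ) := by positivity
  refine ⟨max m (max kT kS), le_max_left _ _,
    C1 * max (C2 * CY * CT ^ θ * CT' ^ (1 - θ)) (C3 * CZ * CS ^ θ * CS' ^ (1 - θ)),
    mul_pos hC1 (lt_of_lt_of_le hDA (le_max_left _ _)), fun x => ?_⟩
  -- commutation identities
  have hTx : T (max MY MZ) (ι N (max MY MZ) x) = τ MY (max MY MZ) (τ N MY (T N x)) := by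
    have h1 := LinearMap.congr_fun (spec_comm hX hY T hTcomm hNM) x
    have h2 := LinearMap.congr_fun (hY.map_comp hMY (le_max_left MY MZ)) (T N x)
    simp only [LinearMap.comp_apply] at h1 h2
    rw [h1, ← h2]
  have hSx : S (max MY MZ) (ι N (max MY MZ) x) = μ MZ (max MY MZ) (μ N MZ (S N x)) := by
    have h1 := LinearMap.congr_fun (spec_comm hX hZ S hScomm hNM) x
    have h2 := LinearMap.congr_fun (hZ.map_comp hMZ (le_max_right MY MZ)) (S N x)
    simp only [LinearMap.comp_apply] at h1 h2
    rw [h1, ← h2]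
  have hTKx : τ N K (T N x) = T K (ι N K x) := by
    have h1 := LinearMap.congr_fun (spec_comm hX hY T hTcomm hNK) x
    simp only [LinearMap.comp_apply] at h1
    rw [h1]
  have hSKx : μ N K (S N x) = S K (ι N K x) := by
    have h1 := LinearMap.congr_fun (spec_comm hX hZ S hScomm hNK) x
    simp only [LinearMap.comp_apply] at h1
    rw [h1]
  -- the Y-side estimate
  have hA : q (max MY MZ) m1 (T (max MY MZ) (ι N (max MY MZ) x)) ≤
      C2 * CY * CT ^ θ * CT' ^ (1 - θ) *
        ((p N (max nT nS) x) ^ θ * (p K (max m (max kT kS)) (ι N K x)) ^ (1 - θ)) := by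
    have e1 : q (max MY MZ) m1 (T (max MY MZ) (ι N (max MY MZ) x)) ≤
        C2 * CY * (q N nY (T N x)) ^ θ * (q K kY (τ N K (T N x))) ^ (1 - θ) := by
      rw [hTx]
      calc q (max MY MZ) m1 (τ MY (max MY MZ) (τ N MY (T N x)))
          ≤ C2 * q MY m2 (τ N MY (T N x)) := hτc _
        _ ≤ C2 * q MY (max m2 nY) (τ N MY (T N x)) :=
            mul_le_mul_of_nonneg_left
              (hY.seminorm_mono MY (le_max_left m2 nY) _) hC2.le
        _ ≤ C2 * (CY * (q N nY (T N x)) ^ θ * (q K kY (τ N K (T N x))) ^ (1 - θ)) :=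
            mul_le_mul_of_nonneg_left (hYfin _) hC2.le
        _ = C2 * CY * (q N nY (T N x)) ^ θ * (q K kY (τ N K (T N x))) ^ (1 - θ) := by ring
    have hb : q N nY (T N x) ≤ CT * p N (max nT nS) x :=
      (hT0 x).trans (mul_le_mul_of_nonneg_left
        (hX.seminorm_mono N (le_max_left nT nS) _) hCT.le)
    have hc : q K kY (τ N K (T N x)) ≤ CT' * p K (max m (max kT kS)) (ι N K x) := by
      rw [hTKx]
      exact (hTK _).trans (mul_le_mul_of_nonneg_left
        (hX.seminorm_mono K (le_trans (le_max_left kT kS) (le_max_right m _)) _) hCT'.le)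
    exact chain_est hθ0 hθ1' e1 hb hc (apply_nonneg _ _) (apply_nonneg _ _)
      (apply_nonneg _ _) (apply_nonneg _ _) hCT hCT' (by positivity)
  -- the Z-side estimate
  have hB : r (max MY MZ) m1 (S (max MY MZ) (ι N (max MY MZ) x)) ≤
      C3 * CZ * CS ^ θ * CS' ^ (1 - θ) *
        ((p N (max nT nS) x) ^ θ * (p K (max m (max kT kS)) (ι N K x)) ^ (1 - θ)) := by
    have e1 : r (max MY MZ) m1 (S (max MY MZ) (ι N (max MY MZ) x)) ≤
        C3 * CZ * (r N nZ (S N x)) ^ θ * (r K kZ (μ N K (S N x))) ^ (1 - θ) := by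
      rw [hSx]
      calc r (max MY MZ) m1 (μ MZ (max MY MZ) (μ N MZ (S N x)))
          ≤ C3 * r MZ m3 (μ N MZ (S N x)) := hμc _
        _ ≤ C3 * r MZ (max m3 nZ) (μ N MZ (S N x)) :=
            mul_le_mul_of_nonneg_left
              (hZ.seminorm_mono MZ (le_max_left m3 nZ) _) hC3.le
        _ ≤ C3 * (CZ * (r N nZ (S N x)) ^ θ * (r K kZ (μ N K (S N x))) ^ (1 - θ)) :=
            mul_le_mul_of_nonneg_left (hZfin _) hC3.le
        _ = C3 * CZ * (r N nZ (S N x)) ^ θ * (r K kZ (μ N K (S N x))) ^ (1 - θ) := by ring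
    have hb : r N nZ (S N x) ≤ CS * p N (max nT nS) x :=
      (hS0 x).trans (mul_le_mul_of_nonneg_left
        (hX.seminorm_mono N (le_max_right nT nS) _) hCS.le)
    have hc : r K kZ (μ N K (S N x)) ≤ CS' * p K (max m (max kT kS)) (ι N K x) := by
      rw [hSKx]
      exact (hSK _).trans (mul_le_mul_of_nonneg_left
        (hX.seminorm_mono K (le_trans (le_max_right kT kS) (le_max_right m _)) _) hCS'.le)
    exact chain_est hθ0 hθ1' e1 hb hc (apply_nonneg _ _) (apply_nonneg _ _)
      (apply_nonneg _ _) (apply_nonneg _ _) hCS hCS' (by positivity)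
  calc p (max MY MZ) m (ι N (max MY MZ) x)
      ≤ C1 * max (q (max MY MZ) m1 (T (max MY MZ) (ι N (max MY MZ) x)))
          (r (max MY MZ) m1 (S (max MY MZ) (ι N (max MY MZ) x))) := hembM _
    _ ≤ C1 * (max (C2 * CY * CT ^ θ * CT' ^ (1 - θ)) (C3 * CZ * CS ^ θ * CS' ^ (1 - θ)) *
          ((p N (max nT nS) x) ^ θ * (p K (max m (max kT kS)) (ι N K x)) ^ (1 - θ))) := by
        apply mul_le_mul_of_nonneg_left _ hC1.le
        rw [max_mul_of_nonneg _ _ (by positivity)]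
        exact max_le_max hA hB
    _ = C1 * max (C2 * CY * CT ^ θ * CT' ^ (1 - θ)) (C3 * CZ * CS ^ θ * CS' ^ (1 - θ)) *
          (p N (max nT nS) x) ^ θ * (p K (max m (max kT kS)) (ι N K x)) ^ (1 - θ) := by ring

end
end

section
/- Let ω be a weight function. For each n ∈ ℤ₊ there exist k ∈ ℤ₊ and C > 0 such that for every χ ∈ C^∞(ℝᵈ) with all derivatives in L¹(ℝᵈ) and ‖χ‖_{D_{L¹,ω,n}} < ∞, and for all (x,ξ) ∈ ℝ^{2d}, the modulated translate M_ξT_xχ(t) := e^{2πiξ·t}χ(t−x) satisfies ‖M_ξT_xχ‖_{D_{L¹,ω,k}} ≤ C ‖χ‖_{D_{L¹,ω,n}} exp((1/n)ω(|ξ|)). -/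
open Real Set MeasureTheory

noncomputable section

/-- A weight function in the sense of Braun–Meise–Taylor: a continuous increasing
function `ω : [0,∞) → [0,∞)` vanishing on `[0,1]` with `ω(2t) = O(ω(t))`,
`ω(t) = O(t)`, `log t = o(ω(t))` and `x ↦ ω(eˣ)` convex. -/
structure IsWeightFunction (ω : ℝ → ℝ) : Prop where
  cont : ContinuousOn ω (Set.Ici 0)
  mono : MonotoneOn ω (Set.Ici 0)
  nonneg : ∀ t : ℝ, 0 ≤ t → 0 ≤ ω t
  zero_on_unit : ∀ t : ℝ, 0 ≤ t → t ≤ 1 → ω t = 0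
  alpha : ∃ C : ℝ, 0 < C ∧ ∃ t₀ : ℝ, ∀ t : ℝ, t₀ ≤ t → ω (2 * t) ≤ C * ω t
  beta : ∃ C : ℝ, 0 < C ∧ ∃ t₀ : ℝ, ∀ t : ℝ, t₀ ≤ t → ω t ≤ C * t
  gamma : ∀ ε : ℝ, 0 < ε → ∃ t₀ : ℝ, ∀ t : ℝ, t₀ ≤ t → Real.log t ≤ ε * ω t
  delta : ConvexOn ℝ (Set.Ici 0) (fun x => ω (Real.exp x))

/-- The Young conjugate `ψ*(y) = sup_{x ≥ 0} (x y − ψ(x))` of `ψ(x) = ω(eˣ)`. -/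
noncomputable def youngConj (ω : ℝ → ℝ) (y : ℝ) : ℝ :=
  sSup {z : ℝ | ∃ x : ℝ, 0 ≤ x ∧ z = x * y - ω (Real.exp x)}

/-- The partial derivative of `f : ℝᵈ → F` in the `i`-th coordinate direction. -/
noncomputable def pd {d : ℕ} {F : Type*} [NormedAddCommGroup F] [NormedSpace ℝ F]
    (i : Fin d) (f : EuclideanSpace ℝ (Fin d) → F) : EuclideanSpace ℝ (Fin d) → F :=
  fun x => fderiv ℝ f x (EuclideanSpace.single i 1)

/-- The multi-index partial derivative `f^{(α)}` of `f : ℝᵈ → F`, `α ∈ ℕᵈ`. -/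
noncomputable def mderiv {d : ℕ} {F : Type*} [NormedAddCommGroup F] [NormedSpace ℝ F]
    (α : Fin d → ℕ) (f : EuclideanSpace ℝ (Fin d) → F) : EuclideanSpace ℝ (Fin d) → F :=
  ((List.finRange d).foldr (fun i g => (pd i)^[α i] ∘ g) id) f

namespace YC

variable {ω : ℝ → ℝ} (hω : IsWeightFunction ω)

lemma set_nonempty (y : ℝ) :
    Set.Nonempty {z : ℝ | ∃ x : ℝ, 0 ≤ x ∧ z = x * y - ω (Real.exp x)} :=
  ⟨0 * y - ω (Real.exp 0), 0, le_refl 0, rfl⟩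

include hω

lemma psi_nonneg (x : ℝ) : 0 ≤ ω (Real.exp x) := hω.nonneg _ (Real.exp_pos x).le

lemma psi_zero : ω (Real.exp 0) = 0 := by
  rw [Real.exp_zero]; exact hω.zero_on_unit 1 zero_le_one le_rfl

lemma set_bddAbove (y : ℝ) (hy : 0 ≤ y) :
    BddAbove {z : ℝ | ∃ x : ℝ, 0 ≤ x ∧ z = x * y - ω (Real.exp x)} := by
  obtain ⟨t₀, ht₀⟩ := hω.gamma (1 / (y + 1)) (by positivity)
  set x₀ : ℝ := max (Real.log t₀) 0 with hx₀
  refine ⟨max (x₀ * y) 0, ?_⟩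
  rintro z ⟨x, hx, rfl⟩
  rcases le_or_gt x x₀ with h | h
  · refine le_trans ?_ (le_max_left _ _)
    have : x * y ≤ x₀ * y := mul_le_mul_of_nonneg_right h hy
    nlinarith [psi_nonneg hω x]
  · -- x > x₀ so exp x ≥ t₀, log (exp x) = x ≤ (1/(y+1)) ω (exp x)
    have hxt : t₀ ≤ Real.exp x := by
      rcases le_or_gt t₀ 0 with h' | h'
      · exact le_trans h' (Real.exp_pos x).le
      · have : Real.log t₀ ≤ x := le_of_lt (lt_of_le_of_lt (le_max_left _ _) h)
        calc t₀ = Real.exp (Real.log t₀) := (Real.exp_log h').symm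
        _ ≤ Real.exp x := Real.exp_le_exp.2 this
    have h1 := ht₀ _ hxt
    rw [Real.log_exp] at h1
    have h2 : x * (y + 1) ≤ ω (Real.exp x) := by
      rw [div_mul_eq_mul_div, le_div_iff₀ (by positivity)] at h1
      linarith [h1]
    have : x * y - ω (Real.exp x) ≤ -x := by nlinarith
    have hx0 : 0 < x := lt_of_le_of_lt (le_max_right _ _) h
    exact le_trans this (le_trans (by linarith) (le_max_right (x₀ * y) 0))

lemma le_youngConj {y x : ℝ} (hy : 0 ≤ y) (hx : 0 ≤ x) :
    x * y - ω (Real.exp x) ≤ youngConj ω y :=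
  le_csSup (set_bddAbove hω y hy) ⟨x, hx, rfl⟩

lemma youngConj_nonneg {y : ℝ} (hy : 0 ≤ y) : 0 ≤ youngConj ω y := by
  have := le_youngConj hω (x := 0) hy le_rfl
  rwa [zero_mul, psi_zero hω, sub_zero] at this

lemma youngConj_le {y M : ℝ}
    (h : ∀ x : ℝ, 0 ≤ x → x * y - ω (Real.exp x) ≤ M) : youngConj ω y ≤ M := by
  apply csSup_le (set_nonempty y)
  rintro z ⟨x, hx, rfl⟩; exact h x hx

lemma youngConj_mono {y y' : ℝ} (hy : 0 ≤ y) (h : y ≤ y') : youngConj ω y ≤ youngConj ω y' := by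
  apply youngConj_le hω
  intro x hx
  calc x * y - ω (Real.exp x) ≤ x * y' - ω (Real.exp x) := by nlinarith
  _ ≤ youngConj ω y' := le_youngConj hω (le_trans hy h) hx

/-- Young's inequality: `y * log s ≤ ψ*(y) + ω s` for `s ≥ 1`. -/
lemma young {y s : ℝ} (hy : 0 ≤ y) (hs : 1 ≤ s) :
    y * Real.log s ≤ youngConj ω y + ω s := by
  have hls : 0 ≤ Real.log s := Real.log_nonneg hs
  have := le_youngConj hω (x := Real.log s) hy hls
  rw [Real.exp_log (by linarith)] at this
  linarith [this]

/-- Superadditivity. -/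
lemma superadd {a b : ℝ} (ha : 0 ≤ a) (hb : 0 ≤ b) :
    youngConj ω a + youngConj ω b ≤ youngConj ω (a + b) := by
  rcases eq_or_lt_of_le (add_nonneg ha hb) with h | hab
  · have ha0 : a = 0 := by linarith [ha, hb]
    have hb0 : b = 0 := by linarith
    subst ha0; subst hb0
    have hz : youngConj ω 0 ≤ 0 := by
      apply youngConj_le hω
      intro x hx
      have := psi_nonneg hω x
      nlinarith
    norm_num
    linarith [youngConj_nonneg hω (le_refl (0:ℝ))]
  · have key : ∀ c : ℝ, 0 ≤ c → c ≤ a + b →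
        youngConj ω c ≤ (c / (a + b)) * youngConj ω (a + b) := by
      intro c hc hcab
      apply youngConj_le hω
      intro x hx
      have h1 : x * (a+b) - ω (Real.exp x) ≤ youngConj ω (a+b) :=
        le_youngConj hω (by linarith) hx
      have hr : c / (a+b) ≤ 1 := by rw [div_le_one hab]; exact hcab
      have hr0 : 0 ≤ c / (a+b) := by positivity
      have : x * c - ω (Real.exp x) ≤ (c/(a+b)) * (x * (a+b) - ω (Real.exp x)) := by
        have hψ := psi_nonneg hω x
        have : x * c = (c/(a+b)) * (x*(a+b)) := by field_simp
        rw [this]; nlinarith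
      exact le_trans this (mul_le_mul_of_nonneg_left h1 hr0)
    have h1 := key a ha (by linarith)
    have h2 := key b hb (by linarith)
    have : a/(a+b) + b/(a+b) = 1 := by field_simp
    nlinarith [youngConj_nonneg hω (le_of_lt hab)]

/-- the doubling lemma: `ψ(x+1) ≤ K ψ(x) + D`. -/
lemma psi_step : ∃ K : ℕ, 1 ≤ K ∧ ∃ D : ℝ, 0 ≤ D ∧
    ∀ x : ℝ, 0 ≤ x → ω (Real.exp (x+1)) ≤ K * ω (Real.exp x) + D := by
  obtain ⟨C, hC, t₀, hα⟩ := hω.alpha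
  set T₀ : ℝ := max t₀ 1 with hT₀
  set D : ℝ := ω (Real.exp 1 * T₀) with hD
  have hT₀1 : (1:ℝ) ≤ T₀ := le_max_right _ _
  have hD0 : 0 ≤ D := hω.nonneg _ (by positivity)
  refine ⟨⌈C^2⌉₊ + 1, by omega, D, hD0, ?_⟩
  intro x hx
  have hex : (1:ℝ) ≤ Real.exp x := Real.one_le_exp hx
  have hCK : C^2 ≤ (⌈C^2⌉₊ + 1 : ℕ) := by
    push_cast; linarith [Nat.le_ceil (C^2)]
  rcases le_or_gt T₀ (Real.exp x) with h | h
  · -- exp x ≥ T₀ ≥ t₀ : use doubling twice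
    have ht1 : t₀ ≤ Real.exp x := le_trans (le_max_left _ _) h
    have ht2 : t₀ ≤ 2 * Real.exp x := le_trans ht1 (by linarith)
    have h1 : ω (2 * Real.exp x) ≤ C * ω (Real.exp x) := hα _ ht1
    have h2 : ω (2 * (2 * Real.exp x)) ≤ C * ω (2 * Real.exp x) := hα _ ht2
    have h3 : ω (Real.exp (x+1)) ≤ ω (2 * (2 * Real.exp x)) := by
      apply hω.mono (Set.mem_Ici.2 (by positivity)) (Set.mem_Ici.2 (by positivity))
      rw [Real.exp_add]
      have : Real.exp 1 ≤ 4 := by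
        linarith [Real.exp_one_lt_d9]
      nlinarith
    have hω0 := hω.nonneg _ (le_of_lt (Real.exp_pos x))
    calc ω (Real.exp (x+1)) ≤ C * (C * ω (Real.exp x)) := by nlinarith
    _ = C^2 * ω (Real.exp x) := by ring
    _ ≤ (⌈C^2⌉₊ + 1 : ℕ) * ω (Real.exp x) := by nlinarith
    _ ≤ (⌈C^2⌉₊ + 1 : ℕ) * ω (Real.exp x) + D := by linarith
  · -- exp x ≤ T₀ : bounded
    have h3 : ω (Real.exp (x+1)) ≤ D := by
      apply hω.mono (Set.mem_Ici.2 (by positivity)) (Set.mem_Ici.2 (by positivity))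
      rw [Real.exp_add, mul_comm]
      have := Real.exp_pos (1:ℝ)
      nlinarith
    have hω0 := hω.nonneg _ (le_of_lt (Real.exp_pos x))
    have : (0:ℝ) ≤ (⌈C^2⌉₊ + 1 : ℕ) * ω (Real.exp x) := by positivity
    linarith

/-- `ψ*(K y) ≥ K ψ*(y) + K y − D`. -/
lemma conj_step : ∃ K : ℕ, 1 ≤ K ∧ ∃ D : ℝ, 0 ≤ D ∧
    ∀ y : ℝ, 0 ≤ y → (K:ℝ) * youngConj ω y + K * y - D ≤ youngConj ω (K * y) := by
  obtain ⟨K, hK, D, hD, hstep⟩ := psi_step hω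
  refine ⟨K, hK, D, hD, ?_⟩
  intro y hy
  have hK0 : (0:ℝ) < K := by exact_mod_cast hK
  have key : youngConj ω y ≤ (youngConj ω (K*y) - K*y + D) / K := by
    apply youngConj_le hω
    intro x hx
    rw [le_div_iff₀ hK0]
    have h1 : (x+1) * (K*y) - ω (Real.exp (x+1)) ≤ youngConj ω (K*y) :=
      le_youngConj hω (by positivity) (by linarith)
    have h2 := hstep x hx
    have hψ := psi_nonneg hω x
    nlinarith
  rw [le_div_iff₀ hK0] at key
  nlinarith

end YC

namespace MT

variable {d : ℕ}

local notation "E" => EuclideanSpace ℝ (Fin d)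

/-- iterated partial derivatives along a list with multi-exponent β -/
def Dl (l : List (Fin d)) (β : Fin d → ℕ) (f : E → ℂ) : E → ℂ :=
  (l.foldr (fun i g => (pd i)^[β i] ∘ g) id) f

lemma mderiv_eq_Dl (β : Fin d → ℕ) (f : E → ℂ) : mderiv β f = Dl (List.finRange d) β f := rfl

lemma Dl_nil (β : Fin d → ℕ) (f : E → ℂ) : Dl [] β f = f := rfl

lemma Dl_cons (i : Fin d) (l : List (Fin d)) (β : Fin d → ℕ) (f : E → ℂ) :
    Dl (i :: l) β f = (pd i)^[β i] (Dl l β f) := rfl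

lemma Dl_congr {l : List (Fin d)} {β₁ β₂ : Fin d → ℕ} (h : ∀ i ∈ l, β₁ i = β₂ i)
    (f : E → ℂ) : Dl l β₁ f = Dl l β₂ f := by
  induction l with
  | nil => rfl
  | cons i l ih =>
      rw [Dl_cons, Dl_cons, h i List.mem_cons_self,
        ih (fun j hj => h j (List.mem_cons_of_mem i hj))]

lemma pd_smooth {f : E → ℂ} (hf : ContDiff ℝ (⊤ : ℕ∞) f) (i : Fin d) : ContDiff ℝ (⊤ : ℕ∞) (pd i f) := by
  have h1 : ContDiff ℝ (⊤ : ℕ∞) (fderiv ℝ f) := hf.fderiv_right (by simp)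
  exact (ContinuousLinearMap.apply ℝ ℂ (EuclideanSpace.single i (1:ℝ))).contDiff.comp h1

lemma pd_iter_smooth {f : E → ℂ} (hf : ContDiff ℝ (⊤ : ℕ∞) f) (i : Fin d) (a : ℕ) :
    ContDiff ℝ (⊤ : ℕ∞) ((pd i)^[a] f) := by
  induction a with
  | zero => exact hf
  | succ a ih => rw [Function.iterate_succ_apply']; exact pd_smooth ih i

lemma Dl_smooth {f : E → ℂ} (hf : ContDiff ℝ (⊤ : ℕ∞) f) (l : List (Fin d)) (β : Fin d → ℕ) :
    ContDiff ℝ (⊤ : ℕ∞) (Dl l β f) := by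
  induction l with
  | nil => exact hf
  | cons i l ih => rw [Dl_cons]; exact pd_iter_smooth ih i (β i)

lemma pd_finset_sum {I : Type*} (s : Finset I) (f : I → E → ℂ)
    (hf : ∀ b ∈ s, ContDiff ℝ (⊤ : ℕ∞) (f b)) (w : I → ℂ) (i : Fin d) :
    pd i (fun t => ∑ b ∈ s, w b • f b t) = fun t => ∑ b ∈ s, w b • pd i (f b) t := by
  funext t
  unfold pd
  rw [fderiv_fun_sum (A := fun b t => w b • f b t) (fun b hb => ((((hf b hb).differentiable (by simp) t).const_smul (w b) :
    DifferentiableAt ℝ (fun t => w b • f b t) t)))]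
  rw [ContinuousLinearMap.sum_apply]
  refine Finset.sum_congr rfl (fun b hb => ?_)
  rw [fderiv_fun_const_smul ((hf b hb).differentiable (by simp) t)]
  rfl


variable (ξ x : EuclideanSpace ℝ (Fin d))

/-- the coefficient `2πi ξᵢ` -/
def cc (i : Fin d) : ℂ := 2 * Real.pi * Complex.I * (ξ i : ℂ)

/-- the linear functional `t ↦ 2πi ⟨ξ, t⟩` -/
def L : E →L[ℝ] ℂ :=
  ∑ i, cc ξ i • (Complex.ofRealCLM.comp (EuclideanSpace.proj i))

lemma L_apply (t : E) : L ξ t = ∑ i, cc ξ i * (t i : ℂ) := by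
  rw [L, ContinuousLinearMap.sum_apply]
  refine Finset.sum_congr rfl (fun i _ => ?_)
  simp [smul_eq_mul]

lemma L_single (i : Fin d) : L ξ (EuclideanSpace.single i (1:ℝ)) = cc ξ i := by
  rw [L_apply]
  rw [Finset.sum_eq_single i]
  · simp [EuclideanSpace.single_apply]
  · intro j _ hj
    simp [EuclideanSpace.single_apply, hj]
  · simp

/-- the exponential `e^{2πi ξ·t}` -/
def ee : E → ℂ := fun t => Complex.exp (L ξ t)

lemma ee_smooth : ContDiff ℝ (⊤ : ℕ∞) (ee ξ) := (L ξ).contDiff.cexp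

lemma ee_hasFDerivAt (t : E) : HasFDerivAt (ee ξ) (ee ξ t • L ξ) t :=
  ((L ξ).hasFDerivAt).cexp

lemma ee_norm (t : E) : ‖ee ξ t‖ = 1 := by
  rw [ee, Complex.norm_exp]
  have : (L ξ t).re = 0 := by
    rw [L_apply, Complex.re_sum]
    refine Finset.sum_eq_zero (fun i _ => ?_)
    simp [cc, Complex.mul_re, Complex.mul_im]
  rw [this, Real.exp_zero]

/-- modulation-translation operator -/
def T (g : E → ℂ) : E → ℂ := fun t => ee ξ t * g (t - x)

lemma T_smooth {g : E → ℂ} (hg : ContDiff ℝ (⊤ : ℕ∞) g) : ContDiff ℝ (⊤ : ℕ∞) (T ξ x g) :=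
  (ee_smooth ξ).mul (hg.comp (contDiff_id.sub contDiff_const))

lemma translate_hasFDerivAt {g : E → ℂ} (hg : ContDiff ℝ (⊤ : ℕ∞) g) (t : E) :
    HasFDerivAt (fun s => g (s - x)) (fderiv ℝ g (t - x)) t := by
  have h1 : HasFDerivAt g (fderiv ℝ g (t - x)) (t - x) :=
    (hg.differentiable (by simp) (t - x)).hasFDerivAt
  have h2 : HasFDerivAt (fun s : E => s - x) (ContinuousLinearMap.id ℝ E) t :=
    (hasFDerivAt_id t).sub_const x
  have := h1.comp t h2
  rwa [ContinuousLinearMap.comp_id] at this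

lemma pd_T {g : E → ℂ} (hg : ContDiff ℝ (⊤ : ℕ∞) g) (i : Fin d) :
    pd i (T ξ x g) = T ξ x (fun u => cc ξ i * g u + pd i g u) := by
  funext t
  have h : HasFDerivAt (T ξ x g)
      (ee ξ t • fderiv ℝ g (t - x) + g (t - x) • (ee ξ t • L ξ)) t :=
    (ee_hasFDerivAt ξ t).mul (translate_hasFDerivAt x hg t)
  rw [pd, h.fderiv]
  simp only [ContinuousLinearMap.add_apply, ContinuousLinearMap.smul_apply, L_single,
    smul_eq_mul]
  rw [T]
  show ee ξ t * (fderiv ℝ g (t-x)) (EuclideanSpace.single i 1)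
      + g (t-x) * (ee ξ t * cc ξ i)
    = ee ξ t * (cc ξ i * g (t-x) + pd i g (t-x))
  rw [pd]
  ring

/-- Pascal reindexing identity in a `ℂ`-module. -/
lemma pascal_sum {M : Type*} [AddCommMonoid M] [Module ℂ M] (a : ℕ) (c : ℂ) (z : ℕ → M) :
    ∑ j ∈ Finset.range (a+2), (((a+1).choose j : ℂ) * c^(a+1-j)) • z j
    = ∑ j ∈ Finset.range (a+1), ((a.choose j : ℂ) * c^(a-j+1)) • z j
      + ∑ j ∈ Finset.range (a+1), ((a.choose j : ℂ) * c^(a-j)) • z (j+1) := by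
  rw [Finset.sum_range_succ' (fun j => (((a+1).choose j : ℂ) * c^(a+1-j)) • z j) (a+1)]
  have pasc : ∀ j, ((a+1).choose (j+1) : ℂ) = (a.choose j : ℂ) + (a.choose (j+1) : ℂ) := by
    intro j; rw [Nat.choose_succ_succ]; push_cast; ring
  have expand : ∀ j ∈ Finset.range (a+1),
      (((a+1).choose (j+1) : ℂ) * c^(a+1-(j+1))) • z (j+1)
      = ((a.choose j : ℂ) * c^(a-j)) • z (j+1)
        + ((a.choose (j+1) : ℂ) * c^(a-j)) • z (j+1) := by
    intro j hj
    rw [Nat.succ_sub_succ, pasc j, add_mul, add_smul]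
  rw [Finset.sum_congr rfl expand, Finset.sum_add_distrib]
  have second : ∑ j ∈ Finset.range (a+1), ((a.choose (j+1) : ℂ) * c^(a-j)) • z (j+1)
      + (((a+1).choose 0 : ℂ) * c^(a+1-0)) • z 0
      = ∑ j ∈ Finset.range (a+1), ((a.choose j : ℂ) * c^(a-j+1)) • z j := by
    have h1 := Finset.sum_range_succ' (fun j => ((a.choose j : ℂ) * c^(a+1-j)) • z j) (a+1)
    have h2 : ∑ j ∈ Finset.range (a+2), ((a.choose j : ℂ) * c^(a+1-j)) • z j
        = ∑ j ∈ Finset.range (a+1), ((a.choose j : ℂ) * c^(a+1-j)) • z j := by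
      rw [Finset.sum_range_succ]
      simp [Nat.choose_succ_self]
    rw [h2] at h1
    have h3 : ∀ j ∈ Finset.range (a+1), ((a.choose j : ℂ) * c^(a+1-j)) • z j
        = ((a.choose j : ℂ) * c^(a-j+1)) • z j := by
      intro j hj
      rw [Finset.mem_range] at hj
      rw [Nat.succ_sub (by omega : j ≤ a)]
    rw [Finset.sum_congr rfl h3] at h1
    have h4 : ∀ j ∈ Finset.range (a+1),
        ((a.choose (j+1) : ℂ) * c^(a+1-(j+1))) • z (j+1)
        = ((a.choose (j+1) : ℂ) * c^(a-j)) • z (j+1) := by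
      intro j hj; rw [Nat.succ_sub_succ]
    rw [Finset.sum_congr rfl h4] at h1
    simp only [Nat.choose_zero_right, Nat.cast_one, one_mul, Nat.sub_zero] at h1 ⊢
    rw [← h1]
  rw [add_assoc, second]
  ring_nf
  rw [add_comm]


lemma pd_iter_finset_sum {I : Type*} (s : Finset I) (f : I → E → ℂ)
    (hf : ∀ b ∈ s, ContDiff ℝ (⊤ : ℕ∞) (f b)) (w : I → ℂ) (i : Fin d) (a : ℕ) :
    (pd i)^[a] (fun t => ∑ b ∈ s, w b • f b t)
      = fun t => ∑ b ∈ s, w b • ((pd i)^[a] (f b)) t := by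
  induction a with
  | zero => rfl
  | succ a ih =>
      rw [Function.iterate_succ_apply', ih,
        pd_finset_sum s (fun b => (pd i)^[a] (f b))
          (fun b hb => pd_iter_smooth (hf b hb) i a) w i]
      refine funext (fun t => Finset.sum_congr rfl (fun b hb => ?_))
      rw [Function.iterate_succ_apply']

/-- one-variable binomial expansion of iterated `pd i` on a modulated translate -/
lemma bin {g : E → ℂ} (hg : ContDiff ℝ (⊤ : ℕ∞) g) (i : Fin d) (a : ℕ) :
    (pd i)^[a] (T ξ x g)
      = fun t => ∑ j ∈ Finset.range (a+1),
          ((a.choose j : ℂ) * (cc ξ i)^(a-j)) • T ξ x ((pd i)^[j] g) t := by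
  induction a with
  | zero =>
      funext t
      simp
  | succ a ih =>
      rw [Function.iterate_succ_apply', ih,
        pd_finset_sum (Finset.range (a+1)) (fun j => T ξ x ((pd i)^[j] g))
          (fun j _ => T_smooth ξ x (pd_iter_smooth hg i j))
          (fun j => ((a.choose j : ℂ) * (cc ξ i)^(a-j))) i]
      funext t
      have hsplit : ∀ j ∈ Finset.range (a+1),
          ((a.choose j : ℂ) * (cc ξ i)^(a-j)) • pd i (T ξ x ((pd i)^[j] g)) t
          = ((a.choose j : ℂ) * (cc ξ i)^(a-j+1)) • T ξ x ((pd i)^[j] g) t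
            + ((a.choose j : ℂ) * (cc ξ i)^(a-j)) • T ξ x ((pd i)^[j+1] g) t := by
        intro j _
        rw [pd_T ξ x (pd_iter_smooth hg i j) i]
        have hT : T ξ x (fun u => cc ξ i * (pd i)^[j] g u + pd i ((pd i)^[j] g) u) t
            = cc ξ i * T ξ x ((pd i)^[j] g) t + T ξ x ((pd i)^[j+1] g) t := by
          simp only [T]
          rw [← Function.iterate_succ_apply' (pd i) j g]
          ring
        rw [hT, smul_eq_mul, smul_eq_mul, smul_eq_mul, mul_add]
        ring
      rw [Finset.sum_congr rfl hsplit, Finset.sum_add_distrib]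
      have := pascal_sum (M := ℂ) a (cc ξ i) (fun j => T ξ x ((pd i)^[j] g) t)
      rw [show a + 1 + 1 = a + 2 from rfl, this]

/-- the exponent bound set for a list -/
def P (α : Fin d → ℕ) (l : List (Fin d)) : Finset (Fin d → ℕ) :=
  Fintype.piFinset (fun i => Finset.range ((if i ∈ l then α i else 0) + 1))

/-- the coefficient -/
def coef (α : Fin d → ℕ) (l : List (Fin d)) (γ : Fin d → ℕ) : ℂ :=
  ∏ i ∈ l.toFinset, ((α i).choose (γ i) : ℂ) * (cc ξ i)^(α i - γ i)

lemma reindex {M : Type*} [AddCommMonoid M] (α : Fin d → ℕ) (i : Fin d) (l : List (Fin d))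
    (hi : i ∉ l) (F : (Fin d → ℕ) → M) :
    ∑ γ ∈ P α (i :: l), F γ
    = ∑ β ∈ P α l, ∑ j ∈ Finset.range (α i + 1), F (Function.update β i j) := by
  classical
  simp only [P]
  rw [← Finset.sum_product']
  refine Finset.sum_nbij' (fun γ => (Function.update γ i 0, γ i))
    (fun p => Function.update p.1 i p.2) ?_ ?_ ?_ ?_ ?_
  · intro γ hγ
    simp only [P, Fintype.mem_piFinset] at hγ
    rw [Finset.mem_product]
    constructor
    · rw [Fintype.mem_piFinset]
      intro i'
      by_cases h : i' = i
      · subst h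
        simp [Function.update_self, hi]
      · dsimp only
        rw [Function.update_of_ne h]
        have := hγ i'
        have hmem : (if i' ∈ i :: l then α i' else 0) = (if i' ∈ l then α i' else 0) := by
          simp [List.mem_cons, h]
        rwa [hmem] at this
    · have := hγ i
      simpa [List.mem_cons] using this
  · intro p hp
    simp only [Finset.mem_product, Fintype.mem_piFinset] at hp
    rw [Fintype.mem_piFinset]
    intro i'
    by_cases h : i' = i
    · subst h
      simpa [List.mem_cons] using hp.2
    · rw [Function.update_of_ne h]
      have := hp.1 i'
      have hmem : (if i' ∈ i :: l then α i' else 0) = (if i' ∈ l then α i' else 0) := by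
        simp [List.mem_cons, h]
      rwa [hmem]
  · intro γ hγ
    simp only [Function.update_idem, Function.update_eq_self]
  · intro p hp
    simp only [Finset.mem_product, Fintype.mem_piFinset] at hp
    have h0 : p.1 i = 0 := by
      have := hp.1 i
      simp [hi] at this
      exact this
    ext
    · simp only [Function.update_idem]
      rw [← h0, Function.update_eq_self]
    · simp [Function.update_self]
  · intro γ hγ
    rw [Function.update_idem, Function.update_eq_self]


/-- main expansion lemma -/
lemma main (α : Fin d → ℕ) (l : List (Fin d)) (hl : l.Nodup) {χ : E → ℂ}
    (hχ : ContDiff ℝ (⊤ : ℕ∞) χ) :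
    Dl l α (T ξ x χ) = fun t => ∑ γ ∈ P α l, coef ξ α l γ • T ξ x (Dl l γ χ) t := by
  induction l with
  | nil =>
      have hP : P α ([] : List (Fin d)) = {fun _ => 0} := by
        ext γ
        simp [P, Fintype.mem_piFinset, Nat.lt_one_iff, funext_iff]
      funext t
      rw [hP, Finset.sum_singleton]
      simp [coef, Dl_nil]
  | cons i l ih =>
      rw [List.nodup_cons] at hl
      obtain ⟨hi, hl'⟩ := hl
      have h1 : Dl (i::l) α (T ξ x χ) = (pd i)^[α i] (Dl l α (T ξ x χ)) := rfl
      rw [h1, ih hl',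
        pd_iter_finset_sum (P α l) (fun γ => T ξ x (Dl l γ χ))
          (fun γ _ => T_smooth ξ x (Dl_smooth hχ l γ)) (coef ξ α l) i (α i)]
      funext t
      rw [reindex α i l hi (fun γ' => coef ξ α (i::l) γ' • T ξ x (Dl (i::l) γ' χ) t)]
      refine Finset.sum_congr rfl (fun γ hγ => ?_)
      rw [bin ξ x (Dl_smooth hχ l γ) i (α i)]
      dsimp only
      rw [Finset.smul_sum]
      refine Finset.sum_congr rfl (fun j hj => ?_)
      rw [smul_smul]
      have hcg : ∀ i' ∈ l, Function.update γ i j i' = γ i' := by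
        intro i' hi'
        have hne : i' ≠ i := by
          intro h
          rw [h] at hi'
          exact hi hi'
        exact Function.update_of_ne hne j γ
      have hD : Dl (i::l) (Function.update γ i j) χ = (pd i)^[j] (Dl l γ χ) := by
        rw [Dl_cons, Function.update_self, Dl_congr hcg χ]
      rw [hD]
      congr 1
      rw [coef, coef, List.toFinset_cons,
        Finset.prod_insert (by simp [List.mem_toFinset, hi]), Function.update_self]
      have hprod : ∀ i' ∈ l.toFinset,
          ((α i').choose (Function.update γ i j i') : ℂ)
            * (cc ξ i')^(α i' - Function.update γ i j i')
          = ((α i').choose (γ i') : ℂ) * (cc ξ i')^(α i' - γ i') := by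
        intro i' hi'
        rw [hcg i' (List.mem_toFinset.1 hi')]
      rw [Finset.prod_congr rfl hprod]
      ring


lemma coord_le_norm (i : Fin d) : |ξ i| ≤ ‖ξ‖ := by
  rw [EuclideanSpace.norm_eq]
  have h1 : |ξ i| = Real.sqrt (‖ξ i‖^2) := by
    rw [Real.sqrt_sq_eq_abs]
    simp
  rw [h1]
  apply Real.sqrt_le_sqrt
  exact Finset.single_le_sum (f := fun j => ‖ξ j‖^2) (fun j _ => by positivity) (Finset.mem_univ i)

lemma cc_norm (i : Fin d) : ‖cc ξ i‖ = 2 * Real.pi * |ξ i| := by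
  rw [cc, show (2:ℂ) * (Real.pi:ℂ) * Complex.I * (ξ i:ℂ)
      = ((2*Real.pi:ℝ):ℂ) * Complex.I * ((ξ i : ℝ):ℂ) by push_cast; ring]
  rw [norm_mul, norm_mul, Complex.norm_real, Complex.norm_I, Complex.norm_real]
  rw [Real.norm_eq_abs, Real.norm_eq_abs, abs_of_nonneg (by positivity : (0:ℝ) ≤ 2*Real.pi)]
  ring

lemma ee_continuous : Continuous (ee ξ) := (ee_smooth ξ).continuous

lemma integral_bound {χ : E → ℂ} (hχ : ContDiff ℝ (⊤ : ℕ∞) χ)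
    (hint : ∀ γ : Fin d → ℕ, Integrable (mderiv γ χ)) (α : Fin d → ℕ) :
    (∫ t, ‖mderiv α (T ξ x χ) t‖)
      ≤ ∑ γ ∈ P α (List.finRange d),
          ‖coef ξ α (List.finRange d) γ‖ * ∫ t, ‖mderiv γ χ t‖ := by
  have hexp := main ξ x α (List.finRange d) (List.nodup_finRange d) hχ
  rw [mderiv_eq_Dl, hexp]
  set s := P α (List.finRange d) with hs
  have hterm_norm : ∀ (γ : Fin d → ℕ) (t : E),
      ‖coef ξ α (List.finRange d) γ • T ξ x (Dl (List.finRange d) γ χ) t‖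
      = ‖coef ξ α (List.finRange d) γ‖ * ‖mderiv γ χ (t - x)‖ := by
    intro γ t
    rw [norm_smul, T, norm_mul, ee_norm, one_mul, mderiv_eq_Dl]
  have hint_tr : ∀ γ : Fin d → ℕ, Integrable (fun t => mderiv γ χ (t - x)) :=
    fun γ => (hint γ).comp_sub_right x
  have hterm_int : ∀ γ ∈ s,
      Integrable (fun t => coef ξ α (List.finRange d) γ • T ξ x (Dl (List.finRange d) γ χ) t) := by
    intro γ _
    have h1 : Integrable (fun t => ee ξ t * mderiv γ χ (t - x)) :=
      (hint_tr γ).bdd_mul (ee_continuous ξ).aestronglyMeasurable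
        (c := 1) (Filter.Eventually.of_forall fun t => le_of_eq (ee_norm ξ t))
    have h2 : (fun t => coef ξ α (List.finRange d) γ • T ξ x (Dl (List.finRange d) γ χ) t)
        = fun t => coef ξ α (List.finRange d) γ * (ee ξ t * mderiv γ χ (t - x)) := by
      funext t
      rw [T, mderiv_eq_Dl, smul_eq_mul]
    rw [h2]
    exact h1.const_mul _
  calc ∫ t, ‖∑ γ ∈ s, coef ξ α (List.finRange d) γ • T ξ x (Dl (List.finRange d) γ χ) t‖
      ≤ ∫ t, ∑ γ ∈ s, ‖coef ξ α (List.finRange d) γ • T ξ x (Dl (List.finRange d) γ χ) t‖ := by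
        apply integral_mono (Integrable.norm (integrable_finset_sum s hterm_int))
          (integrable_finset_sum s (fun γ hγ => (hterm_int γ hγ).norm))
        intro t
        exact norm_sum_le _ _
    _ = ∑ γ ∈ s, ∫ t, ‖coef ξ α (List.finRange d) γ • T ξ x (Dl (List.finRange d) γ χ) t‖ :=
        integral_finset_sum s (fun γ hγ => (hterm_int γ hγ).norm)
    _ = ∑ γ ∈ s, ‖coef ξ α (List.finRange d) γ‖ * ∫ t, ‖mderiv γ χ t‖ := by
        refine Finset.sum_congr rfl (fun γ _ => ?_)
        simp_rw [hterm_norm γ]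
        rw [integral_const_mul, integral_sub_right_eq_self (fun t => ‖mderiv γ χ t‖) x]

end MT

set_option maxHeartbeats 1000000 in
/-- For each `n` there are `k` and `C > 0` such that the modulated translates
`M_ξ T_x χ(t) = e^{2πiξ·t} χ(t−x)` satisfy
`‖M_ξT_xχ‖_{D_{L¹,ω,k}} ≤ C ‖χ‖_{D_{L¹,ω,n}} exp((1/n)ω(|ξ|))`. -/
theorem stmt6 (ω : ℝ → ℝ) (hω : IsWeightFunction ω) (d : ℕ) (n : ℕ) (hn : 0 < n) :
    ∃ k : ℕ, 0 < k ∧ ∃ C : ℝ, 0 < C ∧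
      ∀ χ : EuclideanSpace ℝ (Fin d) → ℂ, ContDiff ℝ (⊤ : ℕ∞) χ →
        (∀ α : Fin d → ℕ, Integrable (mderiv α χ)) →
        ∀ B : ℝ,
        -- `B` is a bound witnessing `‖χ‖_{D_{L¹,ω,n}} ≤ B`:
        (∀ α : Fin d → ℕ,
          (∫ t, ‖mderiv α χ t‖) * Real.exp (-(1 / (n : ℝ)) * youngConj ω ((n * ∑ i, α i : ℕ) : ℝ)) ≤ B) →
        ∀ (x ξ : EuclideanSpace ℝ (Fin d)) (α : Fin d → ℕ),
          (∫ t, ‖mderiv α (fun t => Complex.exp (2 * Real.pi * Complex.I * ∑ i, (ξ i : ℂ) * (t i : ℂ))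
              * χ (t - x)) t‖)
            * Real.exp (-(1 / (k : ℝ)) * youngConj ω ((k * ∑ i, α i : ℕ) : ℝ))
          ≤ C * B * Real.exp ((1 / (n : ℝ)) * ω ‖ξ‖) := by
  classical
  obtain ⟨K, hK1, D, hD0, hKD⟩ := YC.conj_step hω
  have hKpos : 0 < K := hK1
  refine ⟨K^3 * n, by positivity, Real.exp (3 * D), Real.exp_pos _, ?_⟩
  intro χ hχ hint B hB x ξ α
  set k : ℕ := K^3 * n with hkdef
  have hn' : (0:ℝ) < n := by exact_mod_cast hn
  have hn1 : (1:ℝ) ≤ n := by exact_mod_cast hn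
  have hK1' : (1:ℝ) ≤ K := by exact_mod_cast hK1
  have hkpos : 0 < k := by positivity
  have hk' : (0:ℝ) < k := by exact_mod_cast hkpos
  have hkcast : (k:ℝ) = (K:ℝ)^3 * n := by rw [hkdef]; push_cast; ring
  set m : ℕ := ∑ i, α i with hm
  have hfun : (fun t : EuclideanSpace ℝ (Fin d) =>
      Complex.exp (2 * Real.pi * Complex.I * ∑ i, (ξ i : ℂ) * (t i : ℂ)) * χ (t - x))
      = MT.T ξ x χ := by
    funext t
    rw [MT.T, MT.ee, MT.L_apply]
    congr 2
    rw [Finset.mul_sum]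
    exact Finset.sum_congr rfl (fun i _ => by rw [MT.cc]; ring)
  rw [hfun]
  have hB0 : 0 ≤ B :=
    le_trans (mul_nonneg (integral_nonneg (fun t => norm_nonneg _)) (Real.exp_nonneg _)) (hB 0)
  set s2 : ℝ := 2 * Real.pi * ‖ξ‖ with hs2
  have hs2nn : 0 ≤ s2 := by rw [hs2]; positivity
  set Eω : ℝ := Real.exp (1 / (n : ℝ) * ω ‖ξ‖) with hEω
  have hEωnn : (0:ℝ) ≤ Eω := le_of_lt (Real.exp_pos _)
  have hωnn : 0 ≤ ω ‖ξ‖ := hω.nonneg _ (norm_nonneg ξ)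
  have hPset : MT.P α (List.finRange d) = Fintype.piFinset (fun i => Finset.range (α i + 1)) := by
    simp [MT.P, List.mem_finRange]
  set Q : ℝ := 7^m * B * Real.exp ((1/(n:ℝ)) * youngConj ω ((n:ℝ) * m)) * Eω with hQ
  have hynm0 : 0 ≤ youngConj ω ((n:ℝ) * m) := YC.youngConj_nonneg hω (by positivity)
  have hQ0 : 0 ≤ Q := by rw [hQ]; positivity
  have key : ∀ γ ∈ Fintype.piFinset (fun i => Finset.range (α i + 1)),
      ‖MT.coef ξ α (List.finRange d) γ‖ * ∫ t, ‖mderiv γ χ t‖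
      ≤ (∏ i, ((α i).choose (γ i) : ℝ)) * Q := by
    intro γ hγ
    have hγle : ∀ i, γ i ≤ α i := by
      intro i
      have := (Fintype.mem_piFinset.1 hγ) i
      rw [Finset.mem_range] at this
      omega
    set p : ℕ := ∑ i, (α i - γ i) with hp
    have hpm : p + ∑ i, γ i = m := by
      rw [hp, hm, ← Finset.sum_add_distrib]
      exact Finset.sum_congr rfl (fun i _ => Nat.sub_add_cancel (hγle i))
    have hpmle : p ≤ m := by omega
    have hcm : (p:ℝ) + ((∑ i, γ i : ℕ):ℝ) = (m:ℝ) := by exact_mod_cast hpm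
    have hchoose0 : (0:ℝ) ≤ ∏ i, ((α i).choose (γ i) : ℝ) :=
      Finset.prod_nonneg (fun i _ => by positivity)
    -- coefficient bound
    have hcoef : ‖MT.coef ξ α (List.finRange d) γ‖
        ≤ (∏ i, ((α i).choose (γ i) : ℝ)) * s2 ^ p := by
      rw [MT.coef, List.toFinset_finRange, norm_prod]
      have hfac : ∀ i ∈ Finset.univ,
          ‖((α i).choose (γ i) : ℂ) * (MT.cc ξ i)^(α i - γ i)‖
          ≤ ((α i).choose (γ i) : ℝ) * s2 ^ (α i - γ i) := by
        intro i _
        rw [norm_mul, norm_pow, Complex.norm_natCast, MT.cc_norm]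
        refine mul_le_mul_of_nonneg_left (pow_le_pow_left₀ (by positivity) ?_ _) (by positivity)
        have h1 := MT.coord_le_norm ξ i
        rw [hs2]
        nlinarith [Real.pi_pos]
      calc ∏ i, ‖((α i).choose (γ i) : ℂ) * (MT.cc ξ i)^(α i - γ i)‖
          ≤ ∏ i, (((α i).choose (γ i) : ℝ) * s2 ^ (α i - γ i)) :=
            Finset.prod_le_prod (fun i _ => norm_nonneg _) hfac
        _ = (∏ i, ((α i).choose (γ i) : ℝ)) * ∏ i, s2 ^ (α i - γ i) :=
            Finset.prod_mul_distrib
        _ = (∏ i, ((α i).choose (γ i) : ℝ)) * s2 ^ p := by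
            rw [Finset.prod_pow_eq_pow_sum]
    -- L¹ bound
    have hL1 : (∫ t, ‖mderiv γ χ t‖)
        ≤ B * Real.exp ((1/(n:ℝ)) * youngConj ω ((n:ℝ) * ((∑ i, γ i : ℕ):ℝ))) := by
      have h := hB γ
      rw [show ((n * ∑ i, γ i : ℕ) : ℝ) = (n:ℝ) * ((∑ i, γ i : ℕ):ℝ) by push_cast; ring] at h
      have hid : (∫ t, ‖mderiv γ χ t‖)
          = ((∫ t, ‖mderiv γ χ t‖)
              * Real.exp (-(1/(n:ℝ)) * youngConj ω ((n:ℝ) * ((∑ i, γ i : ℕ):ℝ))))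
            * Real.exp ((1/(n:ℝ)) * youngConj ω ((n:ℝ) * ((∑ i, γ i : ℕ):ℝ))) := by
        rw [mul_assoc, ← Real.exp_add]
        norm_num
      rw [hid]
      exact mul_le_mul_of_nonneg_right h (Real.exp_nonneg _)
    -- power bound
    have hynp0 : 0 ≤ youngConj ω ((n:ℝ) * (p:ℝ)) := YC.youngConj_nonneg hω (by positivity)
    have hpow : s2 ^ p ≤ 7^m * Real.exp ((1/(n:ℝ)) * youngConj ω ((n:ℝ) * (p:ℝ)))
        * Real.exp ((1/(n:ℝ)) * ω ‖ξ‖) := by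
      have h7 : (2*Real.pi)^p ≤ (7:ℝ)^m := by
        calc (2*Real.pi)^p ≤ (7:ℝ)^p :=
              pow_le_pow_left₀ (by positivity) (by nlinarith [Real.pi_lt_d2]) p
          _ ≤ (7:ℝ)^m := pow_le_pow_right₀ (by norm_num) hpmle
      have hξp : ‖ξ‖^p ≤ Real.exp ((1/(n:ℝ)) * youngConj ω ((n:ℝ) * (p:ℝ)))
          * Real.exp ((1/(n:ℝ)) * ω ‖ξ‖) := by
        rcases le_or_gt 1 ‖ξ‖ with h1 | h1
        · have hy := YC.young hω (y := (n:ℝ)*(p:ℝ)) (by positivity) h1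
          have hlog : (p:ℝ) * Real.log ‖ξ‖
              ≤ (1/(n:ℝ)) * youngConj ω ((n:ℝ) * (p:ℝ)) + (1/(n:ℝ)) * ω ‖ξ‖ := by
            have h2 : (1/(n:ℝ)) * (((n:ℝ)*(p:ℝ)) * Real.log ‖ξ‖)
                ≤ (1/(n:ℝ)) * (youngConj ω ((n:ℝ)*(p:ℝ)) + ω ‖ξ‖) :=
              mul_le_mul_of_nonneg_left hy (by positivity)
            have h3 : (1/(n:ℝ)) * (((n:ℝ)*(p:ℝ)) * Real.log ‖ξ‖) = (p:ℝ) * Real.log ‖ξ‖ := by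
              field_simp
            rw [h3] at h2
            linarith [h2]
          calc ‖ξ‖^p = Real.exp ((p:ℝ) * Real.log ‖ξ‖) := by
                rw [← Real.log_pow, Real.exp_log (pow_pos (lt_of_lt_of_le one_pos h1) p)]
            _ ≤ Real.exp ((1/(n:ℝ)) * youngConj ω ((n:ℝ) * (p:ℝ)) + (1/(n:ℝ)) * ω ‖ξ‖) :=
                Real.exp_le_exp.2 hlog
            _ = _ := Real.exp_add _ _
        · have hle1 : ‖ξ‖^p ≤ 1 := pow_le_one₀ (norm_nonneg _) h1.le
          have he1 : (1:ℝ) ≤ Real.exp ((1/(n:ℝ)) * youngConj ω ((n:ℝ) * (p:ℝ))) :=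
            Real.one_le_exp (by positivity)
          have he2 : (1:ℝ) ≤ Real.exp ((1/(n:ℝ)) * ω ‖ξ‖) :=
            Real.one_le_exp (by positivity)
          nlinarith
      calc s2^p = (2*Real.pi)^p * ‖ξ‖^p := by rw [hs2, mul_pow]
        _ ≤ (7:ℝ)^m * (Real.exp ((1/(n:ℝ)) * youngConj ω ((n:ℝ) * (p:ℝ)))
              * Real.exp ((1/(n:ℝ)) * ω ‖ξ‖)) :=
            mul_le_mul h7 hξp (by positivity) (by positivity)
        _ = _ := by ring
    -- superadditivity
    have hsuper : youngConj ω ((n:ℝ) * (p:ℝ)) + youngConj ω ((n:ℝ) * ((∑ i, γ i : ℕ):ℝ))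
        ≤ youngConj ω ((n:ℝ) * m) := by
      have h := YC.superadd hω (a := (n:ℝ)*(p:ℝ)) (b := (n:ℝ)*((∑ i, γ i : ℕ):ℝ))
        (by positivity) (by positivity)
      rwa [show (n:ℝ)*(p:ℝ) + (n:ℝ)*((∑ i, γ i : ℕ):ℝ) = (n:ℝ) * m by rw [← hcm]; ring] at h
    -- combine
    have hIL0 : (0:ℝ) ≤ ∫ t, ‖mderiv γ χ t‖ := integral_nonneg (fun t => norm_nonneg _)
    have step1 : ‖MT.coef ξ α (List.finRange d) γ‖ * ∫ t, ‖mderiv γ χ t‖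
        ≤ ((∏ i, ((α i).choose (γ i) : ℝ)) * s2 ^ p)
          * (B * Real.exp ((1/(n:ℝ)) * youngConj ω ((n:ℝ) * ((∑ i, γ i : ℕ):ℝ)))) :=
      mul_le_mul hcoef hL1 hIL0 (by positivity)
    have h4 : Real.exp ((1/(n:ℝ)) * youngConj ω ((n:ℝ) * (p:ℝ)))
        * Real.exp ((1/(n:ℝ)) * youngConj ω ((n:ℝ) * ((∑ i, γ i : ℕ):ℝ)))
        ≤ Real.exp ((1/(n:ℝ)) * youngConj ω ((n:ℝ) * m)) := by
      rw [← Real.exp_add]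
      apply Real.exp_le_exp.2
      have h5 : (1/(n:ℝ)) * youngConj ω ((n:ℝ) * (p:ℝ))
          + (1/(n:ℝ)) * youngConj ω ((n:ℝ) * ((∑ i, γ i : ℕ):ℝ))
          = (1/(n:ℝ)) * (youngConj ω ((n:ℝ) * (p:ℝ))
            + youngConj ω ((n:ℝ) * ((∑ i, γ i : ℕ):ℝ))) := by ring
      rw [h5]
      exact mul_le_mul_of_nonneg_left hsuper (by positivity)
    have step2 : s2 ^ p * (B * Real.exp ((1/(n:ℝ)) * youngConj ω ((n:ℝ) * ((∑ i, γ i : ℕ):ℝ)))) ≤ Q := by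
      have h3 : s2 ^ p * (B * Real.exp ((1/(n:ℝ)) * youngConj ω ((n:ℝ) * ((∑ i, γ i : ℕ):ℝ))))
          ≤ (7^m * Real.exp ((1/(n:ℝ)) * youngConj ω ((n:ℝ) * (p:ℝ)))
              * Real.exp ((1/(n:ℝ)) * ω ‖ξ‖))
            * (B * Real.exp ((1/(n:ℝ)) * youngConj ω ((n:ℝ) * ((∑ i, γ i : ℕ):ℝ)))) :=
        mul_le_mul_of_nonneg_right hpow (by positivity)
      have h6 : (7^m * Real.exp ((1/(n:ℝ)) * youngConj ω ((n:ℝ) * (p:ℝ)))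
              * Real.exp ((1/(n:ℝ)) * ω ‖ξ‖))
            * (B * Real.exp ((1/(n:ℝ)) * youngConj ω ((n:ℝ) * ((∑ i, γ i : ℕ):ℝ))))
          = ((7:ℝ)^m * B) * (Real.exp ((1/(n:ℝ)) * youngConj ω ((n:ℝ) * (p:ℝ)))
              * Real.exp ((1/(n:ℝ)) * youngConj ω ((n:ℝ) * ((∑ i, γ i : ℕ):ℝ))))
            * Real.exp ((1/(n:ℝ)) * ω ‖ξ‖) := by ring
      rw [h6] at h3
      have h7 : ((7:ℝ)^m * B) * (Real.exp ((1/(n:ℝ)) * youngConj ω ((n:ℝ) * (p:ℝ)))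
              * Real.exp ((1/(n:ℝ)) * youngConj ω ((n:ℝ) * ((∑ i, γ i : ℕ):ℝ))))
            * Real.exp ((1/(n:ℝ)) * ω ‖ξ‖)
          ≤ ((7:ℝ)^m * B) * Real.exp ((1/(n:ℝ)) * youngConj ω ((n:ℝ) * m))
            * Real.exp ((1/(n:ℝ)) * ω ‖ξ‖) := by
        exact mul_le_mul_of_nonneg_right (mul_le_mul_of_nonneg_left h4 (by positivity))
          (Real.exp_nonneg _)
      refine le_trans h3 (le_trans h7 ?_)
      rw [hQ, hEω]
    calc ‖MT.coef ξ α (List.finRange d) γ‖ * ∫ t, ‖mderiv γ χ t‖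
        ≤ ((∏ i, ((α i).choose (γ i) : ℝ)) * s2 ^ p)
          * (B * Real.exp ((1/(n:ℝ)) * youngConj ω ((n:ℝ) * ((∑ i, γ i : ℕ):ℝ)))) := step1
      _ = (∏ i, ((α i).choose (γ i) : ℝ))
          * (s2 ^ p * (B * Real.exp ((1/(n:ℝ)) * youngConj ω ((n:ℝ) * ((∑ i, γ i : ℕ):ℝ))))) := by
          ring
      _ ≤ (∏ i, ((α i).choose (γ i) : ℝ)) * Q := mul_le_mul_of_nonneg_left step2 hchoose0
  -- sum the per-γ bounds
  have hIB := MT.integral_bound ξ x hχ hint α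
  rw [hPset] at hIB
  have hsum : ∑ γ ∈ Fintype.piFinset (fun i => Finset.range (α i + 1)),
      ∏ i, ((α i).choose (γ i) : ℝ) = 2^m := by
    rw [← Finset.prod_univ_sum (fun i => Finset.range (α i + 1))
      (fun i j => (((α i).choose j : ℕ) : ℝ))]
    have hrow : ∀ i : Fin d, ∑ j ∈ Finset.range (α i + 1), ((α i).choose j : ℝ) = 2^(α i) := by
      intro i
      rw [← Nat.cast_sum, Nat.sum_range_choose]
      push_cast
      ring
    rw [Finset.prod_congr rfl (fun i _ => hrow i), Finset.prod_pow_eq_pow_sum]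
  have htot : (∫ t, ‖mderiv α (MT.T ξ x χ) t‖) ≤ 2^m * Q := by
    refine le_trans hIB ?_
    calc ∑ γ ∈ Fintype.piFinset (fun i => Finset.range (α i + 1)),
          ‖MT.coef ξ α (List.finRange d) γ‖ * ∫ t, ‖mderiv γ χ t‖
        ≤ ∑ γ ∈ Fintype.piFinset (fun i => Finset.range (α i + 1)),
            (∏ i, ((α i).choose (γ i) : ℝ)) * Q := Finset.sum_le_sum key
      _ = (∑ γ ∈ Fintype.piFinset (fun i => Finset.range (α i + 1)),
            ∏ i, ((α i).choose (γ i) : ℝ)) * Q := by rw [← Finset.sum_mul]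
      _ = 2^m * Q := by rw [hsum]
  -- the final exponent juggling
  have hstep : ∀ r : ℝ, 1 ≤ r →
      (1/r) * youngConj ω (r*m) + m - D ≤ (1/((K:ℝ)*r)) * youngConj ω (((K:ℝ)*r)*m) := by
    intro r hr1
    have hr : (0:ℝ) < r := lt_of_lt_of_le one_pos hr1
    have hKr : (0:ℝ) < (K:ℝ)*r := by positivity
    have h := hKD (r*m) (by positivity)
    rw [show (K:ℝ)*(r*(m:ℝ)) = ((K:ℝ)*r)*m by ring] at h
    have e1 : (1/((K:ℝ)*r)) * ((K:ℝ)*youngConj ω (r*(m:ℝ)) + ((K:ℝ)*r)*(m:ℝ) - D)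
        ≤ (1/((K:ℝ)*r)) * youngConj ω (((K:ℝ)*r)*m) :=
      mul_le_mul_of_nonneg_left h (by positivity)
    have e2 : (1/((K:ℝ)*r)) * ((K:ℝ)*youngConj ω (r*(m:ℝ)) + ((K:ℝ)*r)*(m:ℝ) - D)
        = (1/r)*youngConj ω (r*(m:ℝ)) + m - D/((K:ℝ)*r) := by
      field_simp
    have e3 : D/((K:ℝ)*r) ≤ D := div_le_self hD0 (by nlinarith)
    rw [e2] at e1
    linarith
  have hKn : (1:ℝ) ≤ (K:ℝ)*(n:ℝ) := by nlinarith
  have hKKn : (1:ℝ) ≤ (K:ℝ)*((K:ℝ)*(n:ℝ)) := by nlinarith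
  have h1 := hstep (n:ℝ) hn1
  have h2 := hstep ((K:ℝ)*(n:ℝ)) hKn
  have h3 := hstep ((K:ℝ)*((K:ℝ)*(n:ℝ))) hKKn
  rw [show (K:ℝ)*((K:ℝ)*((K:ℝ)*(n:ℝ))) = (k:ℝ) by rw [hkcast]; ring] at h3
  have hchain : (1/(n:ℝ)) * youngConj ω ((n:ℝ)*m) + 3*m - 3*D
      ≤ (1/(k:ℝ)) * youngConj ω ((k:ℝ)*m) := by linarith
  -- finish
  have hcastk : ((k * ∑ i, α i : ℕ) : ℝ) = (k:ℝ) * (m:ℝ) := by rw [← hm]; push_cast; ring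
  rw [hcastk]
  have h14 : (14:ℝ) ≤ Real.exp 3 := by
    have he := Real.exp_one_gt_d9
    have h3e : Real.exp 3 = (Real.exp 1)^3 := by
      rw [← Real.exp_nat_mul]
      norm_num
    rw [h3e]
    calc (14:ℝ) ≤ (2.7182818283:ℝ)^3 := by norm_num
      _ ≤ (Real.exp 1)^3 := pow_le_pow_left₀ (by norm_num) he.le 3
  have h14m : (14:ℝ)^m ≤ Real.exp (3*(m:ℝ)) := by
    have hem : Real.exp (3*(m:ℝ)) = (Real.exp 3)^m := by
      rw [← Real.exp_nat_mul]
      ring_nf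
    rw [hem]
    exact pow_le_pow_left₀ (by norm_num) h14 m
  calc (∫ t, ‖mderiv α (MT.T ξ x χ) t‖) * Real.exp (-(1/(k:ℝ)) * youngConj ω ((k:ℝ)*(m:ℝ)))
      ≤ (2^m * Q) * Real.exp (-(1/(k:ℝ)) * youngConj ω ((k:ℝ)*(m:ℝ))) :=
        mul_le_mul_of_nonneg_right htot (Real.exp_nonneg _)
    _ = B * Eω * ((14:ℝ)^m * (Real.exp ((1/(n:ℝ)) * youngConj ω ((n:ℝ)*m))
          * Real.exp (-(1/(k:ℝ)) * youngConj ω ((k:ℝ)*(m:ℝ))))) := by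
        rw [hQ, show (2:ℝ)^m * ((7:ℝ)^m * B * Real.exp ((1/(n:ℝ)) * youngConj ω ((n:ℝ) * m)) * Eω)
              = ((2:ℝ)^m * (7:ℝ)^m) * B * Real.exp ((1/(n:ℝ)) * youngConj ω ((n:ℝ) * m)) * Eω
            from by ring, ← mul_pow]
        norm_num
        ring
    _ ≤ B * Eω * ((14:ℝ)^m * Real.exp (3*D - 3*(m:ℝ))) := by
        apply mul_le_mul_of_nonneg_left _ (by positivity)
        apply mul_le_mul_of_nonneg_left _ (by positivity)
        rw [← Real.exp_add]
        apply Real.exp_le_exp.2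
        linarith
    _ ≤ B * Eω * (Real.exp (3*(m:ℝ)) * Real.exp (3*D - 3*(m:ℝ))) := by
        apply mul_le_mul_of_nonneg_left _ (by positivity)
        exact mul_le_mul_of_nonneg_right h14m (Real.exp_nonneg _)
    _ = Real.exp (3*D) * B * Eω := by
        rw [← Real.exp_add]
        ring_nf
  
end
end

section
/- Let ω be a weight function and d ∈ ℤ₊. For every m ∈ ℤ₊ and every θ ∈ (0, 1/m) there exists k ≥ m such that ‖F‖_{C_{b,ω,m}} ≤ ‖F‖_{C_{b,ω,1}}^θ · ‖F‖_{C_{b,ω,k}}^{1−θ} for every continuous function F : ℝ^{2d} → ℂ with ‖F‖_{C_{b,ω,1}} < ∞ and ‖F‖_{C_{b,ω,k}} < ∞. In particular, the Fréchet space C_{b,{ω}}(ℝ^{2d}) of continuous F with all norms ‖F‖_{C_{b,ω,n}} finite satisfies the condition (DN̲). -/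
open Real Set MeasureTheory

noncomputable section

/-- The space `C_{b,{ω}}(ℝ^{2d})` satisfies the interpolation inequalities behind
`(DN̲)`: for every `m ∈ ℤ₊` and `θ ∈ (0, 1/m)` there is `k ≥ m` with
`‖F‖_{C_{b,ω,m}} ≤ ‖F‖_{C_{b,ω,1}}^θ ‖F‖_{C_{b,ω,k}}^{1−θ}`.
The norm inequality is expressed through arbitrary upper bounds `A`, `B` of the
corresponding sup-norms. -/
theorem stmt8 (ω : ℝ → ℝ) (hω : IsWeightFunction ω) (d : ℕ) (hd : 0 < d)
    (m : ℕ) (hm : 0 < m) (θ : ℝ) (hθ0 : 0 < θ) (hθ : θ < 1 / (m : ℝ)) :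
    ∃ k : ℕ, m ≤ k ∧
      ∀ F : EuclideanSpace ℝ (Fin d) × EuclideanSpace ℝ (Fin d) → ℂ,
        Continuous F →
        ∀ A B : ℝ,
        -- `A` is an upper bound for `‖F‖_{C_{b,ω,1}}`, `B` one for `‖F‖_{C_{b,ω,k}}`:
        (∀ x ξ : EuclideanSpace ℝ (Fin d), ‖F (x, ξ)‖ * Real.exp (-(1 / (1 : ℝ)) * ω ‖ξ‖) ≤ A) →
        (∀ x ξ : EuclideanSpace ℝ (Fin d), ‖F (x, ξ)‖ * Real.exp (-(1 / (k : ℝ)) * ω ‖ξ‖) ≤ B) →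
        ∀ x ξ : EuclideanSpace ℝ (Fin d),
          ‖F (x, ξ)‖ * Real.exp (-(1 / (m : ℝ)) * ω ‖ξ‖) ≤ A ^ θ * B ^ (1 - θ) := by
  have hm1 : (1 : ℝ) ≤ (m : ℝ) := by exact_mod_cast hm
  have hmpos : (0 : ℝ) < (m : ℝ) := by positivity
  have hθ1 : θ < 1 := lt_of_lt_of_le hθ (by rw [div_le_one hmpos]; exact hm1)
  have h1θ : 0 < 1 - θ := by linarith
  set δ : ℝ := 1 / (m : ℝ) - θ with hδdef
  have hδ : 0 < δ := by rw [hδdef]; linarith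
  refine ⟨max m ⌈(1 - θ) / δ⌉₊, le_max_left _ _, ?_⟩
  set k : ℕ := max m ⌈(1 - θ) / δ⌉₊ with hkdef
  have hkpos : (0 : ℝ) < (k : ℝ) := by
    have : 0 < k := lt_of_lt_of_le hm (le_max_left _ _)
    exact_mod_cast this
  have hkge : (1 - θ) / δ ≤ (k : ℝ) := by
    calc (1 - θ) / δ ≤ (⌈(1 - θ) / δ⌉₊ : ℝ) := Nat.le_ceil _
    _ ≤ (k : ℝ) := by exact_mod_cast Nat.le_max_right m _
  have hk : θ + (1 - θ) / (k : ℝ) ≤ 1 / (m : ℝ) := by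
    have h1 : (1 - θ) ≤ (k : ℝ) * δ := by
      rw [div_le_iff₀ hδ] at hkge; linarith
    have h2 : (1 - θ) / (k : ℝ) ≤ δ := by
      rw [div_le_iff₀ hkpos]
      calc 1 - θ ≤ (k : ℝ) * δ := h1
      _ = δ * (k : ℝ) := mul_comm _ _
    linarith [h2]
  intro F _ A B hA hB x ξ
  set t : ℝ := ‖F (x, ξ)‖ with htdef
  set w : ℝ := ω ‖ξ‖ with hwdef
  have hw : 0 ≤ w := hω.nonneg _ (norm_nonneg _)
  have ht0 : 0 ≤ t := norm_nonneg _
  have hA' : t * Real.exp (-w) ≤ A := by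
    have := hA x ξ; simpa using this
  have hB' : t * Real.exp (-(1 / (k : ℝ)) * w) ≤ B := hB x ξ
  have hA0 : 0 ≤ A := le_trans (by positivity) hA'
  have hB0 : 0 ≤ B := le_trans (by positivity) hB'
  rcases eq_or_lt_of_le ht0 with h0 | htpos
  · rw [← h0]
    simpa using mul_nonneg (Real.rpow_nonneg hA0 θ) (Real.rpow_nonneg hB0 (1 - θ))
  · have key : (t * Real.exp (-w)) ^ θ * (t * Real.exp (-(1 / (k : ℝ)) * w)) ^ (1 - θ)
        = t * Real.exp (-(θ + (1 - θ) / (k : ℝ)) * w) := by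
      rw [Real.mul_rpow ht0 (Real.exp_nonneg _), Real.mul_rpow ht0 (Real.exp_nonneg _),
        ← Real.exp_mul, ← Real.exp_mul, mul_mul_mul_comm,
        ← Real.rpow_add htpos, ← Real.exp_add]
      have e1 : θ + (1 - θ) = 1 := by ring
      rw [e1, Real.rpow_one]
      congr 1
      ring
    calc t * Real.exp (-(1 / (m : ℝ)) * w)
        ≤ t * Real.exp (-(θ + (1 - θ) / (k : ℝ)) * w) := by
          apply mul_le_mul_of_nonneg_left _ ht0
          apply Real.exp_le_exp.mpr
          nlinarith [hk, hw]
      _ = (t * Real.exp (-w)) ^ θ * (t * Real.exp (-(1 / (k : ℝ)) * w)) ^ (1 - θ) := key.symm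
      _ ≤ A ^ θ * B ^ (1 - θ) := by
          apply mul_le_mul
          · exact Real.rpow_le_rpow (by positivity) hA' hθ0.le
          · exact Real.rpow_le_rpow (by positivity) hB' h1θ.le
          · positivity
          · exact Real.rpow_nonneg hA0 θ

end
end

section
/- Let ω be a weight function and K ⊂ ℝᵈ a compact set. For each n ∈ ℤ₊ there exist m ∈ ℤ₊ and C > 0 such that ‖φ₁φ₂‖_{E_{ω,m}(K)} ≤ C ‖φ₁‖_{E_{ω,n}(K)} ‖φ₂‖_{E_{ω,n}(K)} for all smooth functions φ₁, φ₂ on a neighbourhood of K with finite ‖·‖_{E_{ω,n}(K)} norms. -/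
open Real Set MeasureTheory

noncomputable section

namespace Stmt12Aux

abbrev Euc (d : ℕ) := EuclideanSpace ℝ (Fin d)

section Weight

variable {ω : ℝ → ℝ} (hω : IsWeightFunction ω)
include hω

lemma psi_nonneg (x : ℝ) : 0 ≤ ω (Real.exp x) := hω.nonneg _ (Real.exp_pos x).le

lemma psi_mono {x₁ x₂ : ℝ} (h : x₁ ≤ x₂) : ω (Real.exp x₁) ≤ ω (Real.exp x₂) :=
  hω.mono (Real.exp_pos x₁).le (Real.exp_pos x₂).le (Real.exp_le_exp.2 h)

omit hω in
lemma yc_set_nonempty (y : ℝ) :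
    {z : ℝ | ∃ x : ℝ, 0 ≤ x ∧ z = x * y - ω (Real.exp x)}.Nonempty :=
  ⟨0 * y - ω (Real.exp 0), 0, le_rfl, rfl⟩

lemma yc_bddAbove {y : ℝ} (hy : 0 ≤ y) :
    BddAbove {z : ℝ | ∃ x : ℝ, 0 ≤ x ∧ z = x * y - ω (Real.exp x)} := by
  obtain ⟨t₀, ht₀⟩ := hω.gamma (1 / (y + 1)) (by positivity)
  set b : ℝ := max (Real.log (max t₀ 1)) 0 with hb
  have hb0 : 0 ≤ b := le_max_right _ _
  refine ⟨b * y, ?_⟩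
  rintro z ⟨x, hx, rfl⟩
  rcases le_total x b with hxb | hxb
  · have := psi_nonneg hω x
    nlinarith
  · have hexp : t₀ ≤ Real.exp x := by
      calc t₀ ≤ max t₀ 1 := le_max_left _ _
        _ = Real.exp (Real.log (max t₀ 1)) := (Real.exp_log (by positivity)).symm
        _ ≤ Real.exp x := Real.exp_le_exp.2 (le_trans (le_max_left _ _) hxb)
    have hlog := ht₀ _ hexp
    rw [Real.log_exp] at hlog
    have hpsi : (y + 1) * x ≤ ω (Real.exp x) := by
      rw [div_mul_eq_mul_div, le_div_iff₀ (by positivity)] at hlog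
      nlinarith
    nlinarith

lemma yc_elem_le {y x : ℝ} (hy : 0 ≤ y) (hx : 0 ≤ x) :
    x * y - ω (Real.exp x) ≤ youngConj ω y :=
  le_csSup (yc_bddAbove hω hy) ⟨x, hx, rfl⟩

lemma yc_le {y B : ℝ}
    (h : ∀ x : ℝ, 0 ≤ x → x * y - ω (Real.exp x) ≤ B) : youngConj ω y ≤ B :=
  csSup_le (yc_set_nonempty _) (by rintro z ⟨x, hx, rfl⟩; exact h x hx)

lemma yc_superadd {a b : ℝ} (ha : 0 ≤ a) (hb : 0 ≤ b) :
    youngConj ω a + youngConj ω b ≤ youngConj ω (a + b) := by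
  have h1 : youngConj ω a ≤ youngConj ω (a + b) - youngConj ω b := by
    refine yc_le hω fun x₁ hx₁ => ?_
    have h2 : youngConj ω b ≤ youngConj ω (a + b) - (x₁ * a - ω (Real.exp x₁)) := by
      refine yc_le hω fun x₂ hx₂ => ?_
      set x := max x₁ x₂ with hx
      have hx0 : 0 ≤ x := le_trans hx₁ (le_max_left _ _)
      have key : x₁ * a - ω (Real.exp x₁) + (x₂ * b - ω (Real.exp x₂))
          ≤ x * (a + b) - ω (Real.exp x) := by
        have h3 : ω (Real.exp x) ≤ ω (Real.exp x₁) + ω (Real.exp x₂) := by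
          rcases max_cases x₁ x₂ with ⟨hm, _⟩ | ⟨hm, _⟩ <;> rw [hx, hm]
          · nlinarith [psi_nonneg hω x₂]
          · nlinarith [psi_nonneg hω x₁]
        have h4 : x₁ * a ≤ x * a := mul_le_mul_of_nonneg_right (le_max_left _ _) ha
        have h5 : x₂ * b ≤ x * b := mul_le_mul_of_nonneg_right (le_max_right _ _) hb
        nlinarith
      have := yc_elem_le hω (by linarith : (0:ℝ) ≤ a + b) hx0
      linarith
    linarith
  linarith

lemma yc_scale {s t y : ℝ} (hs : 0 < s) (hst : s ≤ t) (hy : 0 ≤ y) :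
    (1 / s) * youngConj ω (s * y) ≤ (1 / t) * youngConj ω (t * y) := by
  have ht : 0 < t := lt_of_lt_of_le hs hst
  have key : youngConj ω (s * y) ≤ (s / t) * youngConj ω (t * y) := by
    refine yc_le hω fun x hx => ?_
    have h1 : x * (t * y) - ω (Real.exp x) ≤ youngConj ω (t * y) :=
      yc_elem_le hω (by positivity) hx
    have h2 : x * (s * y) - ω (Real.exp x) ≤ (s / t) * (x * (t * y) - ω (Real.exp x)) := by
      have hst' : s / t ≤ 1 := (div_le_one ht).2 hst
      have hpn := psi_nonneg hω x
      have : x * (s * y) = (s / t) * (x * (t * y)) := by field_simp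
      nlinarith
    calc x * (s * y) - ω (Real.exp x) ≤ (s / t) * (x * (t * y) - ω (Real.exp x)) := h2
      _ ≤ (s / t) * youngConj ω (t * y) := mul_le_mul_of_nonneg_left h1 (by positivity)
  calc (1 / s) * youngConj ω (s * y) ≤ (1 / s) * ((s / t) * youngConj ω (t * y)) :=
        mul_le_mul_of_nonneg_left key (by positivity)
    _ = (1 / t) * youngConj ω (t * y) := by field_simp

/-- From condition (α): `ψ(x + log 2) ≤ L ψ(x) + M`. -/
lemma psi_shift : ∃ L M : ℝ, 1 ≤ L ∧ 0 ≤ M ∧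
    ∀ x : ℝ, 0 ≤ x → ω (Real.exp (x + Real.log 2)) ≤ L * ω (Real.exp x) + M := by
  obtain ⟨C, hC, t₀, hα⟩ := hω.alpha
  set L := max C 1 with hL
  set b : ℝ := max (Real.log (max t₀ 1)) 0 with hb
  have hb0 : 0 ≤ b := le_max_right _ _
  refine ⟨L, ω (Real.exp (b + Real.log 2)), le_max_right _ _, psi_nonneg hω _, fun x hx => ?_⟩
  rcases le_total x b with hxb | hxb
  · have h1 : ω (Real.exp (x + Real.log 2)) ≤ ω (Real.exp (b + Real.log 2)) :=
      psi_mono hω (by linarith)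
    have h2 : 0 ≤ L * ω (Real.exp x) := by
      have := psi_nonneg hω x
      have : (0:ℝ) ≤ L := by positivity
      nlinarith [psi_nonneg hω x]
    linarith
  · have hexp : t₀ ≤ Real.exp x := by
      calc t₀ ≤ max t₀ 1 := le_max_left _ _
        _ = Real.exp (Real.log (max t₀ 1)) := (Real.exp_log (by positivity)).symm
        _ ≤ Real.exp x := Real.exp_le_exp.2 (le_trans (le_max_left _ _) hxb)
    have h1 : Real.exp (x + Real.log 2) = 2 * Real.exp x := by
      rw [Real.exp_add, Real.exp_log two_pos]; ring
    rw [h1]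
    have h2 := hα _ hexp
    have h3 : C * ω (Real.exp x) ≤ L * ω (Real.exp x) :=
      mul_le_mul_of_nonneg_right (le_max_left _ _) (psi_nonneg hω x)
    have := psi_nonneg hω (b + Real.log 2)
    linarith

lemma yc_double {L M y : ℝ} (hL : 1 ≤ L) (hM : 0 ≤ M)
    (hshift : ∀ x : ℝ, 0 ≤ x → ω (Real.exp (x + Real.log 2)) ≤ L * ω (Real.exp x) + M)
    (hy : 0 ≤ y) :
    youngConj ω y + y * Real.log 2 ≤ (1 / L) * youngConj ω (L * y) + M / L := by
  have hL0 : (0:ℝ) < L := by linarith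
  have key : youngConj ω y ≤ (1 / L) * youngConj ω (L * y) + M / L - y * Real.log 2 := by
    refine yc_le hω fun x hx => ?_
    have hlog2 : (0:ℝ) ≤ Real.log 2 := Real.log_nonneg one_le_two
    have helem : (x + Real.log 2) * (L * y) - ω (Real.exp (x + Real.log 2))
        ≤ youngConj ω (L * y) := yc_elem_le hω (by positivity) (by linarith)
    have hsh := hshift x hx
    -- L*(x*y - ψ x) + L*y*log 2 - M ≤ (x+log2)*(L*y) - ψ(x+log2)
    have h2 : L * (x * y - ω (Real.exp x)) + L * y * Real.log 2 - M
        ≤ (x + Real.log 2) * (L * y) - ω (Real.exp (x + Real.log 2)) := by nlinarith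
    have h3 : L * (x * y - ω (Real.exp x)) + L * y * Real.log 2 - M ≤ youngConj ω (L * y) :=
      le_trans h2 helem
    have h4 := (div_le_div_iff_of_pos_right hL0).2 h3
    have h5 : (L * (x * y - ω (Real.exp x)) + L * y * Real.log 2 - M) / L
        = x * y - ω (Real.exp x) + y * Real.log 2 - M / L := by field_simp
    rw [h5] at h4
    have h6 : youngConj ω (L * y) / L = 1 / L * youngConj ω (L * y) := by ring
    linarith
  linarith

end Weight

section Deriv

variable {d : ℕ}



/-- `mderiv` generalized to an arbitrary list of coordinates. -/
noncomputable def md (L : List (Fin d)) (α : Fin d → ℕ) (f : Euc d → ℂ) : Euc d → ℂ :=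
  (L.foldr (fun i g => (pd i)^[α i] ∘ g) id) f

lemma mderiv_eq_md (α : Fin d → ℕ) (f : Euc d → ℂ) : mderiv α f = md (List.finRange d) α f := rfl

lemma md_cons (i : Fin d) (L : List (Fin d)) (α : Fin d → ℕ) (f : Euc d → ℂ) :
    md (i :: L) α f = (pd i)^[α i] (md L α f) := rfl

section congr

variable {U : Set (Euc d)} (hU : IsOpen U) {α : Fin d → ℕ}
include hU

lemma pd_congr {f g : Euc d → ℂ} (h : ∀ y ∈ U, f y = g y) (i : Fin d) :
    ∀ x ∈ U, pd i f x = pd i g x := by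
  intro x hx
  have heq : f =ᶠ[nhds x] g := Filter.eventuallyEq_of_mem (hU.mem_nhds hx) h
  simp only [pd, heq.fderiv_eq]

lemma pd_iter_congr {f g : Euc d → ℂ} (h : ∀ y ∈ U, f y = g y) (i : Fin d) (k : ℕ) :
    ∀ x ∈ U, (pd i)^[k] f x = (pd i)^[k] g x := by
  induction k generalizing f g with
  | zero => simpa using h
  | succ k IH =>
    intro x hx
    rw [Function.iterate_succ_apply, Function.iterate_succ_apply]
    exact IH (pd_congr hU h i) x hx

end congr

lemma md_exp_congr {α α' : Fin d → ℕ} (L : List (Fin d)) (h : ∀ i ∈ L, α i = α' i)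
    (f : Euc d → ℂ) : md L α f = md L α' f := by
  induction L with
  | nil => rfl
  | cons i L IH =>
    rw [md_cons, md_cons, h i List.mem_cons_self,
      IH (fun j hj => h j (List.mem_cons_of_mem i hj))]

section smooth

variable {U : Set (Euc d)} (hU : IsOpen U)
include hU

lemma pd_smooth {f : Euc d → ℂ} (hf : ContDiffOn ℝ (⊤ : ℕ∞) f U) (i : Fin d) :
    ContDiffOn ℝ (⊤ : ℕ∞) (pd i f) U :=
  (hf.fderiv_of_isOpen (m := (⊤ : ℕ∞)) hU (by simp)).clm_apply contDiffOn_const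

lemma pd_iter_smooth {f : Euc d → ℂ} (hf : ContDiffOn ℝ (⊤ : ℕ∞) f U) (i : Fin d) (k : ℕ) :
    ContDiffOn ℝ (⊤ : ℕ∞) ((pd i)^[k] f) U := by
  induction k generalizing f with
  | zero => simpa using hf
  | succ k IH =>
    rw [Function.iterate_succ_apply]
    exact IH (pd_smooth hU hf i)

lemma md_smooth {f : Euc d → ℂ} (hf : ContDiffOn ℝ (⊤ : ℕ∞) f U) (L : List (Fin d)) (α : Fin d → ℕ) :
    ContDiffOn ℝ (⊤ : ℕ∞) (md L α f) U := by
  induction L generalizing f with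
  | nil => exact hf
  | cons i L IH => exact pd_iter_smooth hU (IH hf) i (α i)

lemma mderiv_smooth {f : Euc d → ℂ} (hf : ContDiffOn ℝ (⊤ : ℕ∞) f U) (α : Fin d → ℕ) :
    ContDiffOn ℝ (⊤ : ℕ∞) (mderiv α f) U :=
  md_smooth hU hf _ α

lemma smooth_diffAt {f : Euc d → ℂ} (hf : ContDiffOn ℝ (⊤ : ℕ∞) f U) {x : Euc d} (hx : x ∈ U) :
    DifferentiableAt ℝ f x :=
  ((hf x hx).contDiffAt (hU.mem_nhds hx)).differentiableAt (by simp)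

end smooth

section comm

variable {U : Set (Euc d)} (hU : IsOpen U)
include hU

lemma pd_comm {f : Euc d → ℂ} (hf : ContDiffOn ℝ (⊤ : ℕ∞) f U) (i j : Fin d) :
    ∀ x ∈ U, pd i (pd j f) x = pd j (pd i f) x := by
  intro x hx
  have hsymm : IsSymmSndFDerivAt ℝ f x :=
    ((hf x hx).contDiffAt (hU.mem_nhds hx)).isSymmSndFDerivAt (by rw [minSmoothness_of_isRCLikeNormedField]; exact WithTop.coe_le_coe.2 (le_top : (2:ℕ∞) ≤ ⊤))
  have hdf : DifferentiableAt ℝ (fderiv ℝ f) x :=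
    (((hf.fderiv_of_isOpen (m := (⊤ : ℕ∞)) hU (by simp)) x hx).contDiffAt (hU.mem_nhds hx)).differentiableAt (by simp)
  have calc1 : ∀ v w : Euc d, fderiv ℝ (fun y => fderiv ℝ f y w) x v
      = fderiv ℝ (fderiv ℝ f) x v w := by
    intro v w
    have h : fderiv ℝ (fun y => fderiv ℝ f y w) x
        = (fderiv ℝ f x).comp (fderiv ℝ (fun _ : Euc d => w) x)
          + (fderiv ℝ (fderiv ℝ f) x).flip w :=
      fderiv_clm_apply hdf (differentiableAt_const w)
    rw [h]
    simp
  show fderiv ℝ (fun y => fderiv ℝ f y (EuclideanSpace.single j 1)) x (EuclideanSpace.single i 1)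
      = fderiv ℝ (fun y => fderiv ℝ f y (EuclideanSpace.single i 1)) x (EuclideanSpace.single j 1)
  rw [calc1, calc1, hsymm]

lemma pd_iter_comm {f : Euc d → ℂ} (hf : ContDiffOn ℝ (⊤ : ℕ∞) f U) (i j : Fin d) (k : ℕ) :
    ∀ x ∈ U, (pd j)^[k] (pd i f) x = pd i ((pd j)^[k] f) x := by
  induction k generalizing f with
  | zero => simp
  | succ k IH =>
    intro x hx
    rw [Function.iterate_succ_apply, Function.iterate_succ_apply]
    calc (pd j)^[k] (pd j (pd i f)) x = (pd j)^[k] (pd i (pd j f)) x :=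
          pd_iter_congr hU (fun y hy => pd_comm hU hf j i y hy) j k x hx
      _ = pd i ((pd j)^[k] (pd j f)) x := IH (pd_smooth hU hf j) x hx

lemma md_succ {f : Euc d → ℂ} (hf : ContDiffOn ℝ (⊤ : ℕ∞) f U) (i : Fin d) :
    ∀ (L : List (Fin d)), L.Nodup → i ∈ L → ∀ (α : Fin d → ℕ), ∀ x ∈ U,
      md L (Function.update α i (α i + 1)) f x = pd i (md L α f) x := by
  intro L
  induction L with
  | nil => intro _ h; exact absurd h List.not_mem_nil
  | cons j L IH =>
    intro hnd hmem α x hx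
    rcases List.nodup_cons.1 hnd with ⟨hjL, hndL⟩
    by_cases hij : i = j
    · subst hij
      have hL : md L (Function.update α i (α i + 1)) f = md L α f :=
        md_exp_congr L (fun k hk => Function.update_of_ne (fun h : k = i => hjL (by rw [← h]; exact hk)) _ _) f
      rw [md_cons, md_cons, hL, Function.update_self, Function.iterate_succ_apply']
    · have hiL : i ∈ L := by
        rcases List.mem_cons.1 hmem with h | h
        · exact absurd h hij
        · exact h
      rw [md_cons, md_cons, Function.update_of_ne (fun h : j = i => hij h.symm) _ _]
      calc (pd j)^[α j] (md L (Function.update α i (α i + 1)) f) x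
          = (pd j)^[α j] (pd i (md L α f)) x :=
            pd_iter_congr hU (fun y hy => IH hndL hiL α y hy) j (α j) x hx
        _ = pd i ((pd j)^[α j] (md L α f)) x :=
            pd_iter_comm hU (md_smooth hU hf L α) i j (α j) x hx

lemma mderiv_succ {f : Euc d → ℂ} (hf : ContDiffOn ℝ (⊤ : ℕ∞) f U) (i : Fin d) (α : Fin d → ℕ)
    {x : Euc d} (hx : x ∈ U) :
    mderiv (Function.update α i (α i + 1)) f x = pd i (mderiv α f) x := by
  rw [mderiv_eq_md, mderiv_eq_md]
  exact md_succ hU hf i (List.finRange d) (List.nodup_finRange d) (List.mem_finRange i) α x hx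

end comm

lemma mderiv_zero (f : Euc d → ℂ) : mderiv (fun _ => 0) f = f := by
  rw [mderiv_eq_md]
  induction List.finRange d with
  | nil => rfl
  | cons i L IH => rw [md_cons, IH]; rfl

lemma pd_mul {f g : Euc d → ℂ} {x : Euc d} (hf : DifferentiableAt ℝ f x)
    (hg : DifferentiableAt ℝ g x) (i : Fin d) :
    pd i (fun y => f y * g y) x = pd i f x * g x + f x * pd i g x := by
  show fderiv ℝ (fun y => f y * g y) x (EuclideanSpace.single i 1) = _
  rw [fderiv_fun_mul hf hg]
  simp [pd, smul_eq_mul]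
  ring

lemma pd_msum {ι : Type*} (S : Multiset ι) (F : ι → Euc d → ℂ) {x : Euc d}
    (hF : ∀ p ∈ S, DifferentiableAt ℝ (F p) x) (i : Fin d) :
    DifferentiableAt ℝ (fun y => (S.map (fun p => F p y)).sum) x ∧
    pd i (fun y => (S.map (fun p => F p y)).sum) x = (S.map (fun p => pd i (F p) x)).sum := by
  induction S using Multiset.induction_on with
  | empty => simp [pd]
  | cons p s IH =>
    have hp : DifferentiableAt ℝ (F p) x := hF p (Multiset.mem_cons_self p s)
    obtain ⟨hd, hs⟩ := IH (fun q hq => hF q (Multiset.mem_cons_of_mem hq))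
    constructor
    · simp only [Multiset.map_cons, Multiset.sum_cons]; exact hp.add hd
    · simp only [Multiset.map_cons, Multiset.sum_cons]
      have : pd i (fun y => F p y + (s.map (fun q => F q y)).sum) x
          = pd i (F p) x + pd i (fun y => (s.map (fun q => F q y)).sum) x := by
        show fderiv ℝ _ x _ = _
        rw [fderiv_fun_add hp hd]
        rfl
      rw [this, hs]


lemma rep {U : Set (Euc d)} (hU : IsOpen U) {f g : Euc d → ℂ}
    (hf : ContDiffOn ℝ (⊤ : ℕ∞) f U) (hg : ContDiffOn ℝ (⊤ : ℕ∞) g U) :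
    ∀ (N : ℕ) (δ : Fin d → ℕ), (∑ i, δ i) = N →
    ∃ S : Multiset ((Fin d → ℕ) × (Fin d → ℕ)),
      Multiset.card S = 2 ^ N ∧ (∀ p ∈ S, p.1 + p.2 = δ) ∧
      ∀ x ∈ U, mderiv δ (fun y => f y * g y) x
        = (S.map (fun p => mderiv p.1 f x * mderiv p.2 g x)).sum := by
  intro N
  induction N with
  | zero =>
    intro δ hδ
    have hδ0 : δ = fun _ => 0 := by
      funext i
      exact Finset.sum_eq_zero_iff.1 hδ i (Finset.mem_univ i)
    refine ⟨{((fun _ => 0 : Fin d → ℕ), (fun _ => 0 : Fin d → ℕ))}, by simp, ?_, ?_⟩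
    · intro p hp
      rw [Multiset.mem_singleton] at hp
      subst hp
      funext i
      simp [hδ0]
    · intro x hx
      rw [hδ0]
      simp [mderiv_zero]
  | succ N IH =>
    intro δ hδ
    have hex : ∃ i, δ i ≠ 0 := by
      by_contra h
      push_neg at h
      simp [h] at hδ
    obtain ⟨i, hi⟩ := hex
    set δ' := Function.update δ i (δ i - 1) with hδ'def
    have hup : Function.update δ' i (δ' i + 1) = δ := by
      funext j
      by_cases hj : j = i
      · subst hj
        simp only [hδ'def, Function.update_self]
        omega
      · simp only [Function.update_of_ne hj, hδ'def]
    have hsum' : ∑ j, δ' j = N := by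
      have h1 : ∑ j, δ j = δ i + ∑ j ∈ Finset.univ.erase i, δ j :=
        (Finset.add_sum_erase _ _ (Finset.mem_univ i)).symm
      have h2 : ∑ j, δ' j = δ' i + ∑ j ∈ Finset.univ.erase i, δ' j :=
        (Finset.add_sum_erase _ _ (Finset.mem_univ i)).symm
      have h3 : ∑ j ∈ Finset.univ.erase i, δ' j = ∑ j ∈ Finset.univ.erase i, δ j :=
        Finset.sum_congr rfl fun j hj =>
          Function.update_of_ne (Finset.mem_erase.1 hj).1 _ _
      have h4 : δ' i = δ i - 1 := Function.update_self _ _ _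
      omega
    obtain ⟨S', hcard, hadd, hform⟩ := IH δ' hsum'
    refine ⟨S'.map (fun p => (Function.update p.1 i (p.1 i + 1), p.2))
      + S'.map (fun p => (p.1, Function.update p.2 i (p.2 i + 1))), ?_, ?_, ?_⟩
    · simp only [Multiset.card_add, Multiset.card_map, hcard]
      omega
    · rintro p hp
      rcases Multiset.mem_add.1 hp with hp | hp <;>
        obtain ⟨q, hq, rfl⟩ := Multiset.mem_map.1 hp <;>
        (have hq' := congrFun (hadd q hq)) <;>
        funext l <;> by_cases hl : l = i
      · subst hl
        have := hq' l
        simp only [Pi.add_apply, Function.update_self] at this ⊢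
        rw [← hup]
        simp only [Function.update_self]
        omega
      · have := hq' l
        simp only [Pi.add_apply, Function.update_of_ne hl] at this ⊢
        rw [← hup]
        simp only [Function.update_of_ne hl]
        omega
      · subst hl
        have := hq' l
        simp only [Pi.add_apply, Function.update_self] at this ⊢
        rw [← hup]
        simp only [Function.update_self]
        omega
      · have := hq' l
        simp only [Pi.add_apply, Function.update_of_ne hl] at this ⊢
        rw [← hup]
        simp only [Function.update_of_ne hl]
        omega
    · intro x hx
      have hmul : ContDiffOn ℝ (⊤ : ℕ∞) (fun y => f y * g y) U := hf.mul hg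
      have step1 : mderiv δ (fun y => f y * g y) x
          = pd i (mderiv δ' (fun y => f y * g y)) x := by
        conv_lhs => rw [← hup]
        exact mderiv_succ hU hmul i δ' hx
      have step2 : pd i (mderiv δ' (fun y => f y * g y)) x
          = pd i (fun y => (S'.map (fun p => mderiv p.1 f y * mderiv p.2 g y)).sum) x :=
        pd_congr hU (fun y hy => hform y hy) i x hx
      have hdiffterm : ∀ p ∈ S',
          DifferentiableAt ℝ (fun y => mderiv p.1 f y * mderiv p.2 g y) x := fun p _ =>
        (smooth_diffAt hU (mderiv_smooth hU hf p.1) hx).mul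
          (smooth_diffAt hU (mderiv_smooth hU hg p.2) hx)
      have step3 := (pd_msum S' (fun p y => mderiv p.1 f y * mderiv p.2 g y) hdiffterm i).2
      have hterm : ∀ p ∈ S', pd i (fun y => mderiv p.1 f y * mderiv p.2 g y) x
          = mderiv (Function.update p.1 i (p.1 i + 1)) f x * mderiv p.2 g x
            + mderiv p.1 f x * mderiv (Function.update p.2 i (p.2 i + 1)) g x := by
        intro p _
        rw [pd_mul (smooth_diffAt hU (mderiv_smooth hU hf p.1) hx)
          (smooth_diffAt hU (mderiv_smooth hU hg p.2) hx) i,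
          ← mderiv_succ hU hf i p.1 hx, ← mderiv_succ hU hg i p.2 hx]
      rw [step1, step2, step3, Multiset.map_congr rfl hterm, Multiset.sum_map_add,
        Multiset.map_add, Multiset.sum_add, Multiset.map_map, Multiset.map_map]
      rfl


end Deriv

end Stmt12Aux

set_option maxHeartbeats 1000000 in
/-- The `E_{ω,·}(K)` norms are submultiplicative up to a loss in the index: for
each `n` there are `m` and `C > 0` with
`‖φ₁φ₂‖_{E_{ω,m}(K)} ≤ C ‖φ₁‖_{E_{ω,n}(K)} ‖φ₂‖_{E_{ω,n}(K)}`. -/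
theorem stmt12 (ω : ℝ → ℝ) (hω : IsWeightFunction ω) (d : ℕ)
    (K : Set (EuclideanSpace ℝ (Fin d))) (hK : IsCompact K) (n : ℕ) (hn : 0 < n) :
    ∃ m : ℕ, 0 < m ∧ ∃ C : ℝ, 0 < C ∧
      ∀ (φ₁ φ₂ : EuclideanSpace ℝ (Fin d) → ℂ) (U : Set (EuclideanSpace ℝ (Fin d))),
        IsOpen U → K ⊆ U → ContDiffOn ℝ (⊤ : ℕ∞) φ₁ U → ContDiffOn ℝ (⊤ : ℕ∞) φ₂ U →
        ∀ B₁ B₂ : ℝ,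
        -- `B₁`, `B₂` are bounds witnessing `‖φᵢ‖_{E_{ω,n}(K)} ≤ Bᵢ`:
        (∀ α : Fin d → ℕ, ∀ x ∈ K,
          ‖mderiv α φ₁ x‖ ≤ B₁ * Real.exp ((1 / (n : ℝ)) * youngConj ω ((n * ∑ i, α i : ℕ) : ℝ))) →
        (∀ α : Fin d → ℕ, ∀ x ∈ K,
          ‖mderiv α φ₂ x‖ ≤ B₂ * Real.exp ((1 / (n : ℝ)) * youngConj ω ((n * ∑ i, α i : ℕ) : ℝ))) →
        ∀ α : Fin d → ℕ, ∀ x ∈ K,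
          ‖mderiv α (fun y => φ₁ y * φ₂ y) x‖ ≤
            C * B₁ * B₂ * Real.exp ((1 / (m : ℝ)) * youngConj ω ((m * ∑ i, α i : ℕ) : ℝ)) := by
  classical
  obtain ⟨L, M, hL1, hM0, hshift⟩ := Stmt12Aux.psi_shift hω
  have hL0 : (0:ℝ) < L := by linarith
  have hn' : (0:ℝ) < (n:ℝ) := by exact_mod_cast hn
  refine ⟨⌈L⌉₊ * n, Nat.mul_pos (Nat.one_le_ceil_iff.2 hL0) hn,
    Real.exp (M / (L * n)), Real.exp_pos _, ?_⟩
  intro φ₁ φ₂ U hUo hKU hφ₁ hφ₂ B₁ B₂ h₁ h₂ α x hx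
  set k := ⌈L⌉₊ with hkdef
  have hLk : L ≤ (k:ℝ) := Nat.le_ceil L
  set j : ℕ := ∑ i, α i with hjdef
  have hB₁ : 0 ≤ B₁ := by
    have h0 := h₁ (fun _ => 0) x hx
    rw [Stmt12Aux.mderiv_zero] at h0
    exact (mul_nonneg_iff_of_pos_right (Real.exp_pos _)).1 ((norm_nonneg (φ₁ x)).trans h0)
  have hB₂ : 0 ≤ B₂ := by
    have h0 := h₂ (fun _ => 0) x hx
    rw [Stmt12Aux.mderiv_zero] at h0
    exact (mul_nonneg_iff_of_pos_right (Real.exp_pos _)).1 ((norm_nonneg (φ₂ x)).trans h0)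
  obtain ⟨S, hcard, haddp, hform⟩ := Stmt12Aux.rep hUo hφ₁ hφ₂ j α rfl
  rw [hform x (hKU hx)]
  set cn : ℝ := B₁ * B₂ * Real.exp ((1/(n:ℝ)) * youngConj ω ((n:ℝ) * (j:ℝ))) with hcn
  have hterm : ∀ z ∈ S.map (fun p => ‖mderiv p.1 φ₁ x * mderiv p.2 φ₂ x‖), z ≤ cn := by
    intro z hz
    obtain ⟨p, hp, rfl⟩ := Multiset.mem_map.1 hz
    have hsum : (∑ i, p.1 i) + (∑ i, p.2 i) = j := by
      rw [hjdef, ← haddp p hp]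
      simp [Finset.sum_add_distrib]
    have e₁ := h₁ p.1 x hx
    have e₂ := h₂ p.2 x hx
    have harg : (n:ℝ) * ((∑ i, p.1 i : ℕ):ℝ) + (n:ℝ) * ((∑ i, p.2 i : ℕ):ℝ)
        = (n:ℝ) * (j:ℝ) := by
      rw [← hsum]; push_cast; ring
    have hsup := Stmt12Aux.yc_superadd hω
      (a := (n:ℝ) * ((∑ i, p.1 i : ℕ):ℝ)) (b := (n:ℝ) * ((∑ i, p.2 i : ℕ):ℝ))
      (by positivity) (by positivity)
    rw [harg] at hsup
    have hcast1 : ((n * ∑ i, p.1 i : ℕ):ℝ) = (n:ℝ) * ((∑ i, p.1 i : ℕ):ℝ) := by push_cast; ring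
    have hcast2 : ((n * ∑ i, p.2 i : ℕ):ℝ) = (n:ℝ) * ((∑ i, p.2 i : ℕ):ℝ) := by push_cast; ring
    rw [hcast1] at e₁
    rw [hcast2] at e₂
    have hmain : ‖mderiv p.1 φ₁ x‖ * ‖mderiv p.2 φ₂ x‖
        ≤ (B₁ * Real.exp ((1/(n:ℝ)) * youngConj ω ((n:ℝ) * ((∑ i, p.1 i : ℕ):ℝ))))
          * (B₂ * Real.exp ((1/(n:ℝ)) * youngConj ω ((n:ℝ) * ((∑ i, p.2 i : ℕ):ℝ)))) :=
      mul_le_mul e₁ e₂ (norm_nonneg _) (by positivity)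
    have hexp : Real.exp ((1/(n:ℝ)) * youngConj ω ((n:ℝ) * ((∑ i, p.1 i : ℕ):ℝ)))
          * Real.exp ((1/(n:ℝ)) * youngConj ω ((n:ℝ) * ((∑ i, p.2 i : ℕ):ℝ)))
        ≤ Real.exp ((1/(n:ℝ)) * youngConj ω ((n:ℝ) * (j:ℝ))) := by
      rw [← Real.exp_add]
      apply Real.exp_le_exp.2
      have := mul_le_mul_of_nonneg_left hsup (by positivity : (0:ℝ) ≤ 1/(n:ℝ))
      linarith [this]
    rw [norm_mul, hcn]
    calc ‖mderiv p.1 φ₁ x‖ * ‖mderiv p.2 φ₂ x‖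
        ≤ _ := hmain
      _ = B₁ * B₂ * (Real.exp ((1/(n:ℝ)) * youngConj ω ((n:ℝ) * ((∑ i, p.1 i : ℕ):ℝ)))
          * Real.exp ((1/(n:ℝ)) * youngConj ω ((n:ℝ) * ((∑ i, p.2 i : ℕ):ℝ)))) := by ring
      _ ≤ B₁ * B₂ * Real.exp ((1/(n:ℝ)) * youngConj ω ((n:ℝ) * (j:ℝ))) :=
          mul_le_mul_of_nonneg_left hexp (by positivity)
  have hnorm := norm_multiset_sum_le (S.map (fun p => mderiv p.1 φ₁ x * mderiv p.2 φ₂ x))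
  rw [Multiset.map_map] at hnorm
  have hsumle := Multiset.sum_le_card_nsmul _ cn hterm
  rw [Multiset.card_map, hcard] at hsumle
  have hsumle' : (Multiset.map (fun p => ‖mderiv p.1 φ₁ x * mderiv p.2 φ₂ x‖) S).sum
      ≤ (2:ℝ)^j * cn := by
    have : ((2^j : ℕ) : ℝ) = (2:ℝ)^j := by push_cast; ring
    calc (Multiset.map (fun p => ‖mderiv p.1 φ₁ x * mderiv p.2 φ₂ x‖) S).sum
        ≤ (2^j : ℕ) • cn := hsumle
      _ = (2:ℝ)^j * cn := by rw [nsmul_eq_mul, this]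
  -- weight-function key inequality
  have hd := Stmt12Aux.yc_double hω hL1 hM0 hshift (y := (n:ℝ) * (j:ℝ)) (by positivity)
  have hLnj : L * ((n:ℝ) * (j:ℝ)) = (L * (n:ℝ)) * (j:ℝ) := by ring
  rw [hLnj] at hd
  have h5 := mul_le_mul_of_nonneg_left hd (by positivity : (0:ℝ) ≤ 1/(n:ℝ))
  have expand1 : (1/(n:ℝ)) * (youngConj ω ((n:ℝ) * (j:ℝ)) + ((n:ℝ) * (j:ℝ)) * Real.log 2)
      = (1/(n:ℝ)) * youngConj ω ((n:ℝ) * (j:ℝ)) + (j:ℝ) * Real.log 2 := by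
    field_simp
  have expand2 : (1/(n:ℝ)) * ((1/L) * youngConj ω ((L * (n:ℝ)) * (j:ℝ)) + M / L)
      = (1/(L * (n:ℝ))) * youngConj ω ((L * (n:ℝ)) * (j:ℝ)) + M/(L * (n:ℝ)) := by
    have e1 : (1/(n:ℝ)) * (1/L) = 1/(L*(n:ℝ)) := by
      rw [div_mul_div_comm, one_mul, mul_comm]
    have e2 : (1/(n:ℝ)) * (M/L) = M/(L*(n:ℝ)) := by
      rw [div_mul_div_comm, one_mul, mul_comm]
    rw [mul_add, ← mul_assoc, e1, e2]
  rw [expand1, expand2] at h5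
  have hcastm : ((k * n : ℕ):ℝ) = (k:ℝ) * (n:ℝ) := by push_cast; ring
  have hmpos : (0:ℝ) < ((k * n : ℕ):ℝ) := by
    rw [hcastm]
    have : (1:ℝ) ≤ (k:ℝ) := by
      have := Nat.one_le_ceil_iff.2 hL0
      exact_mod_cast this
    nlinarith
  have h7 := Stmt12Aux.yc_scale hω (s := L * (n:ℝ)) (t := ((k * n : ℕ):ℝ))
    (by positivity) (by rw [hcastm]; exact mul_le_mul_of_nonneg_right hLk hn'.le)
    (Nat.cast_nonneg j)
  have hkey : (1/(n:ℝ)) * youngConj ω ((n:ℝ) * (j:ℝ)) + (j:ℝ) * Real.log 2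
      ≤ M/(L * (n:ℝ)) + (1/((k*n:ℕ):ℝ)) * youngConj ω (((k*n:ℕ):ℝ) * (j:ℝ)) := by
    linarith
  -- final chain
  have h2j : (2:ℝ)^j = Real.exp ((j:ℝ) * Real.log 2) := by
    rw [Real.exp_nat_mul, Real.exp_log two_pos]
  have hcastmj : ((k * n * j : ℕ):ℝ) = ((k*n:ℕ):ℝ) * (j:ℝ) := by push_cast; ring
  have hfinal : (2:ℝ)^j * cn ≤ Real.exp (M / (L * n)) * B₁ * B₂ *
      Real.exp ((1 / ((k*n:ℕ):ℝ)) * youngConj ω (((k*n:ℕ):ℝ) * (j:ℝ))) := by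
    rw [hcn, h2j]
    have hee : Real.exp ((j:ℝ) * Real.log 2) * Real.exp ((1/(n:ℝ)) * youngConj ω ((n:ℝ) * (j:ℝ)))
        ≤ Real.exp (M / (L * n)) *
          Real.exp ((1 / ((k*n:ℕ):ℝ)) * youngConj ω (((k*n:ℕ):ℝ) * (j:ℝ))) := by
      rw [← Real.exp_add, ← Real.exp_add]
      exact Real.exp_le_exp.2 (by linarith)
    calc Real.exp ((j:ℝ) * Real.log 2) * (B₁ * B₂ * Real.exp ((1/(n:ℝ)) * youngConj ω ((n:ℝ) * (j:ℝ))))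
        = (B₁ * B₂) * (Real.exp ((j:ℝ) * Real.log 2) * Real.exp ((1/(n:ℝ)) * youngConj ω ((n:ℝ) * (j:ℝ)))) := by ring
      _ ≤ (B₁ * B₂) * (Real.exp (M / (L * n)) *
          Real.exp ((1 / ((k*n:ℕ):ℝ)) * youngConj ω (((k*n:ℕ):ℝ) * (j:ℝ)))) :=
          mul_le_mul_of_nonneg_left hee (by positivity)
      _ = _ := by ring
  calc ‖(S.map (fun p => mderiv p.1 φ₁ x * mderiv p.2 φ₂ x)).sum‖
      ≤ (Multiset.map (fun p => ‖mderiv p.1 φ₁ x * mderiv p.2 φ₂ x‖) S).sum := by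
        refine le_trans hnorm (le_of_eq ?_)
        congr 1
      _ ≤ (2:ℝ)^j * cn := hsumle'
      _ ≤ Real.exp (M / (L * n)) * B₁ * B₂ *
          Real.exp ((1 / ((k*n:ℕ):ℝ)) * youngConj ω (((k*n:ℕ):ℝ) * (j:ℝ))) := hfinal
      _ = Real.exp (M / (L * (n:ℝ))) * B₁ * B₂ *
          Real.exp ((1 / ((k*n:ℕ):ℝ)) * youngConj ω (((k * n * j : ℕ):ℝ))) := by
        rw [hcastmj]

end
end

section
/- Let d ∈ ℤ₊, L, δ > 0, j ∈ ℕ, and let θ ∈ C_c^∞(ℝᵈ) satisfy supp θ ⊆ B̄(0, 2^{j+1}) and ‖θ^{(α)}‖_{L^∞} ≤ (Lδ)^{|α|} for all multi-indices α with |α| ≤ 2^{j−1}δ. Let F : ℂᵈ → ℂ be the entire extension of the inverse Fourier transform of θ, F(z) := (2π)^{−d} ∫_{ℝᵈ} θ(ξ) e^{iz·ξ} dξ. Then |F(z)| ≤ (c_d e/(2π)^d) (2^{j+1})^d e^{−(2^j δ)/3} for all z ∈ ℂᵈ with |z| ≥ √d L δ e and |Im z| ≤ δ/12, where c_d denotes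 the volume of the unit ball of ℝᵈ. -/
open Real Set MeasureTheory

noncomputable section

namespace Stmt15Aux

variable {d : ℕ}

lemma pd_contDiff {f : EuclideanSpace ℝ (Fin d) → ℂ} (hf : ContDiff ℝ (⊤ : ℕ∞) f) (i : Fin d) :
    ContDiff ℝ (⊤ : ℕ∞) (pd i f) :=
  (hf.fderiv_right (by simp)).clm_apply contDiff_const

lemma pd_tsupport (f : EuclideanSpace ℝ (Fin d) → ℂ) (i : Fin d) :
    tsupport (pd i f) ⊆ tsupport f := by
  refine (closure_mono ?_).trans (tsupport_fderiv_subset ℝ (f := f))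
  intro x hx
  simp only [Function.mem_support, pd] at hx ⊢
  intro h
  exact hx (by rw [h]; rfl)

lemma iter_contDiff {f : EuclideanSpace ℝ (Fin d) → ℂ} (hf : ContDiff ℝ (⊤ : ℕ∞) f) (i : Fin d)
    (n : ℕ) : ContDiff ℝ (⊤ : ℕ∞) ((pd i)^[n] f) := by
  induction n with
  | zero => simpa using hf
  | succ n ih =>
    rw [Function.iterate_succ_apply']
    exact pd_contDiff ih i

lemma iter_tsupport (f : EuclideanSpace ℝ (Fin d) → ℂ) (i : Fin d) (n : ℕ) :
    tsupport ((pd i)^[n] f) ⊆ tsupport f := by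
  induction n with
  | zero => simp
  | succ n ih =>
    rw [Function.iterate_succ_apply']
    exact (pd_tsupport _ i).trans ih

lemma iter_hcs {f : EuclideanSpace ℝ (Fin d) → ℂ} (hf : HasCompactSupport f) (i : Fin d)
    (n : ℕ) : HasCompactSupport ((pd i)^[n] f) :=
  hf.of_isClosed_subset isClosed_closure (iter_tsupport f i n)

lemma mderiv_single (i : Fin d) (n : ℕ) (f : EuclideanSpace ℝ (Fin d) → ℂ) :
    mderiv (fun k => if k = i then n else 0) f = (pd i)^[n] f := by
  have key : ∀ l : List (Fin d),
      (l.foldr (fun k g => (pd k)^[if k = i then n else 0] ∘ g)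
        (id : (EuclideanSpace ℝ (Fin d) → ℂ) → EuclideanSpace ℝ (Fin d) → ℂ))
        = (pd i)^[n * l.count i] := by
    intro l
    induction l with
    | nil => simp
    | cons a l ih =>
      rcases eq_or_ne a i with rfl | h
      · rw [List.foldr_cons, ih, if_pos rfl, List.count_cons_self,
          mul_add, mul_one, ← Function.iterate_add, Nat.add_comm]
      · rw [List.foldr_cons, ih, if_neg h, List.count_cons_of_ne h]
        rfl
  have h := key (List.finRange d)
  rw [List.count_eq_one_of_mem (List.nodup_finRange d) (List.mem_finRange i), mul_one] at h
  exact congrFun h f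

/-- The `ℝ`-linear map `ξ ↦ i z · ξ`. -/
def lz (z : EuclideanSpace ℂ (Fin d)) : EuclideanSpace ℝ (Fin d) →L[ℝ] ℂ :=
  ∑ k, (Complex.I * z k) • (Complex.ofRealCLM.comp (EuclideanSpace.proj k))

lemma lz_apply (z : EuclideanSpace ℂ (Fin d)) (ξ : EuclideanSpace ℝ (Fin d)) :
    lz z ξ = ∑ k, Complex.I * z k * (ξ k : ℂ) := by
  simp [lz, mul_comm]

lemma lz_eq (z : EuclideanSpace ℂ (Fin d)) (ξ : EuclideanSpace ℝ (Fin d)) :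
    lz z ξ = Complex.I * ∑ k, z k * (ξ k : ℂ) := by
  rw [lz_apply, Finset.mul_sum]
  simp [mul_assoc]

lemma lz_single (z : EuclideanSpace ℂ (Fin d)) (i : Fin d) :
    lz z (EuclideanSpace.single i 1) = Complex.I * z i := by
  rw [lz_apply]
  rw [Finset.sum_eq_single i]
  · simp [EuclideanSpace.single_apply]
  · intro k _ hk
    simp [EuclideanSpace.single_apply, hk]
  · simp

lemma hasFDeriv_exp (z : EuclideanSpace ℂ (Fin d)) (ξ : EuclideanSpace ℝ (Fin d)) :
    HasFDerivAt (fun ξ => Complex.exp (lz z ξ)) (Complex.exp (lz z ξ) • lz z) ξ :=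
  ((lz z).hasFDerivAt).cexp

lemma fderiv_exp (z : EuclideanSpace ℂ (Fin d)) (i : Fin d) (ξ : EuclideanSpace ℝ (Fin d)) :
    fderiv ℝ (fun ξ => Complex.exp (lz z ξ)) ξ (EuclideanSpace.single i 1)
      = Complex.I * z i * Complex.exp (lz z ξ) := by
  rw [(hasFDeriv_exp z ξ).fderiv]
  rw [ContinuousLinearMap.smul_apply, lz_single, smul_eq_mul]
  ring

lemma step (z : EuclideanSpace ℂ (Fin d)) (i : Fin d) (hzi : z i ≠ 0)
    {f : EuclideanSpace ℝ (Fin d) → ℂ} (hf : ContDiff ℝ (⊤ : ℕ∞) f) (hcs : HasCompactSupport f) :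
    ∫ ξ, f ξ * Complex.exp (lz z ξ)
      = -(Complex.I * z i)⁻¹ * ∫ ξ, pd i f ξ * Complex.exp (lz z ξ) := by
  set g : EuclideanSpace ℝ (Fin d) → ℂ := fun ξ => Complex.exp (lz z ξ) with hg
  have hgc : Continuous g := Complex.continuous_exp.comp (lz z).continuous
  have hgd : Differentiable ℝ g := fun ξ => (hasFDeriv_exp z ξ).differentiableAt
  have hIz : Complex.I * z i ≠ 0 := mul_ne_zero Complex.I_ne_zero hzi
  have hcs' : HasCompactSupport (pd i f) :=
    hcs.of_isClosed_subset isClosed_closure (pd_tsupport f i)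
  have h3 : Integrable (fun ξ => f ξ * g ξ) volume :=
    (hf.continuous.mul hgc).integrable_of_hasCompactSupport hcs.mul_right
  have h1 : Integrable (fun ξ => fderiv ℝ f ξ (EuclideanSpace.single i 1) * g ξ) volume :=
    ((pd_contDiff hf i).continuous.mul hgc).integrable_of_hasCompactSupport hcs'.mul_right
  have hfe : (fun ξ => f ξ * fderiv ℝ g ξ (EuclideanSpace.single i 1))
      = fun ξ => (Complex.I * z i) * (f ξ * g ξ) := by
    funext ξ
    rw [hg, fderiv_exp z i ξ]
    ring
  have h2 : Integrable (fun ξ => f ξ * fderiv ℝ g ξ (EuclideanSpace.single i 1)) volume := by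
    rw [hfe]; exact h3.const_mul _
  have key := integral_mul_fderiv_eq_neg_fderiv_mul_of_integrable h1 h2 h3
    (fun x _ => hf.differentiable (by simp) x) (fun x _ => hgd x) (v := EuclideanSpace.single i 1)
  rw [hfe, integral_const_mul] at key
  have : ∫ ξ, pd i f ξ * g ξ = ∫ ξ, fderiv ℝ f ξ (EuclideanSpace.single i 1) * g ξ := rfl
  rw [this]
  have hY : ∫ ξ, fderiv ℝ f ξ (EuclideanSpace.single i 1) * g ξ
      = -((Complex.I * z i) * ∫ ξ, f ξ * g ξ) := by
    linear_combination key
  rw [hY]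
  field_simp
  rfl

lemma iter_step (z : EuclideanSpace ℂ (Fin d)) (i : Fin d) (hzi : z i ≠ 0)
    {f : EuclideanSpace ℝ (Fin d) → ℂ} (hf : ContDiff ℝ (⊤ : ℕ∞) f) (hcs : HasCompactSupport f)
    (n : ℕ) :
    ∫ ξ, f ξ * Complex.exp (lz z ξ)
      = (-(Complex.I * z i)⁻¹) ^ n * ∫ ξ, (pd i)^[n] f ξ * Complex.exp (lz z ξ) := by
  induction n with
  | zero => simp
  | succ n ih =>
    rw [ih, step z i hzi (iter_contDiff hf i n) (iter_hcs hcs i n), pow_succ]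
    rw [show ((pd i)^[n + 1] f) = pd i ((pd i)^[n] f) from Function.iterate_succ_apply' _ _ _]
    ring

end Stmt15Aux

open Stmt15Aux in
/-- Decay of the entire extension of the inverse Fourier transform of a cut-off
function `θ` with `supp θ ⊆ B̄(0,2^{j+1})` and `‖θ^{(α)}‖_{L^∞} ≤ (Lδ)^{|α|}` for
`|α| ≤ 2^{j−1}δ`: for `|z| ≥ √d L δ e` and `|Im z| ≤ δ/12`,
`|ℱ⁻¹θ(z)| ≤ (c_d e/(2π)^d)(2^{j+1})^d e^{−2^jδ/3}`. -/
theorem stmt15 (d : ℕ) (hd : 0 < d) (L δ : ℝ) (hL : 0 < L) (hδ : 0 < δ) (j : ℕ)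
    (θ : EuclideanSpace ℝ (Fin d) → ℂ) (hsm : ContDiff ℝ (⊤ : ℕ∞) θ)
    (hsupp : tsupport θ ⊆ Metric.closedBall 0 ((2 : ℝ) ^ (j + 1)))
    (hbound : ∀ α : Fin d → ℕ, ((∑ i, α i : ℕ) : ℝ) ≤ (2 : ℝ) ^ ((j : ℤ) - 1) * δ →
      ∀ ξ : EuclideanSpace ℝ (Fin d), ‖mderiv α θ ξ‖ ≤ (L * δ) ^ (∑ i, α i)) :
    ∀ z : EuclideanSpace ℂ (Fin d),
      Real.sqrt d * L * δ * Real.exp 1 ≤ ‖z‖ →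
      Real.sqrt (∑ i, (z i).im ^ 2) ≤ δ / 12 →
      ‖((2 * Real.pi) ^ d : ℝ)⁻¹ •
          ∫ ξ : EuclideanSpace ℝ (Fin d), θ ξ * Complex.exp (Complex.I * ∑ i, z i * (ξ i : ℂ))‖
        ≤ (MeasureTheory.volume (Metric.ball (0 : EuclideanSpace ℝ (Fin d)) 1)).toReal
            * Real.exp 1 / (2 * Real.pi) ^ d
            * ((2 : ℝ) ^ (j + 1)) ^ d * Real.exp (-((2 : ℝ) ^ j * δ) / 3) := by
  intro z hz him
  -- basic positivity facts
  have hπ : (0 : ℝ) < (2 * Real.pi) ^ d := by positivity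
  set R : ℝ := (2 : ℝ) ^ (j + 1) with hR
  have hR0 : (0 : ℝ) < R := by positivity
  set B : ℝ := (volume (Metric.ball (0 : EuclideanSpace ℝ (Fin d)) 1)).toReal with hB
  have hB0 : 0 ≤ B := ENNReal.toReal_nonneg
  -- choose a coordinate with large `‖z i‖`
  obtain ⟨i, -, hi⟩ := Finset.exists_max_image Finset.univ (fun k => ‖z k‖)
    ⟨⟨0, hd⟩, Finset.mem_univ _⟩
  have hzle : ‖z‖ ≤ Real.sqrt d * ‖z i‖ := by
    rw [EuclideanSpace.norm_eq]
    have h1 : ∑ k, ‖z k‖ ^ 2 ≤ (d : ℝ) * ‖z i‖ ^ 2 := by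
      calc ∑ k, ‖z k‖ ^ 2 ≤ ∑ _k : Fin d, ‖z i‖ ^ 2 :=
            Finset.sum_le_sum fun k _ => by
              have := hi k (Finset.mem_univ k)
              exact pow_le_pow_left₀ (norm_nonneg _) this 2
        _ = (d : ℝ) * ‖z i‖ ^ 2 := by simp [mul_comm]
    calc Real.sqrt (∑ k, ‖z k‖ ^ 2) ≤ Real.sqrt ((d : ℝ) * ‖z i‖ ^ 2) :=
          Real.sqrt_le_sqrt h1
      _ = Real.sqrt d * ‖z i‖ := by
          rw [Real.sqrt_mul (Nat.cast_nonneg d), Real.sqrt_sq (norm_nonneg _)]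
  have hd0 : (0 : ℝ) < Real.sqrt d := Real.sqrt_pos.2 (by exact_mod_cast hd)
  have hm : L * δ * Real.exp 1 ≤ ‖z i‖ := by
    have := hz.trans hzle
    nlinarith [Real.exp_pos (1 : ℝ)]
  have hm0 : (0 : ℝ) < ‖z i‖ :=
    lt_of_lt_of_le (by positivity) hm
  have hzi : z i ≠ 0 := by
    intro h
    rw [h, norm_zero] at hm0
    exact lt_irrefl _ hm0
  -- compact support of θ
  have hcs : HasCompactSupport θ :=
    (isCompact_closedBall _ _).of_isClosed_subset isClosed_closure hsupp
  -- the number of integrations by parts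
  set x : ℝ := (2 : ℝ) ^ ((j : ℤ) - 1) * δ with hxdef
  have hx0 : 0 ≤ x := by positivity
  have hxval : x = (2 : ℝ) ^ j * δ / 2 := by
    rw [hxdef, zpow_sub₀ (two_ne_zero), zpow_natCast, zpow_one]
    ring
  set n : ℕ := ⌊x⌋₊ with hn
  -- the derivative bound for (pd i)^[n] θ
  have hderiv : ∀ ξ, ‖(pd i)^[n] θ ξ‖ ≤ (L * δ) ^ n := by
    have hsum : (∑ k, if k = i then n else 0) = n := by
      rw [Finset.sum_ite_eq' Finset.univ i (fun _ => n)]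
      simp
    have := hbound (fun k => if k = i then n else 0) (by
      rw [hsum]; exact Nat.floor_le hx0)
    rw [hsum, mderiv_single] at this
    exact this
  -- rewrite the integrand using lz
  have hint : (fun ξ : EuclideanSpace ℝ (Fin d) =>
      θ ξ * Complex.exp (Complex.I * ∑ k, z k * (ξ k : ℂ)))
      = fun ξ => θ ξ * Complex.exp (lz z ξ) := by
    funext ξ; rw [lz_eq]
  -- norm of exp factor on the ball
  have hexp_bound : ∀ ξ : EuclideanSpace ℝ (Fin d), ξ ∈ Metric.closedBall 0 R →
      ‖Complex.exp (lz z ξ)‖ ≤ Real.exp ((2 : ℝ) ^ j * δ / 6) := by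
    intro ξ hξ
    have hξn : ‖ξ‖ ≤ R := by simpa [Metric.mem_closedBall, dist_zero_right] using hξ
    rw [Complex.norm_exp]
    apply Real.exp_le_exp.2
    have hre : (lz z ξ).re = -∑ k, (z k).im * ξ k := by
      rw [lz_apply, Complex.re_sum, ← Finset.sum_neg_distrib]
      apply Finset.sum_congr rfl
      intro k _
      simp [Complex.mul_re]
    rw [hre]
    have hCS : |∑ k, (z k).im * ξ k| ≤ Real.sqrt (∑ k, (z k).im ^ 2) * ‖ξ‖ := by
      rw [EuclideanSpace.norm_eq]
      rw [← Real.sqrt_mul (by positivity)]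
      apply Real.abs_le_sqrt
      calc (∑ k, (z k).im * ξ k) ^ 2
          ≤ (∑ k, (z k).im ^ 2) * ∑ k, ξ k ^ 2 :=
            Finset.sum_mul_sq_le_sq_mul_sq _ _ _
        _ = (∑ k, (z k).im ^ 2) * ∑ k, ‖ξ k‖ ^ 2 := by simp [sq_abs]
    have h1 : -∑ k, (z k).im * ξ k ≤ |∑ k, (z k).im * ξ k| := neg_le_abs _
    have h2 : Real.sqrt (∑ k, (z k).im ^ 2) * ‖ξ‖ ≤ (δ / 12) * R := by
      apply mul_le_mul him hξn (norm_nonneg _) (by positivity)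
    have hRval : (δ / 12) * R = (2 : ℝ) ^ j * δ / 6 := by
      rw [hR, pow_succ]; ring
    linarith
  -- bound the integral of (pd i)^[n] θ * exp
  have hmeas : volume (Metric.closedBall (0 : EuclideanSpace ℝ (Fin d)) R) < ⊤ :=
    measure_closedBall_lt_top
  have hmeasval : (volume (Metric.closedBall (0 : EuclideanSpace ℝ (Fin d)) R)).toReal
      = R ^ d * B := by
    rw [Measure.addHaar_closedBall volume 0 hR0.le, finrank_euclideanSpace_fin]
    rw [ENNReal.toReal_mul, ENNReal.toReal_ofReal (by positivity)]
  have hIbound : ‖∫ ξ, (pd i)^[n] θ ξ * Complex.exp (lz z ξ)‖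
      ≤ (L * δ) ^ n * Real.exp ((2 : ℝ) ^ j * δ / 6) * (R ^ d * B) := by
    have hzero : ∀ ξ ∉ Metric.closedBall (0 : EuclideanSpace ℝ (Fin d)) R,
        (pd i)^[n] θ ξ * Complex.exp (lz z ξ) = 0 := by
      intro ξ hξ
      have : ξ ∉ tsupport ((pd i)^[n] θ) := fun h =>
        hξ (hsupp (iter_tsupport θ i n h))
      rw [image_eq_zero_of_notMem_tsupport this, zero_mul]
    rw [← setIntegral_eq_integral_of_forall_compl_eq_zero hzero, ← hmeasval]
    apply norm_setIntegral_le_of_norm_le_const hmeas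
    · intro ξ hξ
      rw [norm_mul]
      exact mul_le_mul (hderiv ξ) (hexp_bound ξ hξ) (norm_nonneg _) (by positivity)
  -- put everything together
  rw [hint, iter_step z i hzi hsm hcs n]
  rw [norm_smul, norm_mul, norm_pow]
  have hnorm_c : ‖-(Complex.I * z i)⁻¹‖ = ‖z i‖⁻¹ := by
    rw [norm_neg, norm_inv, norm_mul, Complex.norm_I, one_mul]
  rw [hnorm_c]
  rw [Real.norm_eq_abs, abs_of_pos (inv_pos.2 hπ)]
  -- main estimate
  have hfrac : (L * δ) * ‖z i‖⁻¹ ≤ Real.exp (-1) := by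
    rw [mul_inv_le_iff₀ hm0]
    have h := mul_le_mul_of_nonneg_left hm (Real.exp_pos (-1)).le
    calc L * δ = Real.exp (-1) * (L * δ * Real.exp 1) := by
          rw [show Real.exp (-1) * (L * δ * Real.exp 1)
              = L * δ * (Real.exp (-1) * Real.exp 1) by ring, ← Real.exp_add]
          simp
      _ ≤ Real.exp (-1) * ‖z i‖ := h
  have hkey : (‖z i‖⁻¹) ^ n * ((L * δ) ^ n * Real.exp ((2:ℝ) ^ j * δ / 6) * (R ^ d * B))
      ≤ Real.exp 1 * Real.exp (-((2:ℝ) ^ j * δ) / 3) * (R ^ d * B) := by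
    have h1 : (‖z i‖⁻¹) ^ n * (L * δ) ^ n = ((L * δ) * ‖z i‖⁻¹) ^ n := by
      rw [mul_pow]; ring
    have h2 : ((L * δ) * ‖z i‖⁻¹) ^ n ≤ Real.exp (-1) ^ n :=
      pow_le_pow_left₀ (by positivity) hfrac n
    have h3 : Real.exp (-1 : ℝ) ^ n = Real.exp (-(n : ℝ)) := by
      rw [← Real.exp_nat_mul]; ring_nf
    have h4 : Real.exp (-(n : ℝ)) * Real.exp ((2:ℝ) ^ j * δ / 6)
        ≤ Real.exp 1 * Real.exp (-((2:ℝ) ^ j * δ) / 3) := by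
      rw [← Real.exp_add, ← Real.exp_add]
      apply Real.exp_le_exp.2
      have hfl : x < (n : ℝ) + 1 := Nat.lt_floor_add_one x
      rw [hxval] at hfl
      linarith
    calc (‖z i‖⁻¹) ^ n * ((L * δ) ^ n * Real.exp ((2:ℝ) ^ j * δ / 6) * (R ^ d * B))
        = (((L * δ) * ‖z i‖⁻¹) ^ n * Real.exp ((2:ℝ) ^ j * δ / 6)) * (R ^ d * B) := by
          rw [← h1]; ring
      _ ≤ (Real.exp (-(n:ℝ)) * Real.exp ((2:ℝ) ^ j * δ / 6)) * (R ^ d * B) := by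
          apply mul_le_mul_of_nonneg_right _ (by positivity)
          apply mul_le_mul_of_nonneg_right _ (Real.exp_pos _).le
          rw [← h3]; exact h2
      _ ≤ Real.exp 1 * Real.exp (-((2:ℝ) ^ j * δ) / 3) * (R ^ d * B) :=
          mul_le_mul_of_nonneg_right h4 (by positivity)
  calc ((2 * Real.pi) ^ d)⁻¹ * ((‖z i‖⁻¹) ^ n * ‖∫ ξ, (pd i)^[n] θ ξ * Complex.exp (lz z ξ)‖)
      ≤ ((2 * Real.pi) ^ d)⁻¹ *
        ((‖z i‖⁻¹) ^ n * ((L * δ) ^ n * Real.exp ((2:ℝ) ^ j * δ / 6) * (R ^ d * B))) := by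
        apply mul_le_mul_of_nonneg_left _ (inv_pos.2 hπ).le
        exact mul_le_mul_of_nonneg_left hIbound (by positivity)
    _ ≤ ((2 * Real.pi) ^ d)⁻¹ *
        (Real.exp 1 * Real.exp (-((2:ℝ) ^ j * δ) / 3) * (R ^ d * B)) :=
        mul_le_mul_of_nonneg_left hkey (inv_pos.2 hπ).le
    _ = B * Real.exp 1 / (2 * Real.pi) ^ d * R ^ d * Real.exp (-((2:ℝ) ^ j * δ) / 3) := by
        field_simp

end
end

section
/- Let ω be a weight function. For each n ∈ ℤ₊ there exist k ∈ ℤ₊ and C > 0 such that every φ ∈ C^∞(ℝᵈ) with all derivatives in L¹(ℝᵈ) and ‖φ‖_{D_{L¹,ω,n}} < ∞ satisfies sup_{x∈ℝᵈ} |φ^{(α)}(x)| ≤ C exp((1/k)ψ*(k|α|)) ‖φ‖_{D_{L¹,ω,n}} for all α ∈ ℕᵈ. (This expresses the continuous inclusion D_{L¹,{ω}}(ℝᵈ) ⊂ D_{L^∞,{ω}}(ℝᵈ).) -/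
open Real Set MeasureTheory
open scoped ENNReal NNReal

noncomputable section

namespace WF

variable {ω : ℝ → ℝ}

lemma zero_mem (hω : IsWeightFunction ω) (y : ℝ) : (0:ℝ) ∈ {z : ℝ | ∃ x : ℝ, 0 ≤ x ∧ z = x * y - ω (Real.exp x)} := by
  refine ⟨0, le_refl _, ?_⟩
  rw [Real.exp_zero, hω.zero_on_unit 1 zero_le_one le_rfl]
  ring

lemma bddAbove (hω : IsWeightFunction ω) (y : ℝ) : BddAbove {z : ℝ | ∃ x : ℝ, 0 ≤ x ∧ z = x * y - ω (Real.exp x)} := by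
  obtain ⟨t₀, ht₀⟩ := hω.gamma (1 / (max y 0 + 1)) (by positivity)
  set x₁ : ℝ := max (Real.log (max t₀ 1)) 0 with hx₁
  refine ⟨max 0 (x₁ * |y|), ?_⟩
  rintro z ⟨x, hx, rfl⟩
  rcases le_or_gt x x₁ with h | h
  · have : x * y ≤ x₁ * |y| := by
      calc x * y ≤ x * |y| := by
            exact mul_le_mul_of_nonneg_left (le_abs_self y) hx
        _ ≤ x₁ * |y| := by
            exact mul_le_mul_of_nonneg_right (h) (abs_nonneg y)
    have h2 : 0 ≤ ω (Real.exp x) := hω.nonneg _ (Real.exp_pos x).le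
    calc x * y - ω (Real.exp x) ≤ x * y := by linarith
      _ ≤ x₁ * |y| := this
      _ ≤ max 0 (x₁ * |y|) := le_max_right _ _
  · -- large x
    have hex : t₀ ≤ Real.exp x := by
      have h1 : Real.log (max t₀ 1) ≤ x :=
        le_of_lt (lt_of_le_of_lt (by rw [hx₁]; exact le_max_left _ _) h)
      have := Real.exp_log (lt_of_lt_of_le zero_lt_one (le_max_right t₀ 1))
      calc t₀ ≤ max t₀ 1 := le_max_left _ _
        _ = Real.exp (Real.log (max t₀ 1)) := this.symm
        _ ≤ Real.exp x := Real.exp_le_exp.mpr h1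
    have hlog := ht₀ _ hex
    rw [Real.log_exp] at hlog
    -- x ≤ (1/(max y 0 + 1)) * ω (e^x), so ω(e^x) ≥ x * (max y 0 + 1)
    have hpos : (0:ℝ) < max y 0 + 1 := by positivity
    have hws : x * (max y 0 + 1) ≤ ω (Real.exp x) := by
      rw [div_mul_eq_mul_div, le_div_iff₀ hpos] at hlog
      linarith [hlog]
    have hx0 : 0 ≤ x := hx
    have : x * y - ω (Real.exp x) ≤ x * y - x * (max y 0 + 1) := by linarith
    have h3 : x * y ≤ x * (max y 0) := mul_le_mul_of_nonneg_left (le_max_left y 0) hx0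
    calc x * y - ω (Real.exp x) ≤ x * y - x * (max y 0 + 1) := this
      _ ≤ - x := by nlinarith
      _ ≤ 0 := by linarith
      _ ≤ max 0 (x₁ * |y|) := le_max_left _ _

lemma youngConj_nonneg (hω : IsWeightFunction ω) (y : ℝ) : 0 ≤ youngConj ω y :=
  le_csSup (bddAbove hω y) (zero_mem hω y)

lemma youngConj_mono (hω : IsWeightFunction ω) {y₁ y₂ : ℝ} (h0 : 0 ≤ y₁) (h : y₁ ≤ y₂) :
    youngConj ω y₁ ≤ youngConj ω y₂ := by
  apply csSup_le ⟨0, zero_mem hω y₁⟩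
  rintro z ⟨x, hx, rfl⟩
  calc x * y₁ - ω (Real.exp x) ≤ x * y₂ - ω (Real.exp x) := by
        have := mul_le_mul_of_nonneg_left h hx; linarith
    _ ≤ youngConj ω y₂ := le_csSup (bddAbove hω y₂) ⟨x, hx, rfl⟩

lemma youngConj_midpoint (hω : IsWeightFunction ω) (a b : ℝ) :
    youngConj ω (a + b) ≤ (1/2) * youngConj ω (2*a) + (1/2) * youngConj ω (2*b) := by
  apply csSup_le ⟨0, zero_mem hω (a+b)⟩
  rintro z ⟨x, hx, rfl⟩
  have h1 : x * (2*a) - ω (Real.exp x) ≤ youngConj ω (2*a) :=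
    le_csSup (bddAbove hω _) ⟨x, hx, rfl⟩
  have h2 : x * (2*b) - ω (Real.exp x) ≤ youngConj ω (2*b) :=
    le_csSup (bddAbove hω _) ⟨x, hx, rfl⟩
  nlinarith [hω.nonneg (Real.exp x) (Real.exp_pos x).le]

end WF

namespace PDL

variable {d : ℕ}

local notation "E" => EuclideanSpace ℝ (Fin d)

lemma two_le_inf : (2 : WithTop ℕ∞) ≤ ((⊤:ℕ∞) : WithTop ℕ∞) := by
  norm_cast

lemma contDiff_pd {f : E → ℂ} (hf : ContDiff ℝ ((⊤:ℕ∞) : WithTop ℕ∞) f) (i : Fin d) : ContDiff ℝ ((⊤:ℕ∞) : WithTop ℕ∞) (pd i f) :=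
  (contDiff_infty_iff_fderiv.mp hf).2.clm_apply contDiff_const

lemma continuous_pd {f : E → ℂ} (hf : ContDiff ℝ ((⊤:ℕ∞) : WithTop ℕ∞) f) (i : Fin d) : Continuous (pd i f) :=
  (contDiff_pd hf i).continuous

lemma pdv_eq {f : E → ℂ} (hf : ContDiff ℝ ((⊤:ℕ∞) : WithTop ℕ∞) f) (v w : E) (y : E) :
    fderiv ℝ (fun z => fderiv ℝ f z w) y v = fderiv ℝ (fderiv ℝ f) y v w := by
  have hdf : Differentiable ℝ (fderiv ℝ f) :=
    (contDiff_infty_iff_fderiv.mp hf).2.differentiable (by simp)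
  have hF : HasFDerivAt (fderiv ℝ f) (fderiv ℝ (fderiv ℝ f) y) y := (hdf y).hasFDerivAt
  have h2 : HasFDerivAt (fun z => fderiv ℝ f z w)
      ((ContinuousLinearMap.apply ℝ ℂ w).comp (fderiv ℝ (fderiv ℝ f) y)) y :=
    (ContinuousLinearMap.apply ℝ ℂ w).hasFDerivAt.comp y hF
  rw [h2.fderiv]
  rfl

lemma pd_comm {f : E → ℂ} (hf : ContDiff ℝ ((⊤:ℕ∞) : WithTop ℕ∞) f) (i j : Fin d) :
    pd i (pd j f) = pd j (pd i f) := by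
  funext y
  have hsymm : IsSymmSndFDerivAt ℝ f y :=
    hf.contDiffAt.isSymmSndFDerivAt (by simpa using two_le_inf)
  show fderiv ℝ (fun z => fderiv ℝ f z (EuclideanSpace.single j 1)) y (EuclideanSpace.single i 1)
      = fderiv ℝ (fun z => fderiv ℝ f z (EuclideanSpace.single i 1)) y (EuclideanSpace.single j 1)
  rw [pdv_eq hf _ _ y, pdv_eq hf _ _ y, hsymm]

lemma contDiff_pditer {f : E → ℂ} (hf : ContDiff ℝ ((⊤:ℕ∞) : WithTop ℕ∞) f) (i : Fin d) (k : ℕ) :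
    ContDiff ℝ ((⊤:ℕ∞) : WithTop ℕ∞) ((pd i)^[k] f) := by
  induction k generalizing f with
  | zero => exact hf
  | succ k ih => rw [Function.iterate_succ_apply]; exact ih (contDiff_pd hf i)

lemma pd_pditer {f : E → ℂ} (hf : ContDiff ℝ ((⊤:ℕ∞) : WithTop ℕ∞) f) (i j : Fin d) (k : ℕ) :
    pd i ((pd j)^[k] f) = (pd j)^[k] (pd i f) := by
  induction k generalizing f with
  | zero => rfl
  | succ k ih =>
      rw [Function.iterate_succ_apply, Function.iterate_succ_apply,
        ih (contDiff_pd hf j), pd_comm hf i j]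

/-- iterated multi-index derivative along a list of coordinates -/
def Dl (L : List (Fin d)) (α : Fin d → ℕ) (f : E → ℂ) : E → ℂ :=
  (L.foldr (fun i g => (pd i)^[α i] ∘ g) id) f

lemma Dl_nil (α : Fin d → ℕ) (f : E → ℂ) : Dl [] α f = f := rfl

lemma Dl_cons (i : Fin d) (L : List (Fin d)) (α : Fin d → ℕ) (f : E → ℂ) :
    Dl (i :: L) α f = (pd i)^[α i] (Dl L α f) := rfl

lemma mderiv_eq_Dl (α : Fin d → ℕ) (f : E → ℂ) : mderiv α f = Dl (List.finRange d) α f := rfl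

lemma contDiff_Dl {f : E → ℂ} (hf : ContDiff ℝ ((⊤:ℕ∞) : WithTop ℕ∞) f) (L : List (Fin d)) (α : Fin d → ℕ) :
    ContDiff ℝ ((⊤:ℕ∞) : WithTop ℕ∞) (Dl L α f) := by
  induction L with
  | nil => exact hf
  | cons i L ih => rw [Dl_cons]; exact contDiff_pditer ih i (α i)

lemma pd_Dl {f : E → ℂ} (hf : ContDiff ℝ ((⊤:ℕ∞) : WithTop ℕ∞) f) (i : Fin d) (L : List (Fin d)) (α : Fin d → ℕ) :
    pd i (Dl L α f) = Dl L α (pd i f) := by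
  induction L with
  | nil => rfl
  | cons j L ih =>
      rw [Dl_cons, pd_pditer (contDiff_Dl hf L α) i j, ih, Dl_cons]

lemma pditer_Dl {f : E → ℂ} (hf : ContDiff ℝ ((⊤:ℕ∞) : WithTop ℕ∞) f) (i : Fin d) (k : ℕ) (L : List (Fin d))
    (α : Fin d → ℕ) : (pd i)^[k] (Dl L α f) = Dl L α ((pd i)^[k] f) := by
  induction k generalizing f with
  | zero => rfl
  | succ k ih =>
      rw [Function.iterate_succ_apply', ih hf, pd_Dl (contDiff_pditer hf i k),
        Function.iterate_succ_apply']

lemma Dl_add {f : E → ℂ} (hf : ContDiff ℝ ((⊤:ℕ∞) : WithTop ℕ∞) f) (L : List (Fin d)) (α β : Fin d → ℕ) :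
    Dl L (α + β) f = Dl L α (Dl L β f) := by
  induction L with
  | nil => rfl
  | cons j L ih =>
      rw [Dl_cons, Dl_cons, Dl_cons, ih, Pi.add_apply, Function.iterate_add_apply,
        pditer_Dl (contDiff_Dl hf L β) j (β j) L α]

lemma Dl_zero_of_forall {f : E → ℂ} (L : List (Fin d)) (γ : Fin d → ℕ)
    (h : ∀ j ∈ L, γ j = 0) : Dl L γ f = f := by
  induction L with
  | nil => rfl
  | cons j L ih =>
      rw [Dl_cons, h j List.mem_cons_self, ih fun j hj => h j (List.mem_cons_of_mem _ hj)]
      rfl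

lemma Dl_single {f : E → ℂ} (i : Fin d) (L : List (Fin d)) (hL : L.Nodup) (hi : i ∈ L) :
    Dl L (Pi.single i 1) f = pd i f := by
  induction L with
  | nil => simp at hi
  | cons j L ih =>
      rcases List.mem_cons.mp hi with h | h
      · subst h
        rw [Dl_cons, Dl_zero_of_forall L _ fun j hj => ?_, Pi.single_eq_same]
        · rfl
        · exact Pi.single_eq_of_ne (fun hji : j = i => (List.nodup_cons.mp hL).1 (hji ▸ hj : i ∈ L)) 1
      · rw [Dl_cons, Pi.single_eq_of_ne (fun hji : j = i => (List.nodup_cons.mp hL).1 (hji.symm ▸ h : j ∈ L)) 1,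
          ih (List.nodup_cons.mp hL).2 h]
        rfl

lemma contDiff_mderiv {f : E → ℂ} (hf : ContDiff ℝ ((⊤:ℕ∞) : WithTop ℕ∞) f) (α : Fin d → ℕ) :
    ContDiff ℝ ((⊤:ℕ∞) : WithTop ℕ∞) (mderiv α f) := contDiff_Dl hf _ α

lemma pd_mderiv {f : E → ℂ} (hf : ContDiff ℝ ((⊤:ℕ∞) : WithTop ℕ∞) f) (i : Fin d) (α : Fin d → ℕ) :
    pd i (mderiv α f) = mderiv (α + Pi.single i 1) f := by
  rw [mderiv_eq_Dl, mderiv_eq_Dl, add_comm,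
    Dl_add hf _ _ _, Dl_single i _ (List.nodup_finRange d) (List.mem_finRange i),
    pd_Dl hf]

lemma ftc1 {f f' : ℝ → ℂ} (hd : ∀ s, HasDerivAt f (f' s) s) (hf' : Continuous f')
    {a : ℝ} (ha : a ∈ Icc (0:ℝ) 1) :
    ‖f a‖ ≤ (∫ s in (0:ℝ)..1, ‖f s‖) + ∫ s in (0:ℝ)..1, ‖f' s‖ := by
  have hf : Continuous f := by
    have : Differentiable ℝ f := fun s => (hd s).differentiableAt
    exact this.continuous
  obtain ⟨y, hy, hmin⟩ := isCompact_Icc.exists_isMinOn (nonempty_Icc.mpr zero_le_one)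
    (hf.norm.continuousOn (s := Icc (0:ℝ) 1))
  have h1 : ‖f y‖ ≤ ∫ s in (0:ℝ)..1, ‖f s‖ := by
    have : ∫ s in (0:ℝ)..1, ‖f y‖ = ‖f y‖ := by simp
    rw [← this]
    exact intervalIntegral.integral_mono_on zero_le_one (intervalIntegrable_const)
      (hf.norm.intervalIntegrable 0 1) fun s hs => hmin hs
  have hftc : ∫ s in y..a, f' s = f a - f y :=
    intervalIntegral.integral_eq_sub_of_hasDerivAt (fun s _ => hd s)
      (hf'.intervalIntegrable y a)
  have h2 : ‖f a - f y‖ ≤ ∫ s in (0:ℝ)..1, ‖f' s‖ := by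
    rw [← hftc]
    rcases le_total y a with h | h
    · calc ‖∫ s in y..a, f' s‖ ≤ ∫ s in y..a, ‖f' s‖ :=
            intervalIntegral.norm_integral_le_integral_norm h
        _ ≤ ∫ s in (0:ℝ)..1, ‖f' s‖ :=
            intervalIntegral.integral_mono_interval hy.1 h ha.2
              (Filter.Eventually.of_forall fun s => norm_nonneg _)
              (hf'.norm.intervalIntegrable 0 1)
    · rw [intervalIntegral.integral_symm, norm_neg]
      calc ‖∫ s in a..y, f' s‖ ≤ ∫ s in a..y, ‖f' s‖ :=
            intervalIntegral.norm_integral_le_integral_norm h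
        _ ≤ ∫ s in (0:ℝ)..1, ‖f' s‖ :=
            intervalIntegral.integral_mono_interval ha.1 h hy.2
              (Filter.Eventually.of_forall fun s => norm_nonneg _)
              (hf'.norm.intervalIntegrable 0 1)
  calc ‖f a‖ = ‖f y + (f a - f y)‖ := by ring_nf
    _ ≤ ‖f y‖ + ‖f a - f y‖ := norm_add_le _ _
    _ ≤ _ := add_le_add h1 h2

lemma oneD {g : E → ℂ} (hg : ContDiff ℝ ((⊤:ℕ∞) : WithTop ℕ∞) g) (p v : E) {a : ℝ} (ha : a ∈ Icc (0:ℝ) 1) :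
    ENNReal.ofReal ‖g p‖ ≤ ∫⁻ s in Icc (0:ℝ) 1,
      (ENNReal.ofReal ‖g (p + (s - a) • v)‖ +
       ENNReal.ofReal ‖fderiv ℝ g (p + (s - a) • v) v‖) := by
  set c : ℝ → E := fun s => p + (s - a) • v with hc
  have hccont : Continuous c := by
    rw [hc]; fun_prop
  have hcd : ∀ s, HasDerivAt c v s := by
    intro s
    have h1 : HasDerivAt (fun s : ℝ => (s - a) • v) ((1:ℝ) • v) s :=
      ((hasDerivAt_id s).sub_const a).smul_const v
    rw [one_smul] at h1
    exact h1.const_add p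
  set f : ℝ → ℂ := fun s => g (c s) with hfdef
  set f' : ℝ → ℂ := fun s => fderiv ℝ g (c s) v with hf'def
  have hd : ∀ s, HasDerivAt f (f' s) s := fun s =>
    ((hg.differentiable (by simp) (c s)).hasFDerivAt).comp_hasDerivAt
      s (hcd s)
  have hf' : Continuous f' :=
    ((((contDiff_infty_iff_fderiv.mp hg).2).continuous.comp hccont).clm_apply continuous_const)
  have hfc : Continuous f := (hg.continuous).comp hccont
  have hca : c a = p := by simp [hc]
  have key := ftc1 hd hf' ha
  rw [hfdef] at key
  simp only [hca] at key
  have hint1 : IntegrableOn (fun s => ‖f s‖) (Ioc (0:ℝ) 1) volume :=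
    (hfc.norm.integrableOn_Icc).mono_set Ioc_subset_Icc_self
  have hint2 : IntegrableOn (fun s => ‖f' s‖) (Ioc (0:ℝ) 1) volume :=
    (hf'.norm.integrableOn_Icc).mono_set Ioc_subset_Icc_self
  have e1 : ∫ s in (0:ℝ)..1, ‖f s‖ = ∫ s in Ioc (0:ℝ) 1, ‖f s‖ :=
    intervalIntegral.integral_of_le zero_le_one
  have e2 : ∫ s in (0:ℝ)..1, ‖f' s‖ = ∫ s in Ioc (0:ℝ) 1, ‖f' s‖ :=
    intervalIntegral.integral_of_le zero_le_one
  have o1 : ENNReal.ofReal (∫ s in Ioc (0:ℝ) 1, ‖f s‖)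
      = ∫⁻ s in Ioc (0:ℝ) 1, ENNReal.ofReal ‖f s‖ :=
    ofReal_integral_eq_lintegral_ofReal hint1
      (Filter.Eventually.of_forall fun s => norm_nonneg _)
  have o2 : ENNReal.ofReal (∫ s in Ioc (0:ℝ) 1, ‖f' s‖)
      = ∫⁻ s in Ioc (0:ℝ) 1, ENNReal.ofReal ‖f' s‖ :=
    ofReal_integral_eq_lintegral_ofReal hint2
      (Filter.Eventually.of_forall fun s => norm_nonneg _)
  have hrestr : (volume : Measure ℝ).restrict (Ioc (0:ℝ) 1)
      = (volume : Measure ℝ).restrict (Icc (0:ℝ) 1) :=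
    Measure.restrict_congr_set Ioc_ae_eq_Icc
  calc ENNReal.ofReal ‖g p‖
      ≤ ENNReal.ofReal ((∫ s in (0:ℝ)..1, ‖f s‖) + ∫ s in (0:ℝ)..1, ‖f' s‖) :=
        ENNReal.ofReal_le_ofReal key
    _ = ENNReal.ofReal (∫ s in (0:ℝ)..1, ‖f s‖) + ENNReal.ofReal (∫ s in (0:ℝ)..1, ‖f' s‖) := by
        rw [ENNReal.ofReal_add]
        · rw [e1]; exact setIntegral_nonneg measurableSet_Ioc fun s _ => norm_nonneg _
        · rw [e2]; exact setIntegral_nonneg measurableSet_Ioc fun s _ => norm_nonneg _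
    _ = (∫⁻ s in Ioc (0:ℝ) 1, ENNReal.ofReal ‖f s‖)
        + ∫⁻ s in Ioc (0:ℝ) 1, ENNReal.ofReal ‖f' s‖ := by rw [e1, e2, o1, o2]
    _ = ∫⁻ s in Ioc (0:ℝ) 1, (ENNReal.ofReal ‖f s‖ + ENNReal.ofReal ‖f' s‖) := by
        rw [lintegral_add_left]
        exact (ENNReal.measurable_ofReal.comp (hfc.norm.measurable))
    _ = ∫⁻ s in Icc (0:ℝ) 1, (ENNReal.ofReal ‖f s‖ + ENNReal.ofReal ‖f' s‖) := by rw [hrestr]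
    _ = _ := rfl

def iotaE : (Fin d → ℝ) → E := (PiLp.continuousLinearEquiv 2 ℝ (fun _ : Fin d => ℝ)).symm

lemma iotaE_cont : Continuous (iotaE (d := d)) :=
  (PiLp.continuousLinearEquiv 2 ℝ _).symm.continuous

lemma iotaE_update (x : E) (τ : Fin d → ℝ) (i : Fin d) (s : ℝ) :
    x + iotaE (Function.update τ i s) = (x + iotaE τ) + (s - τ i) • EuclideanSpace.single i 1 := by
  ext j
  simp [iotaE, Function.update_apply, EuclideanSpace.single_apply]
  by_cases h : j = i <;> simp [h]

lemma iotaE_zero (x : E) : x + iotaE (0 : Fin d → ℝ) = x := by simp [iotaE]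

def cube (d : ℕ) : Set (Fin d → ℝ) := Set.univ.pi fun _ => Icc (0:ℝ) 1

lemma cube_measurable : MeasurableSet (cube d) :=
  MeasurableSet.univ_pi fun _ => measurableSet_Icc

lemma cube_update {τ : Fin d → ℝ} (hτ : τ ∈ cube d) {i : Fin d} {s : ℝ}
    (hs : s ∈ Icc (0:ℝ) 1) : Function.update τ i s ∈ cube d := by
  intro j _
  rcases eq_or_ne j i with h | h
  · subst h; simpa using hs
  · rw [Function.update_of_ne h]; exact hτ j (Set.mem_univ j)

def indT (T : Finset (Fin d)) : Fin d → ℕ := fun j => if j ∈ T then 1 else 0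

lemma indT_empty : indT (∅ : Finset (Fin d)) = 0 := funext fun j => by simp [indT]

lemma indT_insert {T : Finset (Fin d)} {i : Fin d} (hi : i ∉ T) :
    indT (insert i T) = indT T + Pi.single i 1 := by
  funext j
  rcases eq_or_ne j i with h | h
  · subst h; simp [indT, hi]
  · simp [indT, h, Pi.single_eq_of_ne h, Finset.mem_insert]

lemma sum_indT (T : Finset (Fin d)) : (∑ j, indT T j) = T.card := by
  show (∑ j : Fin d, if j ∈ T then 1 else 0) = T.card
  rw [Finset.sum_ite_mem, Finset.univ_inter, Finset.card_eq_sum_ones]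

/-- the integrand: indicator of the unit cube times the norm of a derivative -/
def FF (φ : E → ℂ) (x : E) (γ : Fin d → ℕ) : (Fin d → ℝ) → ℝ≥0∞ :=
  fun t => (cube d).indicator (fun t => ENNReal.ofReal ‖mderiv γ φ (x + iotaE t)‖) t

lemma FF_measurable {φ : E → ℂ} (hφ : ContDiff ℝ ((⊤:ℕ∞) : WithTop ℕ∞) φ) (x : E) (γ : Fin d → ℕ) :
    Measurable (FF φ x γ) := by
  apply Measurable.indicator _ cube_measurable
  exact ENNReal.measurable_ofReal.comp
    ((contDiff_mderiv hφ γ).continuous.norm.comp (continuous_const.add iotaE_cont)).measurable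

lemma FF_le (φ : E → ℂ) (x : E) (γ : Fin d → ℕ) (t : Fin d → ℝ) :
    FF φ x γ t ≤ ENNReal.ofReal ‖mderiv γ φ (x + iotaE t)‖ :=
  Set.indicator_le_self _ _ t

lemma main_ind {φ : E → ℂ} (hφ : ContDiff ℝ ((⊤:ℕ∞) : WithTop ℕ∞) φ) (x : E) (S : Finset (Fin d)) :
    ∀ (β : Fin d → ℕ) (τ : Fin d → ℝ), τ ∈ cube d →
      ENNReal.ofReal ‖mderiv β φ (x + iotaE τ)‖ ≤
        ∑ T ∈ S.powerset,
          (∫⋯∫⁻_S, FF φ x (β + indT T) ∂(fun _ => (volume : Measure ℝ))) τ := by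
  classical
  induction S using Finset.induction_on with
  | empty =>
      intro β τ hτ
      rw [Finset.powerset_empty, Finset.sum_singleton, lmarginal_empty]
      rw [FF, indT_empty, add_zero, Set.indicator_of_mem hτ]
  | @insert i S hiS ih =>
      intro β τ hτ
      have hτi : τ i ∈ Icc (0:ℝ) 1 := hτ i (Set.mem_univ i)
      have h1 := oneD (contDiff_mderiv hφ β) (x + iotaE τ) (EuclideanSpace.single i 1) hτi
      have hpt : ∀ s : ℝ, (x + iotaE τ) + (s - τ i) • EuclideanSpace.single i 1
          = x + iotaE (Function.update τ i s) := fun s => (iotaE_update x τ i s).symm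
      simp only [hpt] at h1
      have hpd : ∀ y : E, fderiv ℝ (mderiv β φ) y (EuclideanSpace.single i 1)
          = mderiv (β + Pi.single i 1) φ y := fun y =>
        congrFun (pd_mderiv hφ i β) y
      simp only [hpd] at h1
      refine h1.trans ?_
      set G : (Fin d → ℝ) → ℝ≥0∞ := fun y => ∑ T ∈ S.powerset,
        ((∫⋯∫⁻_S, FF φ x (β + indT T) ∂(fun _ => (volume : Measure ℝ))) y +
         (∫⋯∫⁻_S, FF φ x (β + indT (insert i T)) ∂(fun _ => (volume : Measure ℝ))) y) with hG
      have hGmeas : Measurable G := by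
        apply Finset.measurable_sum
        intro T _
        exact ((FF_measurable hφ x _).lmarginal _).add ((FF_measurable hφ x _).lmarginal _)
      have step1 : (∫⁻ s in Icc (0:ℝ) 1,
          (ENNReal.ofReal ‖mderiv β φ (x + iotaE (Function.update τ i s))‖ +
           ENNReal.ofReal ‖mderiv (β + Pi.single i 1) φ (x + iotaE (Function.update τ i s))‖))
          ≤ ∫⁻ s in Icc (0:ℝ) 1, G (Function.update τ i s) := by
        apply setLIntegral_mono (hGmeas.comp (measurable_update τ))
        intro s hs
        have hcube : Function.update τ i s ∈ cube d := cube_update hτ hs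
        have b1 := ih β (Function.update τ i s) hcube
        have b2 := ih (β + Pi.single i 1) (Function.update τ i s) hcube
        simp only [hG, Finset.sum_add_distrib]
        apply add_le_add
        · exact b1
        · refine b2.trans (le_of_eq (Finset.sum_congr rfl fun T hT => ?_))
          congr 1
          rw [indT_insert (fun hiT => hiS (Finset.mem_powerset.mp hT hiT)), ← add_assoc,
            add_right_comm]
      refine step1.trans ?_
      have step2 : (∫⁻ s in Icc (0:ℝ) 1, G (Function.update τ i s))
          ≤ ∫⁻ s, G (Function.update τ i s) :=
        lintegral_mono' Measure.restrict_le_self le_rfl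
      refine step2.trans ?_
      have step3 : (∫⁻ s, G (Function.update τ i s)) = ∑ T ∈ S.powerset,
          ((∫⋯∫⁻_insert i S, FF φ x (β + indT T) ∂(fun _ => (volume : Measure ℝ))) τ +
           (∫⋯∫⁻_insert i S, FF φ x (β + indT (insert i T)) ∂(fun _ => (volume : Measure ℝ))) τ) := by
        rw [hG]
        rw [lintegral_finset_sum]
        · refine Finset.sum_congr rfl fun T _ => ?_
          have e1 := lmarginal_insert (μ := fun _ : Fin d => (volume : Measure ℝ))
            (FF φ x (β + indT T)) (FF_measurable hφ x _) hiS τ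
          have e2 := lmarginal_insert (μ := fun _ : Fin d => (volume : Measure ℝ))
            (FF φ x (β + indT (insert i T))) (FF_measurable hφ x _) hiS τ
          rw [lintegral_add_left
            (f := fun s => (∫⋯∫⁻_S, FF φ x (β + indT T) ∂(fun _ => (volume : Measure ℝ)))
              (Function.update τ i s))
            (((FF_measurable hφ x _).lmarginal _).comp (measurable_update τ)), e1, e2]
        · intro T _
          exact (((FF_measurable hφ x _).lmarginal _).comp (measurable_update τ)).add
            (((FF_measurable hφ x _).lmarginal _).comp (measurable_update τ))
      rw [step3, Finset.sum_add_distrib, Finset.sum_powerset_insert hiS]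

lemma lint_bound {φ : E → ℂ} (hφ : ContDiff ℝ ((⊤:ℕ∞) : WithTop ℕ∞) φ) (γ : Fin d → ℕ)
    (hint : Integrable (mderiv γ φ)) (x : E) :
    (∫⁻ t : (Fin d → ℝ), FF φ x γ t ∂(Measure.pi fun _ => (volume : Measure ℝ)))
      ≤ ENNReal.ofReal (∫ y, ‖mderiv γ φ y‖) := by
  set g : E → ℝ≥0∞ := fun y => ENNReal.ofReal ‖mderiv γ φ (x + y)‖ with hg
  have hgmeas : Measurable g :=
    ENNReal.measurable_ofReal.comp
      ((contDiff_mderiv hφ γ).continuous.norm.comp (continuous_const.add continuous_id)).measurable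
  have h1 : (∫⁻ t : (Fin d → ℝ), FF φ x γ t ∂(Measure.pi fun _ => (volume : Measure ℝ)))
      ≤ ∫⁻ t : (Fin d → ℝ), g (iotaE t) ∂(Measure.pi fun _ => (volume : Measure ℝ)) :=
    lintegral_mono fun t => FF_le φ x γ t
  refine h1.trans (le_of_eq ?_)
  have h2 : (∫⁻ t : (Fin d → ℝ), g (iotaE t) ∂(Measure.pi fun _ => (volume : Measure ℝ)))
      = ∫⁻ y : E, g y := by
    rw [← MeasureTheory.volume_pi]
    exact (MeasurePreserving.symm _
      (EuclideanSpace.volume_preserving_symm_measurableEquiv_toLp (Fin d))).lintegral_comp hgmeas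
  rw [h2, hg]
  have h3 : (∫⁻ y : E, ENNReal.ofReal ‖mderiv γ φ (x + y)‖)
      = ∫⁻ y : E, ENNReal.ofReal ‖mderiv γ φ y‖ :=
    lintegral_add_left_eq_self (fun y => ENNReal.ofReal ‖mderiv γ φ y‖) x
  rw [h3]
  exact (ofReal_integral_eq_lintegral_ofReal hint.norm
    (Filter.Eventually.of_forall fun y => norm_nonneg _)).symm

end PDL

/-- The continuous inclusion `D_{L¹,{ω}}(ℝᵈ) ⊂ D_{L^∞,{ω}}(ℝᵈ)`: for each `n`
there are `k` and `C > 0` with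
`sup_x |φ^{(α)}(x)| ≤ C exp((1/k)ψ*(k|α|)) ‖φ‖_{D_{L¹,ω,n}}` for all `α`. -/
theorem stmt17 (ω : ℝ → ℝ) (hω : IsWeightFunction ω) (d : ℕ) (n : ℕ) (hn : 0 < n) :
    ∃ k : ℕ, 0 < k ∧ ∃ C : ℝ, 0 < C ∧
      ∀ φ : EuclideanSpace ℝ (Fin d) → ℂ, ContDiff ℝ (⊤ : ℕ∞) φ →
        (∀ α : Fin d → ℕ, Integrable (mderiv α φ)) →
        ∀ B : ℝ,
        -- `B` is a bound witnessing `‖φ‖_{D_{L¹,ω,n}} ≤ B`: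
        (∀ α : Fin d → ℕ,
          (∫ t, ‖mderiv α φ t‖) ≤ B * Real.exp ((1 / (n : ℝ)) * youngConj ω ((n * ∑ i, α i : ℕ) : ℝ))) →
        ∀ (α : Fin d → ℕ) (x : EuclideanSpace ℝ (Fin d)),
          ‖mderiv α φ x‖ ≤ C * Real.exp ((1 / (k : ℝ)) * youngConj ω ((k * ∑ i, α i : ℕ) : ℝ)) * B := by
  classical
  refine ⟨2*n, by positivity,
    2^d * Real.exp ((1/((2*n : ℕ) : ℝ)) * youngConj ω ((2*n*d : ℕ) : ℝ)), by positivity, ?_⟩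
  intro φ hφtop hint B hB α x
  have hφ : ContDiff ℝ ((⊤:ℕ∞) : WithTop ℕ∞) φ := hφtop.of_le (by simp)
  set m : ℕ := ∑ i, α i with hm
  -- B is nonnegative
  have hB0 : 0 ≤ B := by
    by_contra hneg
    push_neg at hneg
    have h0 := hB (fun _ => 0)
    have hnn : 0 ≤ ∫ t, ‖mderiv (fun _ => 0) φ t‖ := integral_nonneg fun t => norm_nonneg _
    have hlt : B * Real.exp ((1 / (n : ℝ)) *
        youngConj ω ((n * ∑ i : Fin d, (0:ℕ) : ℕ) : ℝ)) < 0 :=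
      mul_neg_of_neg_of_pos hneg (Real.exp_pos _)
    linarith
  -- the main a.e.-free Sobolev-type bound
  have hcube0 : (0 : Fin d → ℝ) ∈ PDL.cube d := fun j _ => ⟨le_rfl, zero_le_one⟩
  have hmain := PDL.main_ind hφ x Finset.univ α 0 hcube0
  rw [PDL.iotaE_zero] at hmain
  simp only [lmarginal_univ] at hmain
  have hbound : ∀ T ∈ (Finset.univ : Finset (Fin d)).powerset,
      (∫⁻ t : (Fin d → ℝ), PDL.FF φ x (α + PDL.indT T) t ∂(Measure.pi fun _ => (volume : Measure ℝ)))
      ≤ ENNReal.ofReal (B * Real.exp ((1/(n:ℝ)) * youngConj ω ((n*(m+d) : ℕ) : ℝ))) := by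
    intro T _
    refine (PDL.lint_bound hφ _ (hint _) x).trans ?_
    refine (ENNReal.ofReal_le_ofReal (hB (α + PDL.indT T))).trans ?_
    apply ENNReal.ofReal_le_ofReal
    have hsum : ∑ i, (α + PDL.indT T) i = m + T.card := by
      simp only [Pi.add_apply]
      rw [Finset.sum_add_distrib, PDL.sum_indT, hm]
    rw [hsum]
    apply mul_le_mul_of_nonneg_left _ hB0
    apply Real.exp_le_exp.mpr
    apply mul_le_mul_of_nonneg_left _ (by positivity)
    apply WF.youngConj_mono hω (by positivity)
    have hcard : T.card ≤ d := le_trans (Finset.card_le_univ T) (by simp)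
    exact_mod_cast Nat.mul_le_mul_left n (Nat.add_le_add_left hcard m)
  have h2 : ENNReal.ofReal ‖mderiv α φ x‖ ≤
      ENNReal.ofReal ((2^d : ℝ) * (B * Real.exp ((1/(n:ℝ)) * youngConj ω ((n*(m+d) : ℕ) : ℝ)))) := by
    refine hmain.trans ?_
    refine (Finset.sum_le_sum hbound).trans (le_of_eq ?_)
    rw [Finset.sum_const, Finset.card_powerset, Finset.card_univ, Fintype.card_fin,
      nsmul_eq_mul, ← ENNReal.ofReal_natCast, ← ENNReal.ofReal_mul (by positivity)]
    push_cast
    ring_nf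
  have h3 : ‖mderiv α φ x‖ ≤
      (2^d : ℝ) * (B * Real.exp ((1/(n:ℝ)) * youngConj ω ((n*(m+d) : ℕ) : ℝ))) :=
    (ENNReal.ofReal_le_ofReal_iff (by positivity)).mp h2
  refine h3.trans ?_
  -- the weight-function estimate
  have hmid := WF.youngConj_midpoint hω ((n*m : ℕ) : ℝ) ((n*d : ℕ) : ℝ)
  have hc1 : ((n*(m+d) : ℕ) : ℝ) = ((n*m : ℕ) : ℝ) + ((n*d : ℕ) : ℝ) := by push_cast; ring
  have hc2 : 2 * ((n*m : ℕ) : ℝ) = ((2*n*m : ℕ) : ℝ) := by push_cast; ring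
  have hc3 : 2 * ((n*d : ℕ) : ℝ) = ((2*n*d : ℕ) : ℝ) := by push_cast; ring
  rw [hc1] at h3 ⊢
  rw [hc2, hc3] at hmid
  have hkey : (1/(n:ℝ)) * youngConj ω (((n*m : ℕ) : ℝ) + ((n*d : ℕ) : ℝ)) ≤
      (1/((2*n:ℕ):ℝ)) * youngConj ω ((2*n*m : ℕ) : ℝ)
      + (1/((2*n:ℕ):ℝ)) * youngConj ω ((2*n*d : ℕ) : ℝ) := by
    have hn' : (0:ℝ) < (n:ℝ) := by exact_mod_cast hn
    have h2n : ((2*n:ℕ):ℝ) = 2 * (n:ℝ) := by push_cast; ring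
    rw [h2n]
    have := mul_le_mul_of_nonneg_left hmid (le_of_lt (one_div_pos.mpr hn'))
    calc (1/(n:ℝ)) * youngConj ω (((n*m : ℕ) : ℝ) + ((n*d : ℕ) : ℝ))
        ≤ (1/(n:ℝ)) * ((1/2) * youngConj ω ((2*n*m : ℕ) : ℝ)
          + (1/2) * youngConj ω ((2*n*d : ℕ) : ℝ)) := this
      _ = 1 / (2*(n:ℝ)) * youngConj ω ((2*n*m : ℕ) : ℝ)
          + 1 / (2*(n:ℝ)) * youngConj ω ((2*n*d : ℕ) : ℝ) := by
          ring
  -- assemble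
  have hexp : Real.exp ((1/(n:ℝ)) * youngConj ω (((n*m : ℕ) : ℝ) + ((n*d : ℕ) : ℝ)))
      ≤ Real.exp ((1/((2*n:ℕ):ℝ)) * youngConj ω ((2*n*m : ℕ) : ℝ))
        * Real.exp ((1/((2*n:ℕ):ℝ)) * youngConj ω ((2*n*d : ℕ) : ℝ)) := by
    rw [← Real.exp_add]
    exact Real.exp_le_exp.mpr hkey
  have hfin : (2^d : ℝ) * (B * Real.exp ((1/(n:ℝ)) *
        youngConj ω (((n*m : ℕ) : ℝ) + ((n*d : ℕ) : ℝ))))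
      ≤ 2^d * Real.exp ((1/((2*n : ℕ) : ℝ)) * youngConj ω ((2*n*d : ℕ) : ℝ))
        * Real.exp ((1/((2*n:ℕ):ℝ)) * youngConj ω (((2*n) * m : ℕ) : ℝ)) * B := by
    have e1 : ((2*n) * m : ℕ) = 2*n*m := by ring
    rw [e1]
    have := mul_le_mul_of_nonneg_left hexp hB0
    calc (2^d : ℝ) * (B * Real.exp ((1/(n:ℝ)) *
          youngConj ω (((n*m : ℕ) : ℝ) + ((n*d : ℕ) : ℝ))))
        ≤ (2^d : ℝ) * (B * (Real.exp ((1/((2*n:ℕ):ℝ)) * youngConj ω ((2*n*m : ℕ) : ℝ))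
          * Real.exp ((1/((2*n:ℕ):ℝ)) * youngConj ω ((2*n*d : ℕ) : ℝ)))) := by
          apply mul_le_mul_of_nonneg_left this (by positivity)
      _ = 2^d * Real.exp ((1/((2*n : ℕ) : ℝ)) * youngConj ω ((2*n*d : ℕ) : ℝ))
          * Real.exp ((1/((2*n:ℕ):ℝ)) * youngConj ω ((2*n*m : ℕ) : ℝ)) * B := by ring
  exact hfin

end
end
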